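/- arXiv:1907.12078 — 6 statements merged into one kernel-verified Lean document; each statement's English description precedes it below -/
import Mathlib

section
/- Every graph admitting a hole-cyclic orientation has a bisimplicial vertex. -/
open SimpleGraph

/-- A walk `c` from `v` to `v` is an induced (chordless) cycle if it is a cycle and
every edge of the graph between vertices of the cycle is an edge of the cycle. -/
def IsInducedCycle {V : Type*} (G : SimpleGraph V) {v : V} (c : G.Walk v v) : Prop :=
  c.IsCycle ∧ ∀ x ∈ c.support, ∀ y ∈ c.support, G.Adj x y → s(x, y) ∈ c.edges

/-- A vertex `v` is avoidable if every induced path `x - v - y` on three vertices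
closes to an induced cycle. -/
def Avoidable {V : Type*} (G : SimpleGraph V) (v : V) : Prop :=
  ∀ x y : V, G.Adj v x → G.Adj v y → x ≠ y → ¬ G.Adj x y →
    ∃ c : G.Walk v v, IsInducedCycle G c ∧ s(x, v) ∈ c.edges ∧ s(v, y) ∈ c.edges

/-- A vertex is bisimplicial if its neighborhood is the union of two cliques. -/
def Bisimplicial {V : Type*} (G : SimpleGraph V) (v : V) : Prop :=
  ∃ A B : Set V, G.neighborSet v = A ∪ B ∧ G.IsClique A ∧ G.IsClique B

/-- An orientation `D` of `G` is hole-cyclic if every induced cycle of length at least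
four is oriented cyclically. -/
def HoleCyclicOrientation {V : Type*} (G : SimpleGraph V) (D : V → V → Prop) : Prop :=
  (∀ u v : V, G.Adj u v ↔ (D u v ∨ D v u)) ∧ (∀ u v : V, D u v → ¬ D v u) ∧
    ∀ (v : V) (c : G.Walk v v), IsInducedCycle G c → 4 ≤ c.length →
      (∀ d ∈ c.darts, D d.fst d.snd) ∨ (∀ d ∈ c.darts, D d.snd d.fst)

set_option maxHeartbeats 2000000

section Auxiliary

variable {V : Type*} {G : SimpleGraph V}

lemma tail_ne_nil {v : V} {c : G.Walk v v} (hc : ¬ c.Nil) : c.support.tail ≠ [] := by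
  have hl : 0 < c.length := (Walk.not_nil_iff_lt_length).mp hc
  have h2 := c.length_support
  intro h
  have h3 : c.support.tail.length = 0 := by simp [h]
  rw [List.length_tail, h2] at h3
  omega

lemma end_mem_tail {v : V} {c : G.Walk v v} (hc : ¬ c.Nil) : v ∈ c.support.tail := by
  have ht := tail_ne_nil hc
  have h : c.support.tail.getLast ht = v := by
    rw [List.getLast_tail]; exact c.getLast_support
  have h2 := List.getLast_mem ht
  rwa [h] at h2

lemma mem_support_iff_tail {v x : V} {c : G.Walk v v} (hc : ¬ c.Nil) :
    x ∈ c.support ↔ x ∈ c.support.tail := by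
  constructor
  · intro h
    rw [c.support_eq_cons, List.mem_cons] at h
    rcases h with rfl | h
    · exact end_mem_tail hc
    · exact h
  · intro h
    rw [c.support_eq_cons, List.mem_cons]; exact Or.inr h

lemma cycle_dropLast_nodup {v : V} {c : G.Walk v v} (hc : c.IsCycle) :
    c.support.dropLast.Nodup := by
  have hnn : ¬ c.Nil := hc.not_nil
  have ht := tail_ne_nil hnn
  have hlast : c.support.tail.getLast ht = v := by
    rw [List.getLast_tail]; exact c.getLast_support
  have htn : c.support.tail.Nodup := hc.support_nodup
  have hts : c.support.tail = c.support.tail.dropLast ++ [v] := by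
    conv_lhs => rw [← List.dropLast_append_getLast ht]
    rw [hlast]
  have hsup : c.support = v :: c.support.tail := c.support_eq_cons
  rw [hsup, hts]
  have h5 : (v :: (c.support.tail.dropLast ++ [v])).dropLast = v :: c.support.tail.dropLast := by
    rw [show v :: (c.support.tail.dropLast ++ [v]) = (v :: c.support.tail.dropLast) ++ [v] by simp,
      List.dropLast_concat]
  rw [h5]
  rw [hts] at htn
  simp only [List.nodup_append, List.nodup_cons, List.nodup_singleton, true_and] at htn ⊢
  refine ⟨fun h => ?_, htn.1⟩
  exact htn.2.2 v h v (by simp) rfl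

lemma cyc_fst_inj {v : V} {c : G.Walk v v} (hc : c.IsCycle) {d d' : G.Dart}
    (hd : d ∈ c.darts) (hd' : d' ∈ c.darts) (h : d.fst = d'.fst) : d = d' := by
  have hn : (c.darts.map (fun x : G.Dart => x.fst)).Nodup := by
    rw [Walk.map_fst_darts]; exact cycle_dropLast_nodup hc
  exact List.inj_on_of_nodup_map hn hd hd' h

lemma cyc_snd_inj {v : V} {c : G.Walk v v} (hc : c.IsCycle) {d d' : G.Dart}
    (hd : d ∈ c.darts) (hd' : d' ∈ c.darts) (h : d.snd = d'.snd) : d = d' := by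
  have hn : (c.darts.map (fun x : G.Dart => x.snd)).Nodup := by
    rw [Walk.map_snd_darts]; exact hc.support_nodup
  exact List.inj_on_of_nodup_map hn hd hd' h

lemma dart_of_edge {u w : V} {p : G.Walk u w} {a b : V} (h : s(a, b) ∈ p.edges) :
    ∃ d ∈ p.darts, (d.fst = a ∧ d.snd = b) ∨ (d.fst = b ∧ d.snd = a) := by
  rw [Walk.edges, List.mem_map] at h
  obtain ⟨d, hd, he⟩ := h
  exact ⟨d, hd, dart_edge_eq_mk'_iff'.mp he⟩

lemma no_tri {v x y z : V} {c : G.Walk v v} (hc : c.IsCycle)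
    (hvx : v ≠ x) (hvy : v ≠ y) (hvz : v ≠ z) (hxy : x ≠ y) (hyz : y ≠ z) (hxz : x ≠ z)
    (e1 : s(x, y) ∈ c.edges) (e2 : s(y, z) ∈ c.edges) (e3 : s(x, z) ∈ c.edges) : False := by
  classical
  obtain ⟨d1, hd1, ho1⟩ := dart_of_edge e1
  obtain ⟨d2, hd2, ho2⟩ := dart_of_edge e2
  obtain ⟨d3, hd3, ho3⟩ := dart_of_edge e3
  have hmem : ∀ d, (d = d1 ∨ d = d2 ∨ d = d3) → d ∈ c.darts := by
    rintro d (rfl | rfl | rfl) <;> assumption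
  -- for each vertex of the triangle, some dart of the triple starts there
  have hfx : ∃ d, (d = d1 ∨ d = d2 ∨ d = d3) ∧ d.fst = x := by
    obtain ⟨h1, _⟩ | ⟨hf1, h1⟩ := id ho1
    · exact ⟨d1, Or.inl rfl, h1⟩
    · obtain ⟨h3, _⟩ | ⟨hf3, h3⟩ := id ho3
      · exact ⟨d3, Or.inr (Or.inr rfl), h3⟩
      · exfalso
        have heq := cyc_snd_inj hc hd1 hd3 (h1.trans h3.symm)
        exact hyz (by rw [← hf1, heq, hf3])
  have hfy : ∃ d, (d = d1 ∨ d = d2 ∨ d = d3) ∧ d.fst = y := by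
    obtain ⟨hf1, h1⟩ | ⟨h1, _⟩ := id ho1
    · obtain ⟨h2, _⟩ | ⟨hf2, h2⟩ := id ho2
      · exact ⟨d2, Or.inr (Or.inl rfl), h2⟩
      · exfalso
        have heq := cyc_snd_inj hc hd1 hd2 (h1.trans h2.symm)
        exact hxz (by rw [← hf1, heq, hf2])
    · exact ⟨d1, Or.inl rfl, h1⟩
  have hfz : ∃ d, (d = d1 ∨ d = d2 ∨ d = d3) ∧ d.fst = z := by
    obtain ⟨hf2, h2⟩ | ⟨h2, _⟩ := id ho2
    · obtain ⟨hf3, h3⟩ | ⟨h3, _⟩ := id ho3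
      · exfalso
        have heq := cyc_snd_inj hc hd2 hd3 (h2.trans h3.symm)
        exact hxy ((by rw [← hf3, ← heq, hf2] : x = y))
      · exact ⟨d3, Or.inr (Or.inr rfl), h3⟩
    · exact ⟨d2, Or.inr (Or.inl rfl), h2⟩
  have hsndT : ∀ d, (d = d1 ∨ d = d2 ∨ d = d3) → d.snd = x ∨ d.snd = y ∨ d.snd = z := by
    rintro d (rfl | rfl | rfl)
    · obtain ⟨_, h⟩ | ⟨_, h⟩ := id ho1
      · exact Or.inr (Or.inl h)
      · exact Or.inl h
    · obtain ⟨_, h⟩ | ⟨_, h⟩ := id ho2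
      · exact Or.inr (Or.inr h)
      · exact Or.inr (Or.inl h)
    · obtain ⟨_, h⟩ | ⟨_, h⟩ := id ho3
      · exact Or.inr (Or.inr h)
      · exact Or.inl h
  have hsndv : ∀ d, (d = d1 ∨ d = d2 ∨ d = d3) → d.snd ≠ v := by
    intro d hd
    obtain h | h | h := hsndT d hd <;> rw [h]
    · exact fun h' => hvx h'.symm
    · exact fun h' => hvy h'.symm
    · exact fun h' => hvz h'.symm
  have hnodup : c.darts.Nodup := by
    have : (c.darts.map Dart.edge).Nodup := hc.isCircuit.isTrail.edges_nodup
    exact this.of_map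
  have hchain := Walk.isChain_dartAdj_darts c
  rw [List.isChain_iff_getElem] at hchain
  have hsucc : ∀ i : Fin c.darts.length, (c.darts.get i = d1 ∨ c.darts.get i = d2 ∨ c.darts.get i = d3) →
      ∃ j : Fin c.darts.length, (j : ℕ) = (i : ℕ) + 1 ∧ (c.darts.get j = d1 ∨ c.darts.get j = d2 ∨ c.darts.get j = d3) := by
    intro i hi
    have hlt : (i : ℕ) < c.darts.length - 1 := by
      rcases Nat.lt_or_ge (i : ℕ) (c.darts.length - 1) with h | h
      · exact h
      · exfalso
        have hi' : (i : ℕ) = c.darts.length - 1 := by omega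
        have hne : c.darts ≠ [] := by
          intro h0
          exact absurd i.isLt (by simp [h0])
        have hifin : i = ⟨c.darts.length - 1, by omega⟩ := Fin.ext hi'
        have h2 : (c.darts.get i).snd = v := by
          rw [hifin]
          have h3 : (c.darts.getLast hne).snd = v := by rw [Walk.getLast_darts_eq_lastDart]; rfl
          rw [List.getLast_eq_getElem] at h3
          simpa using h3
        exact hsndv _ hi h2
    have hR := hchain (i : ℕ) (by omega)
    have hfst2 : (c.darts.get ⟨(i : ℕ) + 1, by omega⟩).fst = (c.darts.get i).snd := by
      exact (hR).symm
    obtain ⟨d', hPd', hfd'⟩ : ∃ d, (d = d1 ∨ d = d2 ∨ d = d3) ∧ d.fst = (c.darts.get i).snd := by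
      rcases hsndT _ hi with h | h | h <;> rw [h]
      · exact hfx
      · exact hfy
      · exact hfz
    have : c.darts.get ⟨(i : ℕ) + 1, by omega⟩ = d' :=
      cyc_fst_inj hc (c.darts.get_mem _) (hmem _ hPd') (hfst2.trans hfd'.symm)
    exact ⟨⟨(i : ℕ) + 1, by omega⟩, rfl, this ▸ hPd'⟩
  obtain ⟨i1, hi1⟩ := List.mem_iff_get.mp hd1
  obtain ⟨i2, hi2⟩ := List.mem_iff_get.mp hd2
  obtain ⟨i3, hi3⟩ := List.mem_iff_get.mp hd3
  set F : Finset ℕ := {(i1 : ℕ), (i2 : ℕ), (i3 : ℕ)} with hF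
  have hFne : F.Nonempty := ⟨(i1 : ℕ), by simp [hF]⟩
  have hMmem := F.max'_mem hFne
  set M := F.max' hFne with hM
  have hgetP : ∀ i : Fin c.darts.length, (i : ℕ) ∈ F → (c.darts.get i = d1 ∨ c.darts.get i = d2 ∨ c.darts.get i = d3) := by
    intro i hi
    simp only [hF, Finset.mem_insert, Finset.mem_singleton] at hi
    rcases hi with h | h | h
    · have : i = i1 := Fin.ext h
      rw [this, hi1]; exact Or.inl rfl
    · have : i = i2 := Fin.ext h
      rw [this, hi2]; exact Or.inr (Or.inl rfl)
    · have : i = i3 := Fin.ext h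
      rw [this, hi3]; exact Or.inr (Or.inr rfl)
  have hMlt : M < c.darts.length := by
    simp only [hF, Finset.mem_insert, Finset.mem_singleton] at hMmem
    rcases hMmem with h | h | h <;> rw [h] <;> [exact i1.isLt; exact i2.isLt; exact i3.isLt]
  obtain ⟨j, hj, hPj⟩ := hsucc ⟨M, hMlt⟩ (hgetP ⟨M, hMlt⟩ hMmem)
  have hjF : (j : ℕ) ∈ F := by
    rcases hPj with h | h | h
    · have : j = i1 := by
        rw [← hi1] at h; exact hnodup.get_inj_iff.mp h
      simp [hF, this]
    · have : j = i2 := by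
        rw [← hi2] at h; exact hnodup.get_inj_iff.mp h
      simp [hF, this]
    · have : j = i3 := by
        rw [← hi3] at h; exact hnodup.get_inj_iff.mp h
      simp [hF, this]
  have hle := F.le_max' _ hjF
  have hcast : ((⟨M, hMlt⟩ : Fin c.darts.length) : ℕ) = M := rfl
  rw [hcast] at hj
  omega

lemma isCycle_reverse {v : V} {c : G.Walk v v} (hc : c.IsCycle) : c.reverse.IsCycle := by
  rw [Walk.isCycle_def, Walk.isTrail_def]
  refine ⟨?_, ?_, ?_⟩
  · rw [Walk.edges_reverse, List.nodup_reverse]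
    exact hc.isCircuit.isTrail.edges_nodup
  · intro h
    apply hc.ne_nil
    have : c.reverse.length = 0 := by rw [h]; rfl
    rw [Walk.length_reverse] at this
    exact (Walk.nil_iff_eq_nil).mp ((Walk.nil_iff_length_eq).mpr this)
  · rw [Walk.support_reverse, List.tail_reverse, List.nodup_reverse]
    exact cycle_dropLast_nodup hc

lemma four_le_length {v x y : V} {c : G.Walk v v} (hc : c.IsCycle)
    (hx : s(x, v) ∈ c.edges) (hy : s(v, y) ∈ c.edges) (hxy : x ≠ y) (hnadj : ¬ G.Adj x y) :
    4 ≤ c.length := by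
  classical
  have h3 := hc.three_le_length
  by_contra h4
  have hlen : c.length = 3 := by omega
  have hxv : x ≠ v := (c.adj_of_mem_edges hx).ne
  have hyv : y ≠ v := (c.adj_of_mem_edges (Sym2.eq_swap ▸ hy)).ne
  have hxs : x ∈ c.support.tail :=
    (mem_support_iff_tail hc.not_nil).mp (c.fst_mem_support_of_mem_edges hx)
  have hys : y ∈ c.support.tail :=
    (mem_support_iff_tail hc.not_nil).mp (c.snd_mem_support_of_mem_edges hy)
  have hvs : v ∈ c.support.tail := end_mem_tail hc.not_nil
  have htn : c.support.tail.Nodup := hc.support_nodup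
  have hlt : c.support.tail.length = 3 := by
    have h5 := c.length_support
    rw [List.length_tail, h5, hlen]
  have hsub : ({x, y, v} : Finset V) ⊆ c.support.tail.toFinset := by
    intro a ha
    simp only [Finset.mem_insert, Finset.mem_singleton] at ha
    rw [List.mem_toFinset]
    rcases ha with rfl | rfl | rfl <;> assumption
  have hcard : c.support.tail.toFinset.card = 3 := by
    rw [List.toFinset_card_of_nodup htn, hlt]
  have hcard2 : ({x, y, v} : Finset V).card = 3 := by
    rw [Finset.card_insert_of_notMem (by simp [hxy, hxv]),
      Finset.card_insert_of_notMem (by simp [hyv]), Finset.card_singleton]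
  have heq : c.support.tail.toFinset = {x, y, v} :=
    (Finset.eq_of_subset_of_card_le hsub (by omega)).symm
  have hmemT : ∀ a ∈ c.support, a = x ∨ a = y ∨ a = v := by
    intro a ha
    have : a ∈ c.support.tail.toFinset := by
      rw [List.mem_toFinset]; exact (mem_support_iff_tail hc.not_nil).mp ha
    rw [heq] at this
    simpa using this
  have hedge : ∀ e ∈ c.edges, e = s(x, v) ∨ e = s(y, v) := by
    intro e he
    induction e with
    | h a b =>
      have hadj : G.Adj a b := c.adj_of_mem_edges he
      have ha := hmemT a (c.fst_mem_support_of_mem_edges he)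
      have hb := hmemT b (c.snd_mem_support_of_mem_edges he)
      rcases ha with rfl | rfl | rfl <;> rcases hb with rfl | rfl | rfl
      · exact absurd rfl hadj.ne
      · exact absurd hadj hnadj
      · exact Or.inl rfl
      · exact absurd hadj.symm hnadj
      · exact absurd rfl hadj.ne
      · exact Or.inr rfl
      · exact Or.inl (Sym2.eq_swap)
      · exact Or.inr (Sym2.eq_swap)
      · exact absurd rfl hadj.ne
  have hnd : c.edges.Nodup := hc.isCircuit.isTrail.edges_nodup
  have hel : c.edges.length = 3 := by rw [c.length_edges, hlen]
  have hsub2 : c.edges.toFinset ⊆ ({s(x, v), s(y, v)} : Finset (Sym2 V)) := by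
    intro e he
    rw [List.mem_toFinset] at he
    rcases hedge e he with rfl | rfl <;> simp
  have hc1 := Finset.card_le_card hsub2
  rw [List.toFinset_card_of_nodup hnd, hel] at hc1
  have : ({s(x, v), s(y, v)} : Finset (Sym2 V)).card ≤ 2 := Finset.card_insert_le _ _ |>.trans (by simp)
  omega

lemma walk_support_subset {H : SimpleGraph V} {T : Set V}
    (hT : ∀ p q : V, H.Adj p q → p ∈ T ∧ q ∈ T) :
    ∀ {u w : V} (p : H.Walk u w), u ∈ T → ∀ z ∈ p.support, z ∈ T := by
  intro u w p
  induction p with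
  | nil =>
    intro hu z hz
    rw [Walk.support_nil, List.mem_singleton] at hz
    exact hz ▸ hu
  | @cons α β γ h q ih =>
    intro hu z hz
    rw [Walk.support_cons, List.mem_cons] at hz
    rcases hz with rfl | hz
    · exact hu
    · exact ih (hT _ _ h).2 z hz

lemma cycle_cons_of_dart {H : SimpleGraph V} {p q : V} {c1 : H.Walk p p} (hc1 : c1.IsCycle)
    {d : H.Dart} (hd : d ∈ c1.darts) (hfst : d.fst = p) (hsnd : d.snd = q) :
    ∃ (hadj : H.Adj p q) (r : H.Walk q p), c1 = Walk.cons hadj r := by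
  cases c1 with
  | nil => exact absurd rfl hc1.ne_nil
  | @cons _ u1 _ h r =>
    have hd0 : (⟨(p, u1), h⟩ : H.Dart) ∈ (Walk.cons h r).darts := by
      rw [Walk.darts_cons]; exact List.mem_cons_self
    have heq : d = (⟨(p, u1), h⟩ : H.Dart) := cyc_fst_inj hc1 hd hd0 hfst
    have hq : q = u1 := by rw [← hsnd, heq]
    subst hq
    exact ⟨h, r, rfl⟩

lemma rotate_mem_iff [DecidableEq V] {H : SimpleGraph V} {u v : V} {c : H.Walk v v} (hc : c.IsCycle)
    (h : u ∈ c.support) :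
    (∀ e, e ∈ (c.rotate u h).edges ↔ e ∈ c.edges) ∧
      (∀ z, z ∈ (c.rotate u h).support ↔ z ∈ c.support) := by
  have hrot : (c.rotate u h).IsCycle := hc.rotate h
  constructor
  · intro e
    exact (Walk.rotate_edges c u h).mem_iff
  · intro z
    rw [mem_support_iff_tail hc.not_nil, mem_support_iff_tail hrot.not_nil]
    exact (Walk.support_rotate c u h).mem_iff

lemma four_cycle_lemma {V : Type*} {G : SimpleGraph V} {v x a y : V}
    (hvx : G.Adj v x) (hax : G.Adj x a) (hay : G.Adj a y) (hyv : G.Adj y v)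
    (hxy : x ≠ y) (hvnea : v ≠ a) (hnadj : ¬ G.Adj x y) (hva : ¬ G.Adj v a) :
    ∃ c : G.Walk v v, IsInducedCycle G c ∧ s(x, v) ∈ c.edges ∧ s(v, y) ∈ c.edges := by
  have hvnex : v ≠ x := hvx.ne
  have hvney : v ≠ y := hyv.ne'
  have hxa : x ≠ a := hax.ne
  have hya : y ≠ a := hay.ne'
  refine ⟨Walk.cons hvx (Walk.cons hax (Walk.cons hay (Walk.cons hyv Walk.nil))),
    ⟨?_, ?_⟩, ?_, ?_⟩
  · rw [Walk.isCycle_def, Walk.isTrail_def]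
    refine ⟨?_, by simp, ?_⟩
    · simp only [Walk.edges_cons, Walk.edges_nil, List.nodup_cons, List.mem_cons,
        List.not_mem_nil, or_false, List.mem_singleton, List.nodup_nil, and_true,
        Sym2.eq_iff, not_or]
      refine ⟨⟨?_, ?_, ?_⟩, ⟨?_, ?_⟩, ?_⟩ <;> tauto
    · simp only [Walk.support_cons, Walk.support_nil, List.tail_cons]
      simp [hxa, hxy, hvnex.symm, hya.symm, hxy.symm, hvney.symm, hvnea.symm, hya]
  · intro z1 hz1 z2 hz2 hadj
    simp only [Walk.support_cons, Walk.support_nil, List.mem_cons, List.mem_singleton,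
      List.not_mem_nil, or_false] at hz1 hz2
    have hz1' : z1 = v ∨ z1 = x ∨ z1 = a ∨ z1 = y := by tauto
    have hz2' : z2 = v ∨ z2 = x ∨ z2 = a ∨ z2 = y := by tauto
    clear hz1 hz2
    rcases hz1' with rfl | rfl | rfl | rfl <;> rcases hz2' with rfl | rfl | rfl | rfl
    · exact absurd rfl hadj.ne
    · simp [Sym2.eq_iff]
    · exact absurd hadj hva
    · simp [Sym2.eq_iff]
    · simp [Sym2.eq_iff]
    · exact absurd rfl hadj.ne
    · simp [Sym2.eq_iff]
    · exact absurd hadj hnadj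
    · exact absurd hadj.symm hva
    · simp [Sym2.eq_iff]
    · exact absurd rfl hadj.ne
    · simp [Sym2.eq_iff]
    · simp [Sym2.eq_iff]
    · exact absurd hadj.symm hnadj
    · simp [Sym2.eq_iff]
    · exact absurd rfl hadj.ne
  · simp [Sym2.eq_iff]
  · simp [Sym2.eq_iff]

lemma lift_avoidable {H : SimpleGraph V} {C S : Set V} {a : V}
    (hSC : ∀ s ∈ S, s ∉ C) (haC : a ∉ C) (haS : a ∉ S)
    (haCadj : ∀ c ∈ C, ¬ G.Adj a c)
    (haSadj : ∀ s ∈ S, G.Adj a s)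
    (hCl : ∀ c ∈ C, ∀ u, G.Adj c u → u ∈ C ∪ S)
    (hH : ∀ p q, H.Adj p q ↔ p ≠ q ∧ p ∈ C ∪ S ∧ q ∈ C ∪ S ∧ (G.Adj p q ∨ (p ∈ S ∧ q ∈ S)))
    {v : V} (hv : v ∈ C) (hav : Avoidable H v) : Avoidable G v := by
  classical
  intro x y hvx hvy hxy hnadj
  have hxT : x ∈ C ∪ S := hCl v hv x hvx
  have hyT : y ∈ C ∪ S := hCl v hv y hvy
  have hvS : v ∉ S := fun h => hSC v h hv
  have hva : ¬ G.Adj v a := fun h => haCadj v hv h.symm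
  have hvnea : v ≠ a := fun h => haC (h ▸ hv)
  by_cases hcase : x ∈ S ∧ y ∈ S
  · obtain ⟨hxS, hyS⟩ := hcase
    exact four_cycle_lemma hvx (haSadj x hxS).symm (haSadj y hyS) hvy.symm hxy hvnea hnadj hva
  · have hnadjH : ¬ H.Adj x y := by
      rw [hH]
      rintro ⟨-, -, -, hGxy | hss⟩
      · exact hnadj hGxy
      · exact hcase hss
    have hHvx : H.Adj v x := (hH v x).mpr ⟨hvx.ne, Or.inl hv, hxT, Or.inl hvx⟩
    have hHvy : H.Adj v y := (hH v y).mpr ⟨hvy.ne, Or.inl hv, hyT, Or.inl hvy⟩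
    obtain ⟨c, ⟨hcyc, hind⟩, hex, hey⟩ := hav x y hHvx hHvy hxy hnadjH
    have hsupT : ∀ z ∈ c.support, z ∈ C ∪ S :=
      walk_support_subset (fun p q h => ⟨((hH p q).mp h).2.1, ((hH p q).mp h).2.2.1⟩) c
        (Or.inl hv)
    by_cases hfake : ∀ e ∈ c.edges, e ∈ G.edgeSet
    · refine ⟨c.transfer G hfake, ⟨hcyc.transfer hfake, ?_⟩, ?_, ?_⟩
      · intro z1 hz1 z2 hz2 hadj
        rw [Walk.support_transfer] at hz1 hz2
        rw [Walk.edges_transfer]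
        exact hind z1 hz1 z2 hz2
          ((hH z1 z2).mpr ⟨hadj.ne, hsupT _ hz1, hsupT _ hz2, Or.inl hadj⟩)
      · rw [Walk.edges_transfer]; exact hex
      · rw [Walk.edges_transfer]; exact hey
    · push_neg at hfake
      obtain ⟨e, he, hne⟩ := hfake
      induction e with
      | h p q =>
      have hHpq : H.Adj p q := c.adj_of_mem_edges he
      have hGpq : ¬ G.Adj p q := fun h => hne (G.mem_edgeSet.mpr h)
      obtain ⟨hpq, hpT, hqT, hor⟩ := (hH p q).mp hHpq
      have hpS : p ∈ S := by
        rcases hor with h | h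
        · exact absurd h hGpq
        · exact h.1
      have hqS : q ∈ S := by
        rcases hor with h | h
        · exact absurd h hGpq
        · exact h.2
      have hvp : v ≠ p := fun h => hSC p hpS (h ▸ hv)
      have hvq : v ≠ q := fun h => hSC q hqS (h ▸ hv)
      have hpsup : p ∈ c.support := c.fst_mem_support_of_mem_edges he
      have hqsup : q ∈ c.support := c.snd_mem_support_of_mem_edges he
      have hSsup : ∀ r ∈ c.support, r ∈ S → r = p ∨ r = q := by
        intro r hr hrS
        by_contra hcon
        push_neg at hcon
        obtain ⟨hrp, hrq⟩ := hcon
        have e2 : s(q, r) ∈ c.edges :=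
          hind q hqsup r hr ((hH q r).mpr
            ⟨fun h => hrq h.symm, hqT, Or.inr hrS, Or.inr ⟨hqS, hrS⟩⟩)
        have e3 : s(p, r) ∈ c.edges :=
          hind p hpsup r hr ((hH p r).mpr
            ⟨fun h => hrp h.symm, hpT, Or.inr hrS, Or.inr ⟨hpS, hrS⟩⟩)
        exact no_tri hcyc hvp hvq (fun h => hSC r hrS (by rw [← h]; exact hv)) hpq
          (fun h => hrq h.symm) (fun h => hrp h.symm) he e2 e3
      obtain ⟨d, hd, hdor⟩ := dart_of_edge he
      have key : ∀ (c2 : H.Walk p p), c2.IsCycle →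
          (∀ e', e' ∈ c2.edges ↔ e' ∈ c.edges) → (∀ z, z ∈ c2.support ↔ z ∈ c.support) →
          ∀ (d2 : H.Dart), d2 ∈ c2.darts → d2.fst = p → d2.snd = q →
          ∃ c' : G.Walk v v, IsInducedCycle G c' ∧ s(x, v) ∈ c'.edges ∧ s(v, y) ∈ c'.edges := by
        intro c2 hc2 hed2 hsup2 d2 hd2 hf2 hs2
        obtain ⟨hpqadj, r, rfl⟩ := cycle_cons_of_dart hc2 hd2 hf2 hs2
        rw [Walk.cons_isCycle_iff] at hc2
        have hrsupc : ∀ z ∈ r.support, z ∈ c.support := by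
          intro z hz
          rw [← hsup2 z, Walk.support_cons]
          exact List.mem_cons_of_mem _ hz
        have hrT : ∀ z ∈ r.support, z ∈ C ∪ S := fun z hz => hsupT z (hrsupc z hz)
        have hrG : ∀ e' ∈ r.edges, e' ∈ G.edgeSet := by
          intro e' he'
          by_contra hne'
          induction e' with
          | h α β =>
          have hHαβ : H.Adj α β := r.adj_of_mem_edges he'
          have hGαβ : ¬ G.Adj α β := fun h => hne' (G.mem_edgeSet.mpr h)
          obtain ⟨hαβ, hαT, hβT, hor'⟩ := (hH α β).mp hHαβ
          have hαS : α ∈ S := by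
            rcases hor' with h | h
            · exact absurd h hGαβ
            · exact h.1
          have hβS : β ∈ S := by
            rcases hor' with h | h
            · exact absurd h hGαβ
            · exact h.2
          have hα : α = p ∨ α = q :=
            hSsup α (hrsupc α (r.fst_mem_support_of_mem_edges he')) hαS
          have hβ : β = p ∨ β = q :=
            hSsup β (hrsupc β (r.snd_mem_support_of_mem_edges he')) hβS
          have heq : s(α, β) = s(p, q) := by
            rcases hα with rfl | rfl <;> rcases hβ with rfl | rfl
            · exact absurd rfl hαβ
            · rfl
            · exact Sym2.eq_swap
            · exact absurd rfl hαβ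
          rw [heq] at he'
          exact hc2.2 he'
        have hpa : G.Adj p a := (haSadj p hpS).symm
        have haq : G.Adj a q := haSadj q hqS
        have hanr : a ∉ r.support := fun h => by
          rcases hrT a h with h' | h'
          · exact haC h'
          · exact haS h'
        set rG : G.Walk q p := r.transfer G hrG with hrG_def
        have hrGsup : rG.support = r.support := Walk.support_transfer _ _
        have hrGedges : rG.edges = r.edges := Walk.edges_transfer _ _
        set w : G.Walk p p := Walk.cons hpa (Walk.cons haq rG) with hw_def
        have hpnea : p ≠ a := fun h => haS (h ▸ hpS)
        have hqnea : q ≠ a := fun h => haS (h ▸ hqS)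
        have hwcyc : w.IsCycle := by
          rw [hw_def, Walk.cons_isCycle_iff]
          constructor
          · rw [Walk.cons_isPath_iff]
            refine ⟨hc2.1.transfer hrG, ?_⟩
            rw [hrGsup]; exact hanr
          · rw [Walk.edges_cons, List.mem_cons]
            rintro (h | h)
            · rw [Sym2.eq_iff] at h
              rcases h with ⟨h1, -⟩ | ⟨h1, -⟩
              · exact hpnea h1
              · exact hpq h1
            · rw [hrGedges] at h
              exact hanr (r.snd_mem_support_of_mem_edges h)
        have hwsup : w.support = p :: a :: rG.support := by
          rw [hw_def, Walk.support_cons, Walk.support_cons]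
        have hwedges : w.edges = s(p, a) :: s(a, q) :: rG.edges := by
          rw [hw_def, Walk.edges_cons, Walk.edges_cons]
        have hpmemr : p ∈ r.support := r.end_mem_support
        have hwsup_iff : ∀ z, z ∈ w.support ↔ z = a ∨ z ∈ r.support := by
          intro z
          rw [hwsup]
          simp only [List.mem_cons, hrGsup]
          constructor
          · rintro (rfl | rfl | h)
            · exact Or.inr hpmemr
            · exact Or.inl rfl
            · exact Or.inr h
          · rintro (rfl | h)
            · exact Or.inr (Or.inl rfl)
            · exact Or.inr (Or.inr h)
        have hfromc2 : ∀ e', e' ∈ c.edges → e' ≠ s(p, q) → e' ∈ w.edges := by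
          intro e' he' hne'
          have h1 : e' ∈ (Walk.cons hpqadj r).edges := (hed2 _).mpr he'
          rw [Walk.edges_cons, List.mem_cons] at h1
          rcases h1 with h | h
          · exact absurd h hne'
          · rw [hwedges]
            exact List.mem_cons_of_mem _ (List.mem_cons_of_mem _ (hrGedges.symm ▸ h))
        have hwind : ∀ z1 ∈ w.support, ∀ z2 ∈ w.support, G.Adj z1 z2 → s(z1, z2) ∈ w.edges := by
          have haux : ∀ z ∈ r.support, G.Adj a z → s(a, z) ∈ w.edges := by
            intro z hz hadj
            have hzS : z ∈ S := by
              rcases hrT z hz with h | h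
              · exact absurd hadj (haCadj z h)
              · exact h
            rcases hSsup z (hrsupc z hz) hzS with rfl | rfl
            · rw [hwedges]
              exact List.mem_cons.mpr (Or.inl Sym2.eq_swap)
            · rw [hwedges]
              exact List.mem_cons_of_mem _ (List.mem_cons_self)
          intro z1 hz1 z2 hz2 hadj
          rcases (hwsup_iff z1).mp hz1 with rfl | h1
          · rcases (hwsup_iff z2).mp hz2 with rfl | h2
            · exact absurd rfl hadj.ne
            · exact haux z2 h2 hadj
          · rcases (hwsup_iff z2).mp hz2 with rfl | h2
            · have h3 := haux z1 h1 hadj.symm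
              rwa [Sym2.eq_swap] at h3
            · have hH12 : H.Adj z1 z2 :=
                (hH z1 z2).mpr ⟨hadj.ne, hrT z1 h1, hrT z2 h2, Or.inl hadj⟩
              have hce : s(z1, z2) ∈ c.edges :=
                hind z1 (hrsupc z1 h1) z2 (hrsupc z2 h2) hH12
              refine hfromc2 _ hce ?_
              intro heq
              rw [Sym2.eq_iff] at heq
              rcases heq with ⟨h1', h2'⟩ | ⟨h1', h2'⟩
              · exact hGpq (by rw [← h1', ← h2']; exact hadj)
              · exact hGpq (by rw [← h2', ← h1']; exact hadj.symm)
        have hexw : s(x, v) ∈ w.edges := by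
          refine hfromc2 _ hex ?_
          intro heq
          rw [Sym2.eq_iff] at heq
          rcases heq with ⟨h1', h2'⟩ | ⟨h1', h2'⟩
          · exact hGpq (by rw [← h1', ← h2']; exact hvx.symm)
          · exact hGpq (by rw [← h2', ← h1']; exact hvx)
        have heyw : s(v, y) ∈ w.edges := by
          refine hfromc2 _ hey ?_
          intro heq
          rw [Sym2.eq_iff] at heq
          rcases heq with ⟨h1', h2'⟩ | ⟨h1', h2'⟩
          · exact hvp h1'
          · exact hvq h1'
        have hvw : v ∈ w.support := by
          rw [hwsup_iff]
          right
          have h4 : v ∈ (Walk.cons hpqadj r).support := (hsup2 v).mpr c.start_mem_support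
          rw [Walk.support_cons, List.mem_cons] at h4
          rcases h4 with h | h
          · exact absurd h hvp
          · exact h
        obtain ⟨hre, hrs⟩ := rotate_mem_iff hwcyc hvw
        refine ⟨w.rotate v hvw, ⟨hwcyc.rotate hvw, ?_⟩, (hre _).mpr hexw, (hre _).mpr heyw⟩
        intro z1 hz1 z2 hz2 hadj
        rw [hrs] at hz1 hz2
        rw [hre]
        exact hwind z1 hz1 z2 hz2 hadj
      obtain ⟨hre, hrs⟩ := rotate_mem_iff hcyc hpsup
      rcases hdor with ⟨hf, hs⟩ | ⟨hf, hs⟩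
      · refine key (c.rotate p hpsup) (hcyc.rotate hpsup) hre hrs d ?_ hf hs
        exact (Walk.rotate_darts c p hpsup).mem_iff.mpr hd
      · refine key ((c.rotate p hpsup).reverse) (isCycle_reverse (hcyc.rotate hpsup))
          (fun e' => ?_) (fun z => ?_) d.symm ?_ hs hf
        · rw [Walk.edges_reverse, List.mem_reverse]; exact hre e'
        · rw [Walk.support_reverse, List.mem_reverse]; exact hrs z
        · rw [Walk.mem_darts_reverse, Dart.symm_symm]
          exact (Walk.rotate_darts c p hpsup).mem_iff.mpr hd

lemma walk_end_prop {V : Type*} {Gd : SimpleGraph V} (P : V → Prop)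
    (hstep : ∀ p q, Gd.Adj p q → P p → P q) :
    ∀ {u z : V}, Gd.Walk u z → P u → P z := by
  intro u z w
  induction w with
  | nil => exact id
  | cons h q ih => exact fun hu => ih (hstep _ _ h hu)

lemma avoid {V : Type*} [Fintype V] [DecidableEq V] :
    ∀ (n : ℕ) (G : SimpleGraph V) (W : Finset V) (K : Set V),
      W.card ≤ n → (∀ v ∈ W, ∀ u, G.Adj v u → u ∈ W) → (∀ k ∈ K, k ∈ W) → G.IsClique K →
      (∃ w ∈ W, w ∉ K) → ∃ v ∈ W, v ∉ K ∧ Avoidable G v := by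
  intro n
  induction n with
  | zero =>
    rintro G W K hcard - - - ⟨w, hw, -⟩
    exact absurd (Finset.card_pos.mpr ⟨w, hw⟩) (by omega)
  | succ n ih =>
    rintro G W K hcard hW hKW hK ⟨w0, hw0W, hw0K⟩
    classical
    by_cases hclique : ∀ a ∈ W, ∀ b ∈ W, a ≠ b → G.Adj a b
    · refine ⟨w0, hw0W, hw0K, ?_⟩
      intro x y hvx hvy hxy hnadj
      exact absurd (hclique x (hW w0 hw0W x hvx) y (hW w0 hw0W y hvy) hxy) hnadj
    · push_neg at hclique
      obtain ⟨a0, ha0W, b0, hb0W, hab0, hnadj0⟩ := hclique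
      have hchoice : ∃ a ∈ W, ∃ b ∈ W, a ≠ b ∧ ¬ G.Adj a b ∧
          ∀ k ∈ K, k = a ∨ G.Adj a k := by
        by_cases hKdom : ∃ k ∈ K, ∃ b' ∈ W, k ≠ b' ∧ ¬ G.Adj k b'
        · obtain ⟨k, hkK, b', hb'W, hne, hnadj'⟩ := hKdom
          refine ⟨k, hKW k hkK, b', hb'W, hne, hnadj', ?_⟩
          intro k' hk'
          by_cases h : k' = k
          · exact Or.inl h
          · exact Or.inr (hK hkK hk' (fun he => h he.symm))
        · push_neg at hKdom
          refine ⟨a0, ha0W, b0, hb0W, hab0, hnadj0, ?_⟩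
          intro k hk
          by_cases h : k = a0
          · exact Or.inl h
          · exact Or.inr (hKdom k hk a0 ha0W h).symm
      obtain ⟨a, haW, b, hbW, hab, hnadjab, hKa⟩ := hchoice
      set Gd : SimpleGraph V :=
        { Adj := fun p q => G.Adj p q ∧ (¬ G.Adj a p ∧ p ≠ a) ∧ (¬ G.Adj a q ∧ q ≠ a)
          symm := by
            refine ⟨fun p q h => ?_⟩
            exact ⟨h.1.symm, h.2.2, h.2.1⟩
          loopless := ⟨fun p h => G.irrefl h.1⟩ } with hGd
      have hGdAdj : ∀ p q, Gd.Adj p q ↔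
          G.Adj p q ∧ (¬ G.Adj a p ∧ p ≠ a) ∧ (¬ G.Adj a q ∧ q ≠ a) := fun _ _ => Iff.rfl
      set C : Set V := {z | Gd.Reachable b z} with hC
      have hbC : b ∈ C := by
        show Gd.Reachable b b
        exact Reachable.refl b
      have hbP : ¬ G.Adj a b ∧ b ≠ a := ⟨hnadjab, fun h => hab h.symm⟩
      have hCb : ∀ z ∈ C, ¬ G.Adj a z ∧ z ≠ a := by
        intro z hz
        obtain ⟨w⟩ := (hz : Gd.Reachable b z)
        exact walk_end_prop (fun u => ¬ G.Adj a u ∧ u ≠ a)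
          (fun p q h _ => ((hGdAdj p q).mp h).2.2) w hbP
      have hCW : ∀ z ∈ C, z ∈ W := by
        intro z hz
        obtain ⟨w⟩ := (hz : Gd.Reachable b z)
        exact walk_end_prop (fun u => u ∈ W)
          (fun p q h hp => hW p hp q ((hGdAdj p q).mp h).1) w hbW
      have hCclosed : ∀ z ∈ C, ∀ u, Gd.Adj z u → u ∈ C := by
        intro z hz u h
        exact (hz : Gd.Reachable b z).trans h.reachable
      set S : Set V := {s | s ∉ C ∧ ∃ z ∈ C, G.Adj z s} with hS
      have hSC : ∀ s ∈ S, s ∉ C := fun s hs => hs.1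
      have haC : a ∉ C := fun h => (hCb a h).2 rfl
      have haSadj : ∀ s ∈ S, G.Adj a s := by
        intro s hs
        obtain ⟨hsnC, z, hzC, hzs⟩ := hs
        by_contra hnas
        have hza := hCb z hzC
        have hsa : s ≠ a := by
          intro h
          exact hza.1 (by rw [← h]; exact hzs.symm)
        exact hsnC (hCclosed z hzC s ((hGdAdj z s).mpr ⟨hzs, hza, hnas, hsa⟩))
      have haS : a ∉ S := fun h => (G.irrefl) (haSadj a h)
      have haCadj : ∀ z ∈ C, ¬ G.Adj a z := fun z hz => (hCb z hz).1
      have hCl : ∀ z ∈ C, ∀ u, G.Adj z u → u ∈ C ∪ S := by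
        intro z hz u hadj
        by_cases h : u ∈ C
        · exact Or.inl h
        · exact Or.inr ⟨h, z, hz, hadj⟩
      have hSW : ∀ s ∈ S, s ∈ W := by
        intro s hs
        obtain ⟨-, z, hz, hadj⟩ := hs
        exact hW z (hCW z hz) s hadj
      set H : SimpleGraph V :=
        { Adj := fun p q => p ≠ q ∧ p ∈ C ∪ S ∧ q ∈ C ∪ S ∧ (G.Adj p q ∨ (p ∈ S ∧ q ∈ S))
          symm := by
            refine ⟨fun p q hpq => ?_⟩; obtain ⟨h1, h2, h3, h4⟩ := hpq
            refine ⟨h1.symm, h3, h2, ?_⟩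
            rcases h4 with h | h
            · exact Or.inl h.symm
            · exact Or.inr ⟨h.2, h.1⟩
          loopless := ⟨fun p h => h.1 rfl⟩ } with hHdef
      have hHiff : ∀ p q, H.Adj p q ↔
          p ≠ q ∧ p ∈ C ∪ S ∧ q ∈ C ∪ S ∧ (G.Adj p q ∨ (p ∈ S ∧ q ∈ S)) := fun _ _ => Iff.rfl
      set W' : Finset V := Finset.univ.filter (fun z => z ∈ C ∪ S) with hW'
      have hmemW' : ∀ z, z ∈ W' ↔ z ∈ C ∪ S := by
        intro z
        simp [hW']
      have hW'sub : W' ⊆ W := by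
        intro z hz
        rcases (hmemW' z).mp hz with h | h
        · exact hCW z h
        · exact hSW z h
      have haW' : a ∉ W' := by
        rw [hmemW']
        rintro (h | h)
        · exact haC h
        · exact haS h
      have hcard' : W'.card ≤ n := by
        have hlt : W'.card < W.card :=
          Finset.card_lt_card ⟨hW'sub, fun hsub => haW' (hsub haW)⟩
        omega
      obtain ⟨v, hvW', hvS, hAv⟩ := ih H W' S hcard'
        (fun z _ u hadj => (hmemW' u).mpr ((hHiff z u).mp hadj).2.2.1)
        (fun k hk => (hmemW' k).mpr (Or.inr hk))
        (fun s hs t ht hst => (hHiff s t).mpr ⟨hst, Or.inr hs, Or.inr ht, Or.inr ⟨hs, ht⟩⟩)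
        ⟨b, (hmemW' b).mpr (Or.inl hbC), fun h => hSC b h hbC⟩
      have hvC : v ∈ C := by
        rcases (hmemW' v).mp hvW' with h | h
        · exact h
        · exact absurd h hvS
      refine ⟨v, hCW v hvC, ?_, lift_avoidable hSC haC haS haCadj haSadj hCl hHiff hvC hAv⟩
      intro hvK
      rcases hKa v hvK with h | h
      · exact haC (by rw [← h]; exact hvC)
      · exact haCadj v hvC h

lemma orient_contra {D : V → V → Prop} (hasym : ∀ u w : V, D u w → ¬ D w u)
    {v x y : V} {c : G.Walk v v} (hcyc : c.IsCycle)
    (hex : s(x, v) ∈ c.edges) (hey : s(v, y) ∈ c.edges) (hxy : x ≠ y)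
    (hor : (∀ d ∈ c.darts, D d.fst d.snd) ∨ (∀ d ∈ c.darts, D d.snd d.fst))
    (hDx : D x v) (hDy : D y v) : False := by
  cases c with
  | nil => exact hcyc.ne_nil rfl
  | @cons _ u1 _ h p =>
    set c : G.Walk v v := Walk.cons h p with hcdef
    set d0 : G.Dart := ⟨(v, u1), h⟩ with hd0def
    have hd0 : d0 ∈ c.darts := by
      rw [hcdef, Walk.darts_cons]
      exact List.mem_cons_self
    obtain ⟨dx, hdx, hox⟩ := dart_of_edge hex
    obtain ⟨dy, hdy, hoy⟩ := dart_of_edge hey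
    rcases hor with hfor | hback
    · rcases hox with ⟨hfx, hsx⟩ | ⟨hfx, hsx⟩
      · rcases hoy with ⟨hfy, hsy⟩ | ⟨hfy, hsy⟩
        · -- dy = (v, y) : fst = v so dy = d0 hence y = u1 and D v y
          have hdyd0 : dy = d0 := cyc_fst_inj hcyc hdy hd0 (by rw [hfy])
          have hyu1 : y = u1 := by rw [← hsy, hdyd0]
          have hDvu1 : D v u1 := by
            have := hfor d0 hd0
            simpa [hd0def] using this
          exact hasym y v hDy (by rwa [hyu1])
        · -- dy = (y, v): dx = (x, v): both snd = v
          have : dx = dy := cyc_snd_inj hcyc hdx hdy (by rw [hsx, hsy])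
          exact hxy (by rw [← hfx, this, hfy])
      · -- dx = (v, x): dx = d0, x = u1, D v x
        have hdxd0 : dx = d0 := cyc_fst_inj hcyc hdx hd0 (by rw [hfx])
        have hxu1 : x = u1 := by rw [← hsx, hdxd0]
        have hDvu1 : D v u1 := by
          have := hfor d0 hd0
          simpa [hd0def] using this
        exact hasym x v hDx (by rwa [hxu1])
    · rcases hox with ⟨hfx, hsx⟩ | ⟨hfx, hsx⟩
      · -- dx = (x, v): backward gives D v x
        have hDvx : D dx.snd dx.fst := hback dx hdx
        rw [hfx, hsx] at hDvx
        exact hasym x v hDx hDvx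
      · -- dx = (v, x): dx = d0, x = u1
        have hdxd0 : dx = d0 := cyc_fst_inj hcyc hdx hd0 (by rw [hfx])
        have hxu1 : x = u1 := by rw [← hsx, hdxd0]
        rcases hoy with ⟨hfy, hsy⟩ | ⟨hfy, hsy⟩
        · -- dy = (v, y): dy = d0, y = u1 = x
          have hdyd0 : dy = d0 := cyc_fst_inj hcyc hdy hd0 (by rw [hfy])
          have hyu1 : y = u1 := by rw [← hsy, hdyd0]
          exact hxy (hxu1.trans hyu1.symm)
        · -- dy = (y, v): backward gives D v y
          have hDvy : D dy.snd dy.fst := hback dy hdy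
          rw [hfy, hsy] at hDvy
          exact hasym y v hDy hDvy

end Auxiliary

/-- Every finite graph admitting a hole-cyclic orientation has a bisimplicial vertex. -/
theorem stmt_12 {V : Type*} [Fintype V] [Nonempty V] (G : SimpleGraph V)
    (h : ∃ D : V → V → Prop, HoleCyclicOrientation G D) :
    ∃ v : V, Bisimplicial G v := by
  classical
  obtain ⟨D, hiff, hasym, hcyc⟩ := h
  obtain ⟨v, -, -, hAv⟩ := avoid (Fintype.card V) G Finset.univ ∅
    (by rw [Finset.card_univ]) (fun _ _ u _ => Finset.mem_univ u)
    (fun k hk => absurd hk (Set.notMem_empty k)) (Set.pairwise_empty _)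
    ⟨Classical.arbitrary V, Finset.mem_univ _, Set.notMem_empty _⟩
  refine ⟨v, {x | G.Adj v x ∧ D x v}, {x | G.Adj v x ∧ D v x}, ?_, ?_, ?_⟩
  · ext x
    simp only [mem_neighborSet, Set.mem_union, Set.mem_setOf_eq]
    constructor
    · intro hadj
      rcases (hiff v x).mp hadj with h | h
      · exact Or.inr ⟨hadj, h⟩
      · exact Or.inl ⟨hadj, h⟩
    · rintro (h | h) <;> exact h.1
  · intro x hx y hy hxy
    by_contra hnadj
    obtain ⟨c, hic, hex, hey⟩ := hAv x y hx.1 hy.1 hxy hnadj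
    have h4 := four_le_length hic.1 hex hey hxy hnadj
    exact absurd (hcyc v c hic h4)
      (fun hor => orient_contra hasym hic.1 hex hey hxy hor hx.2 hy.2)
  · intro x hx y hy hxy
    by_contra hnadj
    obtain ⟨c, hic, hex, hey⟩ := hAv x y hx.1 hy.1 hxy hnadj
    have h4 := four_le_length hic.1 hex hey hxy hnadj
    have hor := hcyc v c hic h4
    have hor' : (∀ d ∈ c.darts, (fun u w => D w u) d.fst d.snd) ∨
        (∀ d ∈ c.darts, (fun u w => D w u) d.snd d.fst) := by
      rcases hor with h | h
      · exact Or.inr h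
      · exact Or.inl h
    exact orient_contra (fun u w hd hd' => hasym w u hd hd') hic.1 hex hey hxy hor' hx.2 hy.2
end

section
/- Let D be an out-semi-complete digraph, G its underlying undirected graph, and v an avoidable vertex of G. Then the in-neighborhood of v in D is semi-complete. -/
open SimpleGraph

/-- In a path, any edge incident to the start vertex goes to the same (second) vertex. -/
lemma start_edge_unique {V : Type*} {G : SimpleGraph V} {x y : V} (p : G.Walk x y)
    (hp : p.IsPath) {z1 z2 : V} (h1 : s(x, z1) ∈ p.edges) (h2 : s(x, z2) ∈ p.edges) :
    z1 = z2 := by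
  cases p with
  | nil => simp at h1
  | @cons _ w _ h r =>
    rw [Walk.cons_isPath_iff] at hp
    rw [Walk.edges_cons, List.mem_cons] at h1 h2
    have key : ∀ z : V, s(x, z) = s(x, w) ∨ s(x, z) ∈ r.edges → z = w := by
      intro z hz
      rcases hz with hz | hz
      · rcases Sym2.eq_iff.mp hz with ⟨_, rfl⟩ | ⟨rfl, rfl⟩ <;> rfl
      · exact absurd (r.fst_mem_support_of_mem_edges hz) hp.2
    rw [key z1 h1, key z2 h2]

lemma end_edge_unique {V : Type*} {G : SimpleGraph V} {x y : V} (p : G.Walk x y)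
    (hp : p.IsPath) {z1 z2 : V} (h1 : s(z1, y) ∈ p.edges) (h2 : s(z2, y) ∈ p.edges) :
    z1 = z2 := by
  apply start_edge_unique p.reverse hp.reverse
  · rw [Walk.edges_reverse, List.mem_reverse, Sym2.eq_swap]; exact h1
  · rw [Walk.edges_reverse, List.mem_reverse, Sym2.eq_swap]; exact h2

lemma aux_walk {V : Type*} (D : V → V → Prop) (G : SimpleGraph V)
    (hG : ∀ u w : V, G.Adj u w ↔ (u ≠ w ∧ (D u w ∨ D w u)))
    (hout : ∀ v a b : V, D v a → D v b → a ≠ b → (D a b ∨ D b a))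
    (v a b : V) (hab : a ≠ b) (hbv : b ≠ v) (hnadj : ¬ G.Adj a b) (hDb : D b v) :
    ∀ {x : V} (q : G.Walk x v) (prev : V),
      q.IsPath → D x prev → (prev ∉ q.support ∨ prev = v) → (prev = v → x = a) →
      (∀ z1 ∈ q.support, ∀ z2 ∈ q.support, G.Adj z1 z2 →
        s(z1, z2) ∈ q.edges ∨ s(z1, z2) = s(v, a)) →
      (∀ z ∈ q.support, z ≠ x → (z ≠ v ∨ x = b) → (z ≠ b ∨ prev ≠ v) → ¬ G.Adj prev z) →
      s(b, v) ∈ q.edges → False := by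
  intro x q
  induction q with
  | nil => intro prev _ _ _ _ _ _ h7; simp at h7
  | @cons x w v h r ih =>
    intro prev hpath hDxp hps hpv hind hINV hbv'
    have hrpath : r.IsPath := ((Walk.cons_isPath_iff h r).mp hpath).1
    have hxns : x ∉ r.support := ((Walk.cons_isPath_iff h r).mp hpath).2
    have hwmem : w ∈ r.support := r.start_mem_support
    have hvmem : v ∈ r.support := r.end_mem_support
    have hxnv : x ≠ v := fun hxv => hxns (hxv ▸ hvmem)
    have hwx : w ≠ x := fun hwx => hxns (hwx ▸ hwmem)
    by_cases hwv : w = v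
    · -- final step : w = v, the walk is a single edge x ~ v, and x must be b
      subst hwv
      have hrnil : r = Walk.nil := Walk.isPath_iff_eq_nil.mp hrpath
      subst hrnil
      have hxb : x = b := by
        simp only [Walk.edges_cons, Walk.edges_nil, List.mem_singleton] at hbv'
        rcases Sym2.eq_iff.mp hbv'.symm with ⟨rfl, _⟩ | ⟨rfl, rfl⟩
        · rfl
        · exact absurd rfl hxnv
      have hprevv : prev ≠ w := fun hpveq => hab ((hpv hpveq).symm.trans hxb)
      have hnadjpv : ¬ G.Adj prev w :=
        hINV w (by simp) (fun hvx => hxnv hvx.symm) (Or.inr hxb) (Or.inr hprevv)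
      rcases hout x prev w hDxp (hxb ▸ hDb) hprevv with hd | hd
      · exact hnadjpv ((hG prev w).mpr ⟨hprevv, Or.inl hd⟩)
      · exact hnadjpv ((hG prev w).mpr ⟨hprevv, Or.inr hd⟩)
    · -- generic step
      have hprevw : prev ≠ w := by
        intro hpw
        rcases hps with hps | hps
        · apply hps
          rw [hpw]
          simp
        · rw [hps] at hpw; exact hwv hpw.symm
      have hnadjpw : ¬ G.Adj prev w := by
        apply hINV w (by simp) hwx (Or.inl hwv)
        by_cases hpveq : prev = v
        · left
          intro hwb
          exact hnadj ((hpv hpveq) ▸ hwb ▸ h)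
        · right; exact hpveq
      have hDwx : D w x := by
        rcases (hG x w).mp h with ⟨hxw, hd | hd⟩
        · exfalso
          rcases hout x prev w hDxp hd hprevw with hd2 | hd2
          · exact hnadjpw ((hG prev w).mpr ⟨hprevw, Or.inl hd2⟩)
          · exact hnadjpw ((hG prev w).mpr ⟨hprevw, Or.inr hd2⟩)
        · exact hd
      -- invariants for r
      have hind' : ∀ z1 ∈ r.support, ∀ z2 ∈ r.support, G.Adj z1 z2 →
          s(z1, z2) ∈ r.edges ∨ s(z1, z2) = s(v, a) := by
        intro z1 hz1 z2 hz2 hadj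
        rcases hind z1 (by simp [hz1]) z2 (by simp [hz2]) hadj with hz | hz
        · rw [Walk.edges_cons, List.mem_cons] at hz
          rcases hz with hz | hz
          · exfalso
            rcases Sym2.eq_iff.mp hz with ⟨rfl, rfl⟩ | ⟨rfl, rfl⟩
            · exact hxns hz1
            · exact hxns hz2
          · exact Or.inl hz
        · exact Or.inr hz
      have hINV' : ∀ z ∈ r.support, z ≠ w → (z ≠ v ∨ w = b) → (z ≠ b ∨ x ≠ v) →
          ¬ G.Adj x z := by
        intro z hz hzw hguard _ hadj
        rcases hind x (by simp) z (by simp [hz]) hadj with he | he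
        · rw [Walk.edges_cons, List.mem_cons] at he
          rcases he with he | he
          · rcases Sym2.eq_iff.mp he with ⟨_, rfl⟩ | ⟨rfl, rfl⟩
            · exact hzw rfl
            · exact hxns hz
          · exact hxns (r.fst_mem_support_of_mem_edges he)
        · rcases Sym2.eq_iff.mp he with ⟨rfl, rfl⟩ | ⟨rfl, rfl⟩
          · exact hxnv rfl
          · rcases hguard with hzv | hwb
            · exact hzv rfl
            · exact hnadj (hwb ▸ h)
      have hbv'' : s(b, v) ∈ r.edges := by
        rw [Walk.edges_cons, List.mem_cons] at hbv'
        rcases hbv' with he | he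
        · exfalso
          rcases Sym2.eq_iff.mp he with ⟨rfl, rfl⟩ | ⟨rfl, rfl⟩
          · exact hwv rfl
          · exact hxnv rfl
        · exact he
      exact ih hbv hDb x hrpath hDwx (Or.inl hxns)
        (fun hxv => absurd hxv hxnv) hind' hINV' hbv''

/-- Let `D` be an out-semi-complete digraph with underlying graph `G` and let `v` be an
avoidable vertex of `G`. Then the in-neighborhood of `v` in `D` is semi-complete. -/
theorem stmt_13 {V : Type*} (D : V → V → Prop) (G : SimpleGraph V)
    (hG : ∀ u w : V, G.Adj u w ↔ (u ≠ w ∧ (D u w ∨ D w u)))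
    (hout : ∀ v a b : V, D v a → D v b → a ≠ b → (D a b ∨ D b a))
    (v : V) (hv : Avoidable G v) :
    ∀ a b : V, D a v → D b v → a ≠ b → (D a b ∨ D b a) := by
  intro a b hDa hDb hab
  by_contra hcon
  push_neg at hcon
  obtain ⟨hnab, hnba⟩ := hcon
  rcases eq_or_ne a v with rfl | hav
  · exact hnba hDb
  rcases eq_or_ne b v with rfl | hbv
  · exact hnab hDa
  have hAdjva : G.Adj v a := (hG v a).mpr ⟨fun h => hav h.symm, Or.inr hDa⟩
  have hAdjvb : G.Adj v b := (hG v b).mpr ⟨fun h => hbv h.symm, Or.inr hDb⟩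
  have hnadj : ¬ G.Adj a b := fun h => by
    rcases (hG a b).mp h with ⟨_, h' | h'⟩
    exacts [hnab h', hnba h']
  obtain ⟨c, ⟨hcyc, hcind⟩, he1, he2⟩ := hv a b hAdjva hAdjvb hab hnadj
  cases c with
  | nil => simp at he1
  | @cons _ w _ h q =>
    have hqpath : q.IsPath := ((Walk.cons_isCycle_iff q h).mp hcyc).1
    rw [Walk.edges_cons, List.mem_cons] at he1 he2
    rcases he1 with he1 | he1
    · -- w = a
      have hwa : w = a := by
        rcases Sym2.eq_iff.mp he1 with ⟨hav', _⟩ | ⟨ha, _⟩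
        · exact absurd hav' hav
        · exact ha.symm
      subst hwa
      have hbv7 : s(b, v) ∈ q.edges := by
        rcases he2 with he2 | he2
        · exfalso
          rcases Sym2.eq_iff.mp he2 with ⟨_, hba⟩ | ⟨hvb, _⟩
          · exact hab hba.symm
          · exact hav hvb.symm
        · rw [Sym2.eq_swap]; exact he2
      have hind0 : ∀ z1 ∈ q.support, ∀ z2 ∈ q.support, G.Adj z1 z2 →
          s(z1, z2) ∈ q.edges ∨ s(z1, z2) = s(v, w) := by
        intro z1 hz1 z2 hz2 hadj
        have := hcind z1 (by simp [hz1]) z2 (by simp [hz2]) hadj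
        rw [Walk.edges_cons, List.mem_cons] at this
        tauto
      have hINV0 : ∀ z ∈ q.support, z ≠ w → (z ≠ v ∨ w = b) → (z ≠ b ∨ v ≠ v) →
          ¬ G.Adj v z := by
        intro z hz hzw _ hzb hadj
        have hzb' : z ≠ b := by
          rcases hzb with hzb | hvv
          · exact hzb
          · exact absurd rfl hvv
        have := hcind v (by simp) z (by simp [hz]) hadj
        rw [Walk.edges_cons, List.mem_cons] at this
        rcases this with hz' | hz'
        · rcases Sym2.eq_iff.mp hz' with ⟨_, hzw'⟩ | ⟨hvw, _⟩
          · exact hzw hzw'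
          · exact hav hvw.symm
        · exact hzb' (end_edge_unique q hqpath (by rw [Sym2.eq_swap]; exact hz') hbv7)
      exact aux_walk D G hG hout v w b hab hbv hnadj hDb q v hqpath hDa (Or.inr rfl)
        (fun _ => rfl) hind0 hINV0 hbv7
    · -- s(a,v) ∈ q.edges, so w = b
      have hav7 : s(a, v) ∈ q.edges := he1
      have hwb : w = b := by
        rcases he2 with he2 | he2
        · rcases Sym2.eq_iff.mp he2 with ⟨_, hbw⟩ | ⟨_, hbv'⟩
          · exact hbw.symm
          · exact absurd hbv' hbv
        · exfalso
          exact hab (end_edge_unique q hqpath he1 (by rw [Sym2.eq_swap]; exact he2))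
      subst hwb
      have hind0 : ∀ z1 ∈ q.support, ∀ z2 ∈ q.support, G.Adj z1 z2 →
          s(z1, z2) ∈ q.edges ∨ s(z1, z2) = s(v, w) := by
        intro z1 hz1 z2 hz2 hadj
        have := hcind z1 (by simp [hz1]) z2 (by simp [hz2]) hadj
        rw [Walk.edges_cons, List.mem_cons] at this
        tauto
      have hINV0 : ∀ z ∈ q.support, z ≠ w → (z ≠ v ∨ w = a) → (z ≠ a ∨ v ≠ v) →
          ¬ G.Adj v z := by
        intro z hz hzw _ hza hadj
        have hza' : z ≠ a := by
          rcases hza with hza | hvv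
          · exact hza
          · exact absurd rfl hvv
        have := hcind v (by simp) z (by simp [hz]) hadj
        rw [Walk.edges_cons, List.mem_cons] at this
        rcases this with hz' | hz'
        · rcases Sym2.eq_iff.mp hz' with ⟨_, hzw'⟩ | ⟨hvw, _⟩
          · exact hzw hzw'
          · exact hbv hvw.symm
        · exact hza' (end_edge_unique q hqpath (by rw [Sym2.eq_swap]; exact hz') hav7)
      exact aux_walk D G hG hout v w a hab.symm hav (fun h' => hnadj h'.symm) hDa q v hqpath
        hDb (Or.inr rfl) (fun _ => rfl) hind0 hINV0 hav7
end

section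
/- Every graph with at least two edges but no two independent edges (no induced 2K_2) contains at least two avoidable edges. -/
open SimpleGraph

/-- Edges `uv` and `xy` are independent: their four endpoints induce a `2K₂`. -/
def IndepEdges {V : Type*} (G : SimpleGraph V) (u v x y : V) : Prop :=
  G.Adj u v ∧ G.Adj x y ∧ u ≠ x ∧ u ≠ y ∧ v ≠ x ∧ v ≠ y ∧
    ¬ G.Adj u x ∧ ¬ G.Adj u y ∧ ¬ G.Adj v x ∧ ¬ G.Adj v y

/-- The edge `uv` is avoidable: every induced four-vertex path `x - u - v - y` having
`uv` as its middle edge closes to an induced cycle. -/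
def AvoidableEdge {V : Type*} (G : SimpleGraph V) (u v : V) : Prop :=
  G.Adj u v ∧ ∀ x y : V, G.Adj x u → G.Adj v y → x ≠ v → y ≠ u → x ≠ y →
    ¬ G.Adj x v → ¬ G.Adj u y → ¬ G.Adj x y →
    ∃ c : G.Walk u u, IsInducedCycle G c ∧
      s(x, u) ∈ c.edges ∧ s(u, v) ∈ c.edges ∧ s(v, y) ∈ c.edges

/-- The number of vertices in the closed neighbourhood of the pair `{u, v}`. -/
noncomputable def ekey {V : Type*} [Fintype V] (G : SimpleGraph V) (u v : V) : ℕ :=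
  {z : V | G.Adj u z ∨ G.Adj v z ∨ z = u ∨ z = v}.ncard

lemma ekey_comm {V : Type*} [Fintype V] (G : SimpleGraph V) (u v : V) :
    ekey G u v = ekey G v u := by
  unfold ekey
  congr 1
  ext z
  simp only [Set.mem_setOf_eq]
  tauto

set_option maxHeartbeats 1000000 in
/-- An induced five-cycle `u - v - y - w - x - u` gives the required induced cycle. -/
lemma cycle5 {V : Type*} {G : SimpleGraph V} {x u v y w : V}
    (hxu : G.Adj x u) (huv : G.Adj u v) (hvy : G.Adj v y) (hyw : G.Adj y w)
    (hwx : G.Adj w x) (hxv : ¬ G.Adj x v) (huy : ¬ G.Adj u y) (hxy : ¬ G.Adj x y)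
    (hwu : ¬ G.Adj w u) (hwv : ¬ G.Adj w v) :
    ∃ c : G.Walk u u, IsInducedCycle G c ∧
      s(x, u) ∈ c.edges ∧ s(u, v) ∈ c.edges ∧ s(v, y) ∈ c.edges := by
  have hvx : ¬ G.Adj v x := fun h => hxv h.symm
  have hyu : ¬ G.Adj y u := fun h => huy h.symm
  have hyx : ¬ G.Adj y x := fun h => hxy h.symm
  have huw : ¬ G.Adj u w := fun h => hwu h.symm
  have hvw : ¬ G.Adj v w := fun h => hwv h.symm
  have lx : ¬ G.Adj x x := G.loopless.irrefl x
  have lu : ¬ G.Adj u u := G.loopless.irrefl u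
  have lv : ¬ G.Adj v v := G.loopless.irrefl v
  have ly : ¬ G.Adj y y := G.loopless.irrefl y
  have lw : ¬ G.Adj w w := G.loopless.irrefl w
  have nxy : x ≠ y := fun h => hxv (by rw [h]; exact hvy.symm)
  have nuv : u ≠ v := huv.ne
  have nuy : u ≠ y := fun h => hwu (by rw [h]; exact hyw.symm)
  have nuw : u ≠ w := fun h => hwv (by rw [← h]; exact huv)
  have nux : u ≠ x := hxu.ne'
  have nvy : v ≠ y := hvy.ne
  have nvw : v ≠ w := fun h => hxv (by rw [h]; exact hwx.symm)
  have nvx : v ≠ x := fun h => hxy (by rw [← h]; exact hvy)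
  have nyw : y ≠ w := hyw.ne
  have nwx : w ≠ x := hwx.ne
  have nyx := nxy.symm
  have nvu := nuv.symm
  have nyu := nuy.symm
  have nwu := nuw.symm
  have nxu := nux.symm
  have nyv := nvy.symm
  have nwv := nvw.symm
  have nxv := nvx.symm
  have nwy := nyw.symm
  have nxw := nwx.symm
  refine ⟨Walk.cons huv (Walk.cons hvy (Walk.cons hyw (Walk.cons hwx (Walk.cons hxu Walk.nil)))),
    ⟨?_, ?_⟩, ?_, ?_, ?_⟩
  · constructor
    · constructor
      · constructor
        simp only [Walk.edges_cons, Walk.edges_nil, List.nodup_cons, List.mem_cons,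
          List.not_mem_nil, or_false, List.nodup_nil, and_true, List.mem_singleton,
          Sym2.eq, Sym2.rel_iff', Prod.mk.injEq, Prod.swap_prod_mk]
        tauto
      · simp
    · simp only [Walk.support_cons, Walk.support_nil, List.tail_cons, List.nodup_cons,
        List.mem_cons, List.not_mem_nil, or_false, List.mem_singleton, List.nodup_nil, and_true]
      tauto
  · intro a ha b hb hab
    simp only [Walk.support_cons, Walk.support_nil, List.mem_cons, List.not_mem_nil,
      or_false, List.mem_singleton] at ha hb
    simp only [Walk.edges_cons, Walk.edges_nil, List.mem_cons, List.not_mem_nil, or_false,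
      List.mem_singleton, Sym2.eq, Sym2.rel_iff', Prod.mk.injEq, Prod.swap_prod_mk]
    rcases ha with rfl|rfl|rfl|rfl|rfl|rfl <;> rcases hb with rfl|rfl|rfl|rfl|rfl|rfl <;>
      first
        | exact absurd hab lx | exact absurd hab lu | exact absurd hab lv
        | exact absurd hab ly | exact absurd hab lw
        | exact absurd hab hxv | exact absurd hab hvx | exact absurd hab huy
        | exact absurd hab hyu | exact absurd hab hxy | exact absurd hab hyx
        | exact absurd hab hwu | exact absurd hab huw | exact absurd hab hwv
        | exact absurd hab hvw
        | simp
  · simp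
  · simp
  · simp

/-- If the induced path `x - u - v - y` cannot be closed by a fifth vertex, then
(in a `2K₂`-free graph) the closed neighbourhood of `{x, u}` is strictly contained
in that of `{u, v}`. -/
lemma ekey_lt {V : Type*} [Fintype V] {G : SimpleGraph V} {x u v y : V}
    (hno : ∀ a b c d : V, ¬ IndepEdges G a b c d)
    (hxu : G.Adj x u) (huv : G.Adj u v) (hvy : G.Adj v y)
    (hxv : ¬ G.Adj x v) (huy : ¬ G.Adj u y) (hxy : ¬ G.Adj x y)
    (hxnv : x ≠ v) (hynu : y ≠ u) (hxny : x ≠ y)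
    (hw : ∀ w, ¬ (G.Adj w x ∧ G.Adj w y ∧ ¬ G.Adj w u ∧ ¬ G.Adj w v)) :
    ekey G x u < ekey G u v := by
  apply Set.ncard_lt_ncard
  · rw [Set.ssubset_iff_of_subset]
    · refine ⟨y, Or.inr (Or.inl hvy), ?_⟩
      intro h
      rcases h with h | h | h | h
      · exact hxy h
      · exact huy h
      · exact hxny h.symm
      · exact hynu h
    · intro z hz
      rcases hz with hz | hz | rfl | rfl
      · by_cases h1 : G.Adj u z
        · exact Or.inl h1
        by_cases h2 : z = u
        · exact Or.inr (Or.inr (Or.inl h2))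
        by_cases h3 : z = v
        · exact Or.inr (Or.inr (Or.inr h3))
        by_cases h4 : G.Adj v z
        · exact Or.inr (Or.inl h4)
        exfalso
        by_cases h5 : G.Adj z y
        · exact hw z ⟨hz.symm, h5, fun h => h1 h.symm, fun h => h4 h.symm⟩
        · have h6 : z ≠ y := fun h => hxy (h ▸ hz)
          exact hno z x v y ⟨hz.symm, hvy, h3, h6, hxnv, hxny,
            fun h => h4 h.symm, h5, hxv, hxy⟩
      · exact Or.inl hz
      · exact Or.inl hxu.symm
      · exact Or.inr (Or.inr (Or.inl rfl))
  · exact Set.toFinite _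

/-- To show an edge avoidable it suffices to close every induced `P₄` by a fifth vertex. -/
lemma avoidable_of_w {V : Type*} {G : SimpleGraph V} {u v : V} (huv : G.Adj u v)
    (h : ∀ x y : V, G.Adj x u → G.Adj v y → x ≠ v → y ≠ u → x ≠ y →
      ¬ G.Adj x v → ¬ G.Adj u y → ¬ G.Adj x y →
      ∃ w, G.Adj w x ∧ G.Adj w y ∧ ¬ G.Adj w u ∧ ¬ G.Adj w v) :
    AvoidableEdge G u v := by
  refine ⟨huv, fun x y hxu hvy hxv' hyu' hxy' hxv huy hxy => ?_⟩
  obtain ⟨w, hwx, hwy, hwu, hwv⟩ := h x y hxu hvy hxv' hyu' hxy' hxv huy hxy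
  exact cycle5 hxu huv hvy hwy.symm hwx hxv huy hxy hwu hwv

/-- Every finite graph with at least two edges but no two independent edges contains at
least two avoidable edges. -/
theorem stmt_15 {V : Type*} [Fintype V] (G : SimpleGraph V)
    (h2 : ∃ u v x y : V, G.Adj u v ∧ G.Adj x y ∧ s(u, v) ≠ s(x, y))
    (hno : ∀ u v x y : V, ¬ IndepEdges G u v x y) :
    ∃ u v x y : V, s(u, v) ≠ s(x, y) ∧ AvoidableEdge G u v ∧ AvoidableEdge G x y := by
  classical
  obtain ⟨p, q, r, t, hpq, hrt, hne⟩ := h2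
  -- first edge : globally minimal `ekey`
  have hEne : (Finset.univ.filter (fun e : V × V => G.Adj e.1 e.2)).Nonempty :=
    ⟨(p, q), by simp [hpq]⟩
  obtain ⟨⟨u, v⟩, huvE, hmin⟩ :=
    (Finset.univ.filter (fun e : V × V => G.Adj e.1 e.2)).exists_min_image
      (fun e => ekey G e.1 e.2) hEne
  have huv : G.Adj u v := by simpa using huvE
  have Auv : AvoidableEdge G u v := by
    apply avoidable_of_w huv
    intro x y hxu hvy hxnv hynu hxny hxv huy hxy
    by_contra hc
    have hw : ∀ w, ¬ (G.Adj w x ∧ G.Adj w y ∧ ¬ G.Adj w u ∧ ¬ G.Adj w v) :=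
      fun w hh => hc ⟨w, hh⟩
    have hlt := ekey_lt hno hxu huv hvy hxv huy hxy hxnv hynu hxny hw
    have hle := hmin (x, u) (by simp [hxu])
    exact absurd (lt_of_le_of_lt hle hlt) (lt_irrefl _)
  -- second edge : minimal `ekey` among edges different from `s(u, v)`
  have hE'ne : (Finset.univ.filter
      (fun e : V × V => G.Adj e.1 e.2 ∧ s(e.1, e.2) ≠ s(u, v))).Nonempty := by
    by_cases h : s(p, q) = s(u, v)
    · exact ⟨(r, t), by
        simp only [Finset.mem_filter, Finset.mem_univ, true_and]
        exact ⟨hrt, fun hh => hne (h.trans hh.symm)⟩⟩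
    · exact ⟨(p, q), by
        simp only [Finset.mem_filter, Finset.mem_univ, true_and]
        exact ⟨hpq, h⟩⟩
  obtain ⟨⟨a, b⟩, habE, hmin'⟩ :=
    (Finset.univ.filter
      (fun e : V × V => G.Adj e.1 e.2 ∧ s(e.1, e.2) ≠ s(u, v))).exists_min_image
      (fun e => ekey G e.1 e.2) hE'ne
  have hab : G.Adj a b := by
    have := Finset.mem_filter.mp habE
    exact this.2.1
  have hsne : s(a, b) ≠ s(u, v) := by
    have := Finset.mem_filter.mp habE
    exact this.2.2
  have Aab : AvoidableEdge G a b := by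
    apply avoidable_of_w hab
    intro x y hxa hby hxnb hyna hxny hxb hay hxy
    by_contra hc
    have hw : ∀ w, ¬ (G.Adj w x ∧ G.Adj w y ∧ ¬ G.Adj w a ∧ ¬ G.Adj w b) :=
      fun w hh => hc ⟨w, hh⟩
    have k1 : ekey G x a < ekey G a b :=
      ekey_lt hno hxa hab hby hxb hay hxy hxnb hyna hxny hw
    have k2 : ekey G y b < ekey G b a :=
      ekey_lt hno hby.symm hab.symm hxa.symm (fun h => hay h.symm)
        (fun h => hxb h.symm) (fun h => hxy h.symm) hyna hxnb hxny.symm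
        (fun w hh => hw w ⟨hh.2.1, hh.1, hh.2.2.2, hh.2.2.1⟩)
    by_cases hcase : s(x, a) = s(u, v)
    · have h2 : s(y, b) ≠ s(u, v) := by
        intro h
        have hxy2 : s(x, a) = s(y, b) := hcase.trans h.symm
        rw [Sym2.eq_iff] at hxy2
        rcases hxy2 with ⟨h1, _⟩ | ⟨h1, _⟩
        · exact hxny h1
        · exact hxnb h1
      have hle := hmin' (y, b) (by
        simp only [Finset.mem_filter, Finset.mem_univ, true_and]
        exact ⟨hby.symm, h2⟩)
      rw [ekey_comm G b a] at k2
      exact absurd (lt_of_le_of_lt hle k2) (lt_irrefl _)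
    · have hle := hmin' (x, a) (by
        simp only [Finset.mem_filter, Finset.mem_univ, true_and]
        exact ⟨hxa, hcase⟩)
      exact absurd (lt_of_le_of_lt hle k1) (lt_irrefl _)
  exact ⟨u, v, a, b, fun h => hsne h.symm, Auv, Aab⟩
end

section
/- For every graph G and every non-universal edge e of G, there exists an edge f of G that is independent of e and avoidable in G. -/
open SimpleGraph

section AvoidProof

variable {V : Type*}

/-- Restriction of a graph to a set of vertices (keeping all vertices, with the
vertices outside `s` becoming isolated). -/
private def RG (G : SimpleGraph V) (s : Set V) : SimpleGraph V where
  Adj a b := G.Adj a b ∧ a ∈ s ∧ b ∈ s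
  symm := ⟨fun _ _ ⟨h, ha, hb⟩ => ⟨h.symm, hb, ha⟩⟩
  loopless := ⟨fun _ ⟨h, _, _⟩ => G.irrefl h⟩

private lemma RG_le (G : SimpleGraph V) (s : Set V) : RG G s ≤ G := fun _ _ h => h.1

private lemma RG_adj {G : SimpleGraph V} {s : Set V} {a b : V} :
    (RG G s).Adj a b ↔ G.Adj a b ∧ a ∈ s ∧ b ∈ s := Iff.rfl

private lemma RG_mono (G : SimpleGraph V) {s t : Set V} (h : s ⊆ t) : RG G s ≤ RG G t :=
  fun _ _ ⟨hab, ha, hb⟩ => ⟨hab, h ha, h hb⟩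

private lemma support_mem_RG {G : SimpleGraph V} {s : Set V} {α β : V}
    (p : (RG G s).Walk α β) (hα : α ∈ s) : ∀ w ∈ p.support, w ∈ s := by
  induction p with
  | nil => intro w hw; rw [Walk.support_nil, List.mem_singleton] at hw; exact hw ▸ hα
  | @cons α' γ β' h q ih =>
    intro w hw
    rw [Walk.support_cons] at hw
    rcases List.mem_cons.mp hw with rfl | hw
    · exact hα
    · exact ih h.2.2 w hw

private lemma reach_RG_of_support {G : SimpleGraph V} {s t : Set V} {α β : V}
    (p : (RG G s).Walk α β) (h : ∀ w ∈ p.support, w ∈ t) : (RG G t).Reachable α β := by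
  induction p with
  | nil => exact Reachable.refl _
  | @cons α' γ β' hadj q ih =>
    refine Reachable.trans (Adj.reachable ⟨hadj.1, ?_, ?_⟩) (ih ?_)
    · exact h α' (Walk.start_mem_support _)
    · refine h γ ?_
      rw [Walk.support_cons]
      exact List.mem_cons_of_mem _ (Walk.start_mem_support q)
    · intro w hw
      refine h w ?_
      rw [Walk.support_cons]
      exact List.mem_cons_of_mem _ hw

/-- the complement of the closed neighbourhood of the pair `{x,y}` -/
private def Mset (G : SimpleGraph V) (x y : V) : Set V :=
  {z | z ≠ x ∧ z ≠ y ∧ ¬G.Adj x z ∧ ¬G.Adj y z}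

private lemma Mset_comm (G : SimpleGraph V) (x y : V) : Mset G x y = Mset G y x := by
  ext z; constructor <;> exact fun ⟨h1, h2, h3, h4⟩ => ⟨h2, h1, h4, h3⟩

/-- the "component" of `u` outside the closed neighbourhood of `{x,y}` -/
private def KS (G : SimpleGraph V) (u x y : V) : Set V :=
  {z | (RG G (Mset G x y)).Reachable u z}

private lemma KS_comm (G : SimpleGraph V) (u x y : V) : KS G u x y = KS G u y x := by
  rw [KS, KS, Mset_comm]

private lemma KS_sub (G : SimpleGraph V) {u x y : V} (hu : u ∈ Mset G x y) :
    KS G u x y ⊆ Mset G x y := by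
  intro z hz
  obtain ⟨p⟩ := hz
  exact support_mem_RG p hu z p.end_mem_support

private lemma KS_mono (G : SimpleGraph V) {u x y p q : V}
    (h : ∀ w ∈ KS G u x y, w ∈ Mset G p q) : KS G u x y ⊆ KS G u p q := by
  classical
  intro z hz
  obtain ⟨w⟩ := hz
  refine reach_RG_of_support w ?_
  intro t ht
  exact h t ⟨w.takeUntil t ht⟩

/-- a minimal-length walk has no chords -/
private lemma head_chord {H : SimpleGraph V} {α β : V} (p : H.Walk α β)
    (hmin : ∀ q : H.Walk α β, p.length ≤ q.length) {w : V} (hw : w ∈ p.support)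
    (hadj : H.Adj α w) : s(α, w) ∈ p.edges := by
  classical
  cases p with
  | nil =>
    rw [Walk.support_nil, List.mem_singleton] at hw
    subst hw
    exact absurd hadj (H.irrefl)
  | @cons _ γ _ h q =>
    rw [Walk.support_cons] at hw
    rcases List.mem_cons.mp hw with rfl | hw
    · exact absurd hadj (H.irrefl)
    · by_cases hwγ : w = γ
      · subst hwγ
        rw [Walk.edges_cons]
        exact List.mem_cons_self
      · exfalso
        have hspec := q.take_spec hw
        have hlen : q.length = (q.takeUntil w hw).length + (q.dropUntil w hw).length := by
          conv_lhs => rw [← hspec]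
          rw [Walk.length_append]
        have hmin' := hmin (Walk.cons hadj (q.dropUntil w hw))
        rw [Walk.length_cons, Walk.length_cons] at hmin'
        have htake : (q.takeUntil w hw).length = 0 := by omega
        exact hwγ (Walk.eq_of_length_eq_zero htake).symm

private lemma chordfree {H : SimpleGraph V} {α β : V} (p : H.Walk α β) :
    (∀ q : H.Walk α β, p.length ≤ q.length) →
    ∀ w1 ∈ p.support, ∀ w2 ∈ p.support, H.Adj w1 w2 → s(w1, w2) ∈ p.edges := by
  induction p with
  | nil =>
    intro _ w1 hw1 w2 hw2 hadj
    rw [Walk.support_nil, List.mem_singleton] at hw1 hw2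
    subst hw1; subst hw2
    exact absurd hadj (H.irrefl)
  | @cons α' γ β' h q ih =>
    intro hmin w1 hw1 w2 hw2 hadj
    rw [Walk.support_cons] at hw1 hw2
    rcases List.mem_cons.mp hw1 with rfl | hw1'
    · refine head_chord (Walk.cons h q) hmin ?_ hadj
      rw [Walk.support_cons]
      exact hw2
    · rcases List.mem_cons.mp hw2 with rfl | hw2'
      · rw [Sym2.eq_swap]
        refine head_chord (Walk.cons h q) hmin ?_ hadj.symm
        rw [Walk.support_cons]
        exact hw1
      · have hmin' : ∀ r : H.Walk γ β', q.length ≤ r.length := by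
          intro r
          have := hmin (Walk.cons h r)
          rw [Walk.length_cons, Walk.length_cons] at this
          omega
        have := ih hmin' w1 hw1' w2 hw2' hadj
        rw [Walk.edges_cons]
        exact List.mem_cons_of_mem _ this

private lemma exists_min_path {H : SimpleGraph V} {α β : V} (h : H.Reachable α β) :
    ∃ p : H.Walk α β, p.IsPath ∧ ∀ q : H.Walk α β, p.length ≤ q.length := by
  classical
  obtain ⟨w⟩ := h
  have hex : ∃ n, ∃ q : H.Walk α β, q.length = n := ⟨w.length, w, rfl⟩
  obtain ⟨q, hq⟩ := Nat.find_spec hex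
  refine ⟨q.bypass, Walk.bypass_isPath q, ?_⟩
  intro r
  calc q.bypass.length ≤ q.length := Walk.length_bypass_le q
    _ = Nat.find hex := hq
    _ ≤ r.length := Nat.find_min' hex ⟨r, rfl⟩

/-- The key geometric construction: if the two ends of an induced `P₄` with middle
edge `xy` attach to a common connected piece outside `N[{x,y}]`, then the `P₄` closes
into an induced cycle. -/
private lemma cycle_constr {G : SimpleGraph V} {x y a b z z' : V}
    (hxy : G.Adj x y) (hax : G.Adj a x) (hyb : G.Adj y b)
    (hnay : ¬G.Adj a y) (hnxb : ¬G.Adj x b) (hnab : ¬G.Adj a b)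
    (hane : a ≠ y) (hbne : b ≠ x) (habne : a ≠ b)
    (haz : G.Adj a z) (hbz' : G.Adj b z')
    (hz : z ∈ Mset G x y) (hz' : z' ∈ Mset G x y)
    (hr : (RG G (Mset G x y)).Reachable z z') :
    ∃ c : G.Walk x x, IsInducedCycle G c ∧
      s(a, x) ∈ c.edges ∧ s(x, y) ∈ c.edges ∧ s(y, b) ∈ c.edges := by
  classical
  set s' : Set V := Mset G x y ∪ {a, b} with hs'
  have has' : a ∈ s' := Or.inr (by simp)
  have hbs' : b ∈ s' := Or.inr (by simp)
  have hreach : (RG G s').Reachable a b := by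
    refine (Adj.reachable (RG_adj.mpr ⟨haz, has', Or.inl hz⟩)).trans
      (Reachable.trans ?_ (Adj.reachable (RG_adj.mpr ⟨hbz'.symm, Or.inl hz', hbs'⟩)))
    exact Reachable.mono (RG_mono G Set.subset_union_left) hr
  obtain ⟨P, hPpath, hPmin⟩ := exists_min_path hreach
  have hPsup : ∀ w ∈ P.support, w ∈ s' := support_mem_RG P has'
  have hxs : x ∉ s' := by
    rintro (hx | hx)
    · exact hx.1 rfl
    · rcases hx with rfl | rfl
      · exact G.irrefl hax
      · exact hbne rfl
  have hys : y ∉ s' := by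
    rintro (hy | hy)
    · exact hy.2.1 rfl
    · rcases hy with rfl | rfl
      · exact hane rfl
      · exact G.irrefl hyb
  have hxP : x ∉ P.support := fun h => hxs (hPsup _ h)
  have hyP : y ∉ P.support := fun h => hys (hPsup _ h)
  have hPedges : ∀ e ∈ P.edges, e ∈ G.edgeSet :=
    fun e he => edgeSet_mono (RG_le G s') (P.edges_subset_edgeSet he)
  set PG : G.Walk a b := P.transfer G hPedges with hPGdef
  have hPGsup : PG.support = P.support := P.support_transfer _
  have hPGedges : PG.edges = P.edges := P.edges_transfer _
  set tw : G.Walk b x := Walk.cons hyb.symm (Walk.cons hxy.symm Walk.nil) with htw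
  set c : G.Walk x x := Walk.cons hax.symm (PG.append tw) with hc
  have hcsup : c.support = x :: (P.support ++ [y, x]) := by
    rw [hc, Walk.support_cons, Walk.support_append, hPGsup, htw]
    rfl
  have hcedges : c.edges = s(x, a) :: (P.edges ++ [s(b, y), s(y, x)]) := by
    rw [hc, Walk.edges_cons, Walk.edges_append, hPGedges, htw]
    rfl
  have e1 : s(a, x) ∈ c.edges := by
    rw [hcedges, Sym2.eq_swap]
    exact List.mem_cons_self
  have e2 : s(x, y) ∈ c.edges := by
    rw [hcedges, Sym2.eq_swap]
    refine List.mem_cons_of_mem _ (List.mem_append_right _ ?_)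
    simp
  have e3 : s(y, b) ∈ c.edges := by
    rw [hcedges, Sym2.eq_swap]
    refine List.mem_cons_of_mem _ (List.mem_append_right _ ?_)
    simp
  -- membership in the support of c
  have hmemsup : ∀ w, w ∈ c.support → w = x ∨ w ∈ P.support ∨ w = y := by
    intro w hw
    rw [hcsup] at hw
    rcases List.mem_cons.mp hw with rfl | hw
    · exact Or.inl rfl
    · rcases List.mem_append.mp hw with hw | hw
      · exact Or.inr (Or.inl hw)
      · rcases List.mem_cons.mp hw with rfl | hw
        · exact Or.inr (Or.inr rfl)
        · rw [List.mem_singleton] at hw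
          exact Or.inl hw
  -- chords from x and from y
  have hxchord : ∀ w ∈ P.support, G.Adj x w → s(x, w) ∈ c.edges := by
    intro w hwP hadj
    rcases hPsup w hwP with hwM | hw
    · exact absurd hadj hwM.2.2.1
    · rcases hw with rfl | rfl
      · rw [Sym2.eq_swap]; exact e1
      · exact absurd hadj hnxb
  have hychord : ∀ w ∈ P.support, G.Adj y w → s(y, w) ∈ c.edges := by
    intro w hwP hadj
    rcases hPsup w hwP with hwM | hw
    · exact absurd hadj hwM.2.2.2
    · rcases hw with rfl | rfl
      · exact absurd hadj.symm hnay
      · exact e3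
  have hinduced : ∀ w1 ∈ c.support, ∀ w2 ∈ c.support, G.Adj w1 w2 → s(w1, w2) ∈ c.edges := by
    intro w1 hw1 w2 hw2 hadj
    rcases hmemsup w1 hw1 with rfl | hw1' | rfl
    · rcases hmemsup w2 hw2 with rfl | hw2' | rfl
      · exact absurd hadj (G.irrefl)
      · exact hxchord w2 hw2' hadj
      · exact e2
    · rcases hmemsup w2 hw2 with rfl | hw2' | rfl
      · rw [Sym2.eq_swap]; exact hxchord w1 hw1' hadj.symm
      · -- both on P : no chords by minimality
        have hadj' : (RG G s').Adj w1 w2 := ⟨hadj, hPsup w1 hw1', hPsup w2 hw2'⟩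
        have := chordfree P hPmin w1 hw1' w2 hw2' hadj'
        rw [hcedges]
        exact List.mem_cons_of_mem _ (List.mem_append_left _ this)
      · rw [Sym2.eq_swap]; exact hychord w1 hw1' hadj.symm
    · rcases hmemsup w2 hw2 with rfl | hw2' | rfl
      · rw [Sym2.eq_swap]; exact e2
      · exact hychord w2 hw2' hadj
      · exact absurd hadj (G.irrefl)
  -- now the cycle property
  have hPnodup : P.support.Nodup := hPpath.support_nodup
  have hsupnodup : c.support.tail.Nodup := by
    rw [hcsup]
    have : ([y, x] : List V).Nodup := by
      refine List.nodup_cons.mpr ⟨?_, List.nodup_singleton _⟩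
      rw [List.mem_singleton]
      exact hxy.ne'
    refine List.Nodup.append hPnodup this ?_
    intro w hwP hwyx
    rcases List.mem_cons.mp hwyx with rfl | hwyx
    · exact hyP hwP
    · rw [List.mem_singleton] at hwyx
      exact hxP (hwyx ▸ hwP)
  have hedgesnodup : c.edges.Nodup := by
    rw [hcedges]
    refine List.nodup_cons.mpr ⟨?_, ?_⟩
    · intro hmem
      rcases List.mem_append.mp hmem with hmem | hmem
      · exact hxP (P.fst_mem_support_of_mem_edges hmem)
      · rcases List.mem_cons.mp hmem with heq | hmem
        · rw [Sym2.eq_iff] at heq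
          rcases heq with ⟨rfl, rfl⟩ | ⟨rfl, rfl⟩
          · exact hbne rfl
          · exact G.irrefl hxy
        · rw [List.mem_singleton, Sym2.eq_iff] at hmem
          rcases hmem with ⟨rfl, _⟩ | ⟨_, rfl⟩
          · exact G.irrefl hxy
          · exact hane rfl
    · refine List.Nodup.append (hPpath.isTrail.edges_nodup) ?_ ?_
      · refine List.nodup_cons.mpr ⟨?_, List.nodup_singleton _⟩
        rw [List.mem_singleton, Sym2.eq_iff]
        rintro (⟨rfl, rfl⟩ | ⟨rfl, _⟩)
        · exact hbne rfl
        · exact hbne rfl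
      · intro e heP heyx
        rcases List.mem_cons.mp heyx with rfl | heyx
        · exact hyP (P.snd_mem_support_of_mem_edges heP)
        · rw [List.mem_singleton] at heyx
          subst heyx
          exact hyP (P.fst_mem_support_of_mem_edges heP)
  have hne : c ≠ Walk.nil := by
    intro h
    have := e2
    rw [h, Walk.edges_nil] at this
    exact List.not_mem_nil this
  exact ⟨c, ⟨⟨⟨⟨hedgesnodup⟩, hne⟩, hsupnodup⟩, hinduced⟩, e1, e2, e3⟩

/-- Avoidability lifts from an induced "sub"graph containing the closed
neighbourhoods of both endpoints. -/
private lemma lift_avoidable_s16 {G : SimpleGraph V} {s : Set V} {p q : V}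
    (hp : ∀ z, G.Adj p z → z ∈ s) (hq : ∀ z, G.Adj q z → z ∈ s)
    (hps : p ∈ s) (hqs : q ∈ s)
    (h : AvoidableEdge (RG G s) p q) : AvoidableEdge G p q := by
  obtain ⟨hpq, hclose⟩ := h
  refine ⟨hpq.1, ?_⟩
  intro α β hαp hqβ hαq hβp hαβ hnαq hnpβ hnαβ
  have hαs : α ∈ s := hp _ hαp.symm
  have hβs : β ∈ s := hq _ hqβ
  obtain ⟨c, ⟨hcyc, hind⟩, e1, e2, e3⟩ :=
    hclose α β ⟨hαp, hαs, hps⟩ ⟨hqβ, hqs, hβs⟩ hαq hβp hαβ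
      (fun h' => hnαq h'.1) (fun h' => hnpβ h'.1) (fun h' => hnαβ h'.1)
  have hce : ∀ e ∈ c.edges, e ∈ G.edgeSet :=
    fun e he => edgeSet_mono (RG_le G s) (c.edges_subset_edgeSet he)
  have hsupeq : (c.transfer G hce).support = c.support := c.support_transfer _
  have hedgeq : (c.transfer G hce).edges = c.edges := c.edges_transfer _
  have hcsupS : ∀ w ∈ c.support, w ∈ s := support_mem_RG c hps
  refine ⟨c.transfer G hce, ⟨?_, ?_⟩, ?_, ?_, ?_⟩
  · refine ⟨⟨⟨?_⟩, ?_⟩, ?_⟩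
    · rw [hedgeq]
      exact hcyc.isCircuit.isTrail.edges_nodup
    · intro hnil
      have : s(α, p) ∈ (c.transfer G hce).edges := by rw [hedgeq]; exact e1
      rw [hnil, Walk.edges_nil] at this
      exact List.not_mem_nil this
    · rw [hsupeq]
      exact hcyc.support_nodup
  · intro w1 hw1 w2 hw2 hadj
    rw [hsupeq] at hw1 hw2
    rw [hedgeq]
    exact hind w1 hw1 w2 hw2 ⟨hadj, hcsupS _ hw1, hcsupS _ hw2⟩
  · rw [hedgeq]; exact e1
  · rw [hedgeq]; exact e2
  · rw [hedgeq]; exact e3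

private lemma indep_of_mem {G : SimpleGraph V} {u v p q : V} (huv : G.Adj u v)
    (hpq : G.Adj p q) (hp : p ∈ Mset G u v) (hq : q ∈ Mset G u v) :
    IndepEdges G u v p q :=
  ⟨huv, hpq, Ne.symm hp.1, Ne.symm hq.1, Ne.symm hp.2.1, Ne.symm hq.2.1,
    hp.2.2.1, hq.2.2.1, hp.2.2.2, hq.2.2.2⟩

/-- the potential combining the size of the component of `u` outside `N[{p,q}]`
(lexicographically dominant) with the number of vertices outside `N[{p,q}]`. -/
private noncomputable def Nval (G : SimpleGraph V) [Fintype V] (u p q : V) : ℕ :=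
  (KS G u p q).ncard * (Fintype.card V + 1) + (Mset G p q).ncard

private lemma Nval_comm (G : SimpleGraph V) [Fintype V] (u p q : V) :
    Nval G u p q = Nval G u q p := by
  rw [Nval, Nval, KS_comm, Mset_comm]

/-- The main inductive engine: given the potential-maximal independent edge `xy`,
a "bad pair" `(a, b)` witnessing non-avoidability of `xy`, such that moreover `b`
is not adjacent to the component `K` of `u`, we find the desired avoidable edge by
recursion into `G - K`. -/
private lemma core [Fintype V] {G : SimpleGraph V} {u v x y a b : V} {n : ℕ}
    (ih : ∀ (G' : SimpleGraph V) (u' v' : V), G'.edgeSet.ncard ≤ n → G'.Adj u' v' →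
        (∃ p q, IndepEdges G' u' v' p q) →
        ∃ p q, IndepEdges G' u' v' p q ∧ AvoidableEdge G' p q)
    (hcard : G.edgeSet.ncard ≤ n + 1)
    (huv : G.Adj u v) (hxy : G.Adj x y)
    (hx : x ∈ Mset G u v) (hy : y ∈ Mset G u v)
    (hmax : ∀ p q, G.Adj p q → p ∈ Mset G u v → q ∈ Mset G u v →
        Nval G u p q ≤ Nval G u x y)
    (hax : G.Adj a x) (hyb : G.Adj y b)
    (hane : a ≠ y) (hbne : b ≠ x) (habne : a ≠ b)
    (hnay : ¬G.Adj a y) (hnxb : ¬G.Adj x b) (hnab : ¬G.Adj a b)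
    (hnocomp : ¬∃ z z', G.Adj a z ∧ G.Adj b z' ∧ z ∈ Mset G x y ∧ z' ∈ Mset G x y ∧
        (RG G (Mset G x y)).Reachable z z')
    (hKb : ∀ w ∈ KS G u x y, ¬G.Adj b w) :
    ∃ p q, IndepEdges G u v p q ∧ AvoidableEdge G p q := by
  classical
  have hu : u ∈ Mset G x y :=
    ⟨Ne.symm hx.1, Ne.symm hy.1, fun h => hx.2.2.1 h.symm, fun h => hy.2.2.1 h.symm⟩
  have hv : v ∈ Mset G x y :=
    ⟨Ne.symm hx.2.1, Ne.symm hy.2.1, fun h => hx.2.2.2 h.symm, fun h => hy.2.2.2 h.symm⟩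
  have huK : u ∈ KS G u x y := Reachable.refl u
  have hvK : v ∈ KS G u x y := Adj.reachable ⟨huv, hu, hv⟩
  have hKM : KS G u x y ⊆ Mset G x y := KS_sub G hu
  have hbM : b ∉ Mset G x y := fun h => h.2.2.2 hyb
  have hbK : b ∉ KS G u x y := fun h => hbM (hKM h)
  have haM : a ∉ Mset G x y := fun h => h.2.2.1 hax.symm
  have haK : a ∉ KS G u x y := fun h => haM (hKM h)
  have hMcard : ∀ p q : V, (Mset G p q).ncard ≤ Fintype.card V := by
    intro p q
    have := Set.ncard_le_ncard (Set.subset_univ (Mset G p q)) Set.finite_univ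
    rwa [Set.ncard_univ, Nat.card_eq_fintype_card] at this
  -- the key closure property from potential maximality
  have key : ∀ p q : V, G.Adj p q → p ∈ Mset G u v → q ∈ Mset G u v →
      (∀ w ∈ KS G u x y, w ∈ Mset G p q) →
      ∀ z w, w ∈ KS G u x y → G.Adj z w → z ∈ Mset G p q → z ∈ KS G u x y := by
    intro p q hpq hp hq hKsub z w hwK hzw hzM
    by_contra hzK
    have h1 : KS G u x y ⊆ KS G u p q := KS_mono G hKsub
    have h2 : z ∈ KS G u p q :=
      Reachable.trans (h1 hwK) (Adj.reachable ⟨hzw.symm, hKsub w hwK, hzM⟩)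
    have hsub : insert z (KS G u x y) ⊆ KS G u p q := by
      intro t ht
      rcases Set.mem_insert_iff.mp ht with rfl | ht
      · exact h2
      · exact h1 ht
    have hlt : (KS G u x y).ncard < (KS G u p q).ncard :=
      lt_of_lt_of_le (Set.ncard_lt_ncard (Set.ssubset_insert hzK) (Set.toFinite _))
        (Set.ncard_le_ncard hsub (Set.toFinite _))
    have hle := hmax p q hpq hp hq
    rw [Nval, Nval] at hle
    have hstep : ((KS G u x y).ncard + 1) * (Fintype.card V + 1) ≤
        (KS G u p q).ncard * (Fintype.card V + 1) := Nat.mul_le_mul_right _ hlt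
    have hexp : ((KS G u x y).ncard + 1) * (Fintype.card V + 1) =
        (KS G u x y).ncard * (Fintype.card V + 1) + (Fintype.card V + 1) := by ring
    have hM2 := hMcard x y
    linarith
  -- first candidate pair (y, b)
  have hbuv : b ∈ Mset G u v :=
    ⟨fun h => hbK (h ▸ huK), fun h => hbK (h ▸ hvK),
      fun h => hKb u huK h.symm, fun h => hKb v hvK h.symm⟩
  have hKsub_yb : ∀ w ∈ KS G u x y, w ∈ Mset G y b := fun w hw =>
    ⟨(hKM hw).2.1, fun h => hbK (h ▸ hw), (hKM hw).2.2.2, hKb w hw⟩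
  -- a is also not adjacent to K
  have hKa : ∀ w ∈ KS G u x y, ¬G.Adj a w := by
    intro w hw h
    have haMyb : a ∈ Mset G y b :=
      ⟨hane, habne, fun h' => hnay h'.symm, fun h' => hnab h'.symm⟩
    exact haK (key y b hyb hy hbuv hKsub_yb a w hw h haMyb)
  have hauv : a ∈ Mset G u v :=
    ⟨fun h => haK (h ▸ huK), fun h => haK (h ▸ hvK),
      fun h => hKa u huK h.symm, fun h => hKa v hvK h.symm⟩
  have hKsub_xa : ∀ w ∈ KS G u x y, w ∈ Mset G x a := fun w hw =>
    ⟨(hKM hw).1, fun h => haK (h ▸ hw), (hKM hw).2.2.1, hKa w hw⟩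
  -- b has a neighbour outside N[{x,y}]
  have hZb : ∃ c, G.Adj b c ∧ c ∈ Mset G x y := by
    by_contra hcon
    push_neg at hcon
    have hsubM : insert a (Mset G x y) ⊆ Mset G y b := by
      intro t ht
      rcases Set.mem_insert_iff.mp ht with rfl | ht
      · exact ⟨hane, habne, fun h => hnay h.symm, fun h => hnab h.symm⟩
      · exact ⟨ht.2.1, fun h => hbM (h ▸ ht), ht.2.2.2, fun h => hcon t h ht⟩
    have hMlt : (Mset G x y).ncard < (Mset G y b).ncard :=
      lt_of_lt_of_le (Set.ncard_lt_ncard (Set.ssubset_insert haM) (Set.toFinite _))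
        (Set.ncard_le_ncard hsubM (Set.toFinite _))
    have hKle : (KS G u x y).ncard ≤ (KS G u y b).ncard :=
      Set.ncard_le_ncard (KS_mono G hKsub_yb) (Set.toFinite _)
    have hle := hmax y b hyb hy hbuv
    rw [Nval, Nval] at hle
    have hstep : (KS G u x y).ncard * (Fintype.card V + 1) ≤
        (KS G u y b).ncard * (Fintype.card V + 1) := Nat.mul_le_mul_right _ hKle
    linarith
  obtain ⟨c, hbc, hcM⟩ := hZb
  have hcK : c ∉ KS G u x y := fun h => hKb c h hbc
  -- a has a neighbour outside N[{x,y}]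
  have hZa : ∃ c', G.Adj a c' ∧ c' ∈ Mset G x y := by
    by_contra hcon
    push_neg at hcon
    have hsubM : insert b (Mset G x y) ⊆ Mset G x a := by
      intro t ht
      rcases Set.mem_insert_iff.mp ht with rfl | ht
      · exact ⟨hbne, Ne.symm habne, hnxb, hnab⟩
      · exact ⟨ht.1, fun h => haM (h ▸ ht), ht.2.2.1, fun h => hcon t h ht⟩
    have hMlt : (Mset G x y).ncard < (Mset G x a).ncard :=
      lt_of_lt_of_le (Set.ncard_lt_ncard (Set.ssubset_insert hbM) (Set.toFinite _))
        (Set.ncard_le_ncard hsubM (Set.toFinite _))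
    have hKle : (KS G u x y).ncard ≤ (KS G u x a).ncard :=
      Set.ncard_le_ncard (KS_mono G hKsub_xa) (Set.toFinite _)
    have hle := hmax x a hax.symm hx hauv
    rw [Nval, Nval] at hle
    have hstep : (KS G u x y).ncard * (Fintype.card V + 1) ≤
        (KS G u x a).ncard * (Fintype.card V + 1) := Nat.mul_le_mul_right _ hKle
    linarith
  obtain ⟨c', hac', hc'M⟩ := hZa
  have hc'K : c' ∉ KS G u x y := fun h => hKa c' h hac'
  -- pairwise relations among a, b, c, c'
  have hnac : ¬G.Adj a c := fun h =>
    hnocomp ⟨c, c, h, hbc, hcM, hcM, Reachable.refl _⟩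
  have hnbc' : ¬G.Adj b c' := fun h =>
    hnocomp ⟨c', c', hac', h, hc'M, hc'M, Reachable.refl _⟩
  have hncc' : ¬G.Adj c c' := fun h =>
    hnocomp ⟨c', c, hac', hbc, hc'M, hcM, Adj.reachable ⟨h.symm, hc'M, hcM⟩⟩
  have hcc'ne : c ≠ c' := fun h => hnac (by rw [h]; exact hac')
  have hacne : a ≠ c := fun h => haM (h ▸ hcM)
  have hbc'ne : b ≠ c' := fun h => hbM (h ▸ hc'M)
  have hbcne : b ≠ c := hbc.ne
  have hac'ne : a ≠ c' := hac'.ne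
  -- candidate pair (b, c)
  have hcuv : c ∈ Mset G u v := by
    refine ⟨fun h => hcK (h ▸ huK), fun h => hcK (h ▸ hvK), fun h => hcK ?_, fun h => hcK ?_⟩
    · exact Adj.reachable ⟨h, hu, hcM⟩
    · exact Reachable.trans hvK (Adj.reachable ⟨h, hv, hcM⟩)
  have hKsub_bc : ∀ w ∈ KS G u x y, w ∈ Mset G b c := by
    intro w hw
    refine ⟨fun h => hbK (h ▸ hw), fun h => hcK (h ▸ hw), hKb w hw, fun h => hcK ?_⟩
    exact Reachable.trans hw (Adj.reachable ⟨h.symm, hKM hw, hcM⟩)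
  -- recursion into G - K
  set Kc : Set V := (KS G u x y)ᶜ with hKc
  have hbKc : b ∈ Kc := hbK
  have hcKc : c ∈ Kc := hcK
  have haKc : a ∈ Kc := haK
  have hc'Kc : c' ∈ Kc := hc'K
  have hcardlt : (RG G Kc).edgeSet.ncard ≤ n := by
    have hss : (RG G Kc).edgeSet ⊂ G.edgeSet := by
      constructor
      · exact edgeSet_mono (RG_le G Kc)
      · intro hsub
        have huvmem : s(u, v) ∈ (RG G Kc).edgeSet := hsub ((G.mem_edgeSet).mpr huv)
        have : (RG G Kc).Adj u v := (RG G Kc).mem_edgeSet.mp huvmem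
        exact this.2.1 huK
    have := Set.ncard_lt_ncard hss (Set.toFinite _)
    omega
  have hrec := ih (RG G Kc) b c hcardlt ⟨hbc, hbKc, hcKc⟩
    ⟨a, c', ⟨hbc, hbKc, hcKc⟩, ⟨hac', haKc, hc'Kc⟩, Ne.symm habne, hbc'ne, Ne.symm hacne,
      hcc'ne, fun h => hnab h.1.symm, fun h => hnbc' h.1, fun h => hnac h.1.symm,
      fun h => hncc' h.1⟩
  obtain ⟨p, q, hind', havoid'⟩ := hrec
  obtain ⟨_, hpq', hbpne, hbqne, hcpne, hcqne, hbp, hbq, hcp, hcq⟩ := hind'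
  have hpqG : G.Adj p q := hpq'.1
  have hpK : p ∉ KS G u x y := hpq'.2.1
  have hqK : q ∉ KS G u x y := hpq'.2.2
  have hnbp : ¬G.Adj b p := fun h => hbp ⟨h, hbKc, hpq'.2.1⟩
  have hnbq : ¬G.Adj b q := fun h => hbq ⟨h, hbKc, hpq'.2.2⟩
  have hncp : ¬G.Adj c p := fun h => hcp ⟨h, hcKc, hpq'.2.1⟩
  have hncq : ¬G.Adj c q := fun h => hcq ⟨h, hcKc, hpq'.2.2⟩
  have hpnK : ∀ z, G.Adj p z → z ∈ Kc := by
    intro z hz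
    by_contra hzK
    rw [hKc, Set.notMem_compl_iff] at hzK
    refine hpK (key b c hbc hbuv hcuv hKsub_bc p z hzK hz ?_)
    exact ⟨Ne.symm hbpne, Ne.symm hcpne, hnbp, hncp⟩
  have hqnK : ∀ z, G.Adj q z → z ∈ Kc := by
    intro z hz
    by_contra hzK
    rw [hKc, Set.notMem_compl_iff] at hzK
    refine hqK (key b c hbc hbuv hcuv hKsub_bc q z hzK hz ?_)
    exact ⟨Ne.symm hbqne, Ne.symm hcqne, hnbq, hncq⟩
  have havoidG : AvoidableEdge G p q :=
    lift_avoidable_s16 hpnK hqnK hpq'.2.1 hpq'.2.2 havoid'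
  refine ⟨p, q, indep_of_mem huv hpqG ?_ ?_, havoidG⟩
  · exact ⟨fun h => hpK (h ▸ huK), fun h => hpK (h ▸ hvK),
      fun h => (hpnK u h.symm) huK, fun h => (hpnK v h.symm) hvK⟩
  · exact ⟨fun h => hqK (h ▸ huK), fun h => hqK (h ▸ hvK),
      fun h => (hqnK u h.symm) huK, fun h => (hqnK v h.symm) hvK⟩

private lemma main_ind [Fintype V] : ∀ (n : ℕ) (G : SimpleGraph V) (u v : V),
    G.edgeSet.ncard ≤ n → G.Adj u v → (∃ x y, IndepEdges G u v x y) →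
    ∃ x y, IndepEdges G u v x y ∧ AvoidableEdge G x y := by
  intro n
  induction n with
  | zero =>
    intro G u v hcard huv _
    exfalso
    have hpos : 0 < G.edgeSet.ncard :=
      (Set.ncard_pos (Set.toFinite _)).mpr ⟨s(u, v), (G.mem_edgeSet).mpr huv⟩
    omega
  | succ n ih =>
    intro G u v hcard huv hnu
    classical
    -- choose the candidate pair maximizing the potential
    let cnd : Finset (V × V) := Finset.univ.filter
      (fun e => G.Adj e.1 e.2 ∧ e.1 ∈ Mset G u v ∧ e.2 ∈ Mset G u v)
    have hcnd_ne : cnd.Nonempty := by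
      obtain ⟨x0, y0, h0⟩ := hnu
      refine ⟨(x0, y0), Finset.mem_filter.mpr ⟨Finset.mem_univ _, h0.2.1, ?_, ?_⟩⟩
      · exact ⟨Ne.symm h0.2.2.1, Ne.symm h0.2.2.2.2.1, h0.2.2.2.2.2.2.1, h0.2.2.2.2.2.2.2.2.1⟩
      · exact ⟨Ne.symm h0.2.2.2.1, Ne.symm h0.2.2.2.2.2.1, h0.2.2.2.2.2.2.2.1,
          h0.2.2.2.2.2.2.2.2.2⟩
    obtain ⟨⟨x, y⟩, hxy_mem, hxy_max⟩ :=
      Finset.exists_max_image cnd (fun e => Nval G u e.1 e.2) hcnd_ne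
    obtain ⟨_, hxy, hx, hy⟩ := Finset.mem_filter.mp hxy_mem
    have hmax : ∀ p q, G.Adj p q → p ∈ Mset G u v → q ∈ Mset G u v →
        Nval G u p q ≤ Nval G u x y := by
      intro p q h1 h2 h3
      exact hxy_max (p, q) (Finset.mem_filter.mpr ⟨Finset.mem_univ _, h1, h2, h3⟩)
    by_cases hA : AvoidableEdge G x y
    · exact ⟨x, y, indep_of_mem huv hxy hx hy, hA⟩
    · rw [AvoidableEdge] at hA
      push_neg at hA
      obtain ⟨a, b, hax, hyb, hane, hbne, habne, hnay, hnxb, hnab, hnocycle⟩ := hA hxy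
      have hu : u ∈ Mset G x y :=
        ⟨Ne.symm hx.1, Ne.symm hy.1, fun h => hx.2.2.1 h.symm, fun h => hy.2.2.1 h.symm⟩
      have hv : v ∈ Mset G x y :=
        ⟨Ne.symm hx.2.1, Ne.symm hy.2.1, fun h => hx.2.2.2 h.symm, fun h => hy.2.2.2 h.symm⟩
      have huK : u ∈ KS G u x y := Reachable.refl u
      have hKM : KS G u x y ⊆ Mset G x y := KS_sub G hu
      have hnocomp : ¬∃ z z', G.Adj a z ∧ G.Adj b z' ∧ z ∈ Mset G x y ∧ z' ∈ Mset G x y ∧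
          (RG G (Mset G x y)).Reachable z z' := by
        rintro ⟨z, z', haz, hbz', hz, hz', hr⟩
        obtain ⟨c, hic, e1, e2, e3⟩ :=
          cycle_constr hxy hax hyb hnay hnxb hnab hane hbne habne haz hbz' hz hz' hr
        exact hnocycle c hic e1 e2 e3
      by_cases hKbsees : ∀ w ∈ KS G u x y, ¬G.Adj b w
      · exact core ih hcard huv hxy hx hy hmax hax hyb hane hbne habne hnay hnxb hnab
          hnocomp hKbsees
      · -- then a is not adjacent to K, and we use the symmetric version
        push_neg at hKbsees
        obtain ⟨w0, hw0K, hbw0⟩ := hKbsees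
        have hKasees : ∀ w ∈ KS G u x y, ¬G.Adj a w := by
          intro w hw haw
          refine hnocomp ⟨w, w0, haw, hbw0, hKM hw, hKM hw0K, ?_⟩
          exact Reachable.trans (Reachable.symm hw) hw0K
        have hmax' : ∀ p q, G.Adj p q → p ∈ Mset G u v → q ∈ Mset G u v →
            Nval G u p q ≤ Nval G u y x := by
          intro p q h1 h2 h3
          rw [Nval_comm G u y x]
          exact hmax p q h1 h2 h3
        have hnocomp' : ¬∃ z z', G.Adj b z ∧ G.Adj a z' ∧ z ∈ Mset G y x ∧
            z' ∈ Mset G y x ∧ (RG G (Mset G y x)).Reachable z z' := by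
          rw [Mset_comm]
          rintro ⟨z, z', hbz, haz', hz, hz', hr⟩
          exact hnocomp ⟨z', z, haz', hbz, hz', hz, Reachable.symm hr⟩
        have hKasees' : ∀ w ∈ KS G u y x, ¬G.Adj a w := by
          rw [KS_comm]
          exact hKasees
        exact core ih hcard huv hxy.symm hy hx hmax' hyb.symm hax.symm hbne hane
          (Ne.symm habne) (fun h => hnxb h.symm) (fun h => hnay h.symm)
          (fun h => hnab h.symm) hnocomp' hKasees'

end AvoidProof

/-- For every finite graph `G` and every non-universal edge `uv` (i.e. some edge of `G`
is independent of it), there is an edge independent of `uv` that is avoidable in `G`. -/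
theorem stmt_16 {V : Type*} [Fintype V] (G : SimpleGraph V) (u v : V) (huv : G.Adj u v)
    (hnu : ∃ x y : V, IndepEdges G u v x y) :
    ∃ x y : V, IndepEdges G u v x y ∧ AvoidableEdge G x y :=
  main_ind G.edgeSet.ncard G u v le_rfl huv hnu
end

section
/- Every graph with at least one edge has an avoidable edge; every graph with at least two edges has at least two distinct avoidable edges. -/
open SimpleGraph

set_option linter.unusedSectionVars false

namespace AvoidHelp

variable {V : Type*} {G : SimpleGraph V}

/-- Reachability within a vertex set `T`: there is a walk all of whose vertices lie in `T`. -/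
def ReachIn (G : SimpleGraph V) (T : Set V) (x y : V) : Prop :=
  ∃ w : G.Walk x y, ∀ v ∈ w.support, v ∈ T

lemma ReachIn.start_mem {T : Set V} {x y : V} (h : ReachIn G T x y) : x ∈ T := by
  obtain ⟨w, hw⟩ := h; exact hw _ w.start_mem_support

lemma ReachIn.end_mem {T : Set V} {x y : V} (h : ReachIn G T x y) : y ∈ T := by
  obtain ⟨w, hw⟩ := h; exact hw _ w.end_mem_support

lemma ReachIn.refl {T : Set V} {x : V} (hx : x ∈ T) : ReachIn G T x x :=
  ⟨SimpleGraph.Walk.nil, by simp [hx]⟩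

lemma ReachIn.symm {T : Set V} {x y : V} (h : ReachIn G T x y) : ReachIn G T y x := by
  obtain ⟨w, hw⟩ := h
  refine ⟨w.reverse, ?_⟩
  intro v hv
  rw [SimpleGraph.Walk.support_reverse] at hv
  exact hw v (List.mem_reverse.mp hv)

lemma ReachIn.trans {T : Set V} {x y z : V} (h : ReachIn G T x y) (h' : ReachIn G T y z) :
    ReachIn G T x z := by
  obtain ⟨w, hw⟩ := h; obtain ⟨w', hw'⟩ := h'
  refine ⟨w.append w', ?_⟩
  intro v hv
  rcases (SimpleGraph.Walk.mem_support_append_iff _ _).mp hv with h1 | h1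
  · exact hw v h1
  · exact hw' v h1

lemma ReachIn.step {T : Set V} {x y : V} (hx : x ∈ T) (hy : y ∈ T) (hadj : G.Adj x y) :
    ReachIn G T x y :=
  ⟨SimpleGraph.Walk.cons hadj SimpleGraph.Walk.nil, by
    intro v hv; simp at hv; rcases hv with rfl | rfl <;> assumption⟩

lemma ReachIn.mono {T T' : Set V} (hT : T ⊆ T') {x y : V} (h : ReachIn G T x y) :
    ReachIn G T' x y := by
  obtain ⟨w, hw⟩ := h; exact ⟨w, fun v hv => hT (hw v hv)⟩

/-- A length-one walk from `a` to `b` has `s(a,b)` among its edges. -/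
lemma edge_mem_of_length_one {a b : V} (w : G.Walk a b) (h : w.length = 1) :
    s(a, b) ∈ w.edges := by
  cases w with
  | nil => simp at h
  | cons hadj w' =>
    cases w' with
    | nil => simp
    | cons h2 w'' => simp [SimpleGraph.Walk.length_cons] at h

variable [DecidableEq V]

lemma length_take_add_drop {x y a : V} (w : G.Walk x y) (ha : a ∈ w.support) :
    (w.takeUntil a ha).length + (w.dropUntil a ha).length = w.length := by
  conv_rhs => rw [← w.take_spec ha]
  rw [SimpleGraph.Walk.length_append]

/-- Chord surgery: a walk with a chord can be shortened. -/
lemma exists_shorter_of_chord {T : Set V} {x y : V} (w : G.Walk x y)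
    (hsup : ∀ v ∈ w.support, v ∈ T) {a b : V} (ha : a ∈ w.support) (hb : b ∈ w.support)
    (hadj : G.Adj a b) (hchord : s(a, b) ∉ w.edges) :
    ∃ w' : G.Walk x y, (∀ v ∈ w'.support, v ∈ T) ∧ w'.length < w.length := by
  classical
  have hab : a ≠ b := hadj.ne
  -- decompose w at a
  have hsplit := w.take_spec ha
  set t₁ := w.takeUntil a ha with ht₁
  set d₁ := w.dropUntil a ha with hd₁
  have hlen : t₁.length + d₁.length = w.length := length_take_add_drop w ha
  have hbmem : b ∈ t₁.support ∨ b ∈ d₁.support := by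
    have := hb
    rw [← hsplit] at this
    rcases (SimpleGraph.Walk.mem_support_append_iff _ _).mp this with h | h
    · exact Or.inl h
    · exact Or.inr h
  rcases hbmem with hbt | hbd
  · -- b occurs before a : new walk x → b → a → y
    set t₂ := t₁.takeUntil b hbt with ht₂
    refine ⟨t₂.append (SimpleGraph.Walk.cons hadj.symm d₁), ?_, ?_⟩
    · intro v hv
      rcases (SimpleGraph.Walk.mem_support_append_iff _ _).mp hv with h | h
      · exact hsup v (w.support_takeUntil_subset ha (t₁.support_takeUntil_subset hbt h))
      · rw [SimpleGraph.Walk.support_cons] at h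
        rcases List.mem_cons.mp h with rfl | h
        · exact hsup v (w.support_takeUntil_subset ha (t₁.support_takeUntil_subset hbt
            t₂.end_mem_support))
        · exact hsup v (w.support_dropUntil_subset ha h)
    · rw [SimpleGraph.Walk.length_append, SimpleGraph.Walk.length_cons]
      have hsum : t₂.length + (t₁.dropUntil b hbt).length = t₁.length :=
        length_take_add_drop t₁ hbt
      have hd2 : (t₁.dropUntil b hbt).length ≥ 2 := by
        by_contra hlt
        push_neg at hlt
        interval_cases h : (t₁.dropUntil b hbt).length
        · exact hab (SimpleGraph.Walk.eq_of_length_eq_zero h).symm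
        · have : s(b, a) ∈ (t₁.dropUntil b hbt).edges :=
            edge_mem_of_length_one _ h
          have : s(b, a) ∈ w.edges := by
            have h1 := t₁.edges_dropUntil_subset hbt this
            exact w.edges_takeUntil_subset ha h1
          rw [Sym2.eq_swap] at this
          exact hchord this
      omega
  · -- b occurs after a : new walk x → a → b → y
    set d₂ := d₁.dropUntil b hbd with hd₂
    refine ⟨t₁.append (SimpleGraph.Walk.cons hadj d₂), ?_, ?_⟩
    · intro v hv
      rcases (SimpleGraph.Walk.mem_support_append_iff _ _).mp hv with h | h
      · exact hsup v (w.support_takeUntil_subset ha h)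
      · rw [SimpleGraph.Walk.support_cons] at h
        rcases List.mem_cons.mp h with rfl | h
        · exact hsup v (w.support_takeUntil_subset ha t₁.end_mem_support)
        · exact hsup v (w.support_dropUntil_subset ha (d₁.support_dropUntil_subset hbd h))
    · rw [SimpleGraph.Walk.length_append, SimpleGraph.Walk.length_cons]
      have hsum : (d₁.takeUntil b hbd).length + d₂.length = d₁.length :=
        length_take_add_drop d₁ hbd
      have hd2 : (d₁.takeUntil b hbd).length ≥ 2 := by
        by_contra hlt
        push_neg at hlt
        interval_cases h : (d₁.takeUntil b hbd).length
        · exact hab (SimpleGraph.Walk.eq_of_length_eq_zero h)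
        · have : s(a, b) ∈ (d₁.takeUntil b hbd).edges :=
            edge_mem_of_length_one _ h
          have : s(a, b) ∈ w.edges := by
            have h1 := d₁.edges_takeUntil_subset hbd this
            exact w.edges_dropUntil_subset ha h1
          exact hchord this
      omega


/-- From reachability within `T` we can extract an induced (chordless) path within `T`. -/
lemma exists_induced_path {T : Set V} {x y : V} (h : ReachIn G T x y) :
    ∃ p : G.Walk x y, p.IsPath ∧ (∀ v ∈ p.support, v ∈ T) ∧
      ∀ a b : V, a ∈ p.support → b ∈ p.support → G.Adj a b → s(a, b) ∈ p.edges := by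
  classical
  obtain ⟨w0, hw0⟩ := h
  suffices H : ∀ n : ℕ, ∀ w : G.Walk x y, w.length ≤ n → (∀ v ∈ w.support, v ∈ T) →
      ∃ p : G.Walk x y, p.IsPath ∧ (∀ v ∈ p.support, v ∈ T) ∧
        ∀ a b : V, a ∈ p.support → b ∈ p.support → G.Adj a b → s(a, b) ∈ p.edges by
    exact H w0.length w0 le_rfl hw0
  intro n
  induction n using Nat.strong_induction_on with
  | _ n ih =>
    intro w hlen hsup
    set p := w.bypass with hp
    have hppath : p.IsPath := w.bypass_isPath
    have hpsup : ∀ v ∈ p.support, v ∈ T := fun v hv => hsup v (w.support_bypass_subset hv)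
    by_cases hch : ∃ a b : V, a ∈ p.support ∧ b ∈ p.support ∧ G.Adj a b ∧ s(a, b) ∉ p.edges
    · obtain ⟨a, b, ha, hb, hadj, hchord⟩ := hch
      obtain ⟨w', hw'sup, hw'len⟩ := exists_shorter_of_chord p hpsup ha hb hadj hchord
      have hlt : w'.length < n :=
        lt_of_lt_of_le hw'len (le_trans (w.length_bypass_le) hlen)
      exact ih w'.length hlt w' le_rfl hw'sup
    · push_neg at hch
      exact ⟨p, hppath, hpsup, fun a b ha hb hadj => hch a b ha hb hadj⟩

/-- The closing lemma: an induced `P₄` `x - z - z' - y` together with a connection from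
`x` to `y` avoiding the closed neighbourhoods of `z` and `z'` yields an induced cycle. -/
lemma exists_closing_cycle {x z z' y : V} {T : Set V}
    (hxz : G.Adj x z) (hzz' : G.Adj z z') (hz'y : G.Adj z' y)
    (hxz' : ¬ G.Adj x z') (hzy : ¬ G.Adj z y) (hxy : ¬ G.Adj x y)
    (hxnez' : x ≠ z') (hynez : y ≠ z)
    (hT : ∀ v ∈ T, v = x ∨ v = y ∨ (¬ G.Adj z v ∧ ¬ G.Adj z' v ∧ v ≠ z ∧ v ≠ z'))
    (hreach : ReachIn G T x y) :
    ∃ c : G.Walk z z, IsInducedCycle G c ∧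
      s(x, z) ∈ c.edges ∧ s(z, z') ∈ c.edges ∧ s(z', y) ∈ c.edges := by
  classical
  obtain ⟨p, hpath, hsup, hind⟩ := exists_induced_path hreach
  -- basic nonmemberships
  have hzns : z ∉ p.support := by
    intro hz
    rcases hT z (hsup z hz) with h | h | h
    · exact G.loopless.irrefl x (by rw [h] at hxz; exact hxz)
    · exact hynez h.symm
    · exact h.2.2.1 rfl
  have hz'ns : z' ∉ p.support := by
    intro hz'
    rcases hT z' (hsup z' hz') with h | h | h
    · exact hxnez' h.symm
    · exact (G.adj_symm hz'y).ne (by rw [h])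
    · exact h.2.2.2 rfl
  -- the cycle
  let w₂ : G.Walk y z := p.reverse.append (SimpleGraph.Walk.cons hxz SimpleGraph.Walk.nil)
  let q : G.Walk z' z := SimpleGraph.Walk.cons hz'y w₂
  let c : G.Walk z z := SimpleGraph.Walk.cons hzz' q
  have hqsup : q.support = z' :: (p.support.reverse ++ [z]) := by
    simp [q, w₂, SimpleGraph.Walk.support_cons, SimpleGraph.Walk.support_append,
      SimpleGraph.Walk.support_reverse]
  have hcsup : c.support = z :: q.support := by
    simp [c, SimpleGraph.Walk.support_cons]
  have hcedges : c.edges = s(z, z') :: s(z', y) :: (p.edges.reverse ++ [s(x, z)]) := by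
    simp [c, q, w₂, SimpleGraph.Walk.edges_cons, SimpleGraph.Walk.edges_append,
      SimpleGraph.Walk.edges_reverse]
  have hmemc : ∀ a, a ∈ c.support ↔ (a = z ∨ a = z' ∨ a ∈ p.support) := by
    intro a
    rw [hcsup, hqsup]
    simp only [List.mem_cons, List.mem_append, List.mem_reverse, List.mem_singleton]
    tauto
  have hmemedge : ∀ e, e ∈ c.edges ↔
      (e = s(z, z') ∨ e = s(z', y) ∨ e ∈ p.edges ∨ e = s(x, z)) := by
    intro e
    rw [hcedges]
    simp only [List.mem_cons, List.mem_append, List.mem_reverse, List.mem_singleton]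
    tauto
  -- cycle property
  have hqpath : q.IsPath := by
    rw [SimpleGraph.Walk.isPath_def, hqsup]
    have hnodup : p.support.Nodup := (SimpleGraph.Walk.isPath_def p).mp hpath
    simp only [List.nodup_cons, List.mem_append, List.mem_reverse, List.mem_singleton]
    refine ⟨?_, ?_⟩
    · rintro (h | h)
      · exact hz'ns h
      · exact (hzz'.ne h.symm).elim
    · rw [List.nodup_append]
      refine ⟨List.nodup_reverse.mpr hnodup, List.nodup_singleton z, ?_⟩
      intro a ha hb
      rw [List.mem_reverse] at ha
      intro hb' hab
      rw [List.mem_singleton] at hb'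
      rw [hab, hb'] at ha
      exact hzns ha
  have hcyc : c.IsCycle := by
    rw [SimpleGraph.Walk.cons_isCycle_iff]
    refine ⟨hqpath, ?_⟩
    intro hmem
    have : s(z, z') ∈ q.edges := hmem
    have hq : q.edges = s(z', y) :: (p.edges.reverse ++ [s(x, z)]) := by
      simp [q, w₂, SimpleGraph.Walk.edges_cons, SimpleGraph.Walk.edges_append,
        SimpleGraph.Walk.edges_reverse]
    rw [hq] at this
    simp only [List.mem_cons, List.mem_append, List.mem_reverse, List.mem_singleton] at this
    rcases this with h | h | h
    · rw [Sym2.eq_iff] at h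
      rcases h with ⟨h1, h2⟩ | ⟨h1, h2⟩
      · exact hzz'.ne h1
      · exact hynez h1.symm
    · have := p.fst_mem_support_of_mem_edges h
      exact hzns this
    · rw [Sym2.eq_iff] at h
      rcases h with (⟨h1, h2⟩ | ⟨h3, h4⟩) | h5
      · exact hzz'.ne h2.symm
      · exact hxnez' h4.symm
      · simp at h5
  -- inducedness
  have hindc : ∀ a ∈ c.support, ∀ b ∈ c.support, G.Adj a b → s(a, b) ∈ c.edges := by
    have key : ∀ a b : V, a = z ∨ a = z' ∨ a ∈ p.support → b = z ∨ b = z' ∨ b ∈ p.support →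
        G.Adj a b → (s(a, b) = s(z, z') ∨ s(a, b) = s(z', y) ∨ s(a, b) ∈ p.edges ∨
          s(a, b) = s(x, z)) := by
      have main : ∀ a b : V, (a = z ∨ a = z') → b ∈ p.support → G.Adj a b →
          (s(a, b) = s(z, z') ∨ s(a, b) = s(z', y) ∨ s(a, b) ∈ p.edges ∨
            s(a, b) = s(x, z)) := by
        rintro a b (rfl | rfl) hb hadj
        · -- a = z
          rcases hT b (hsup b hb) with rfl | rfl | hB
          · right; right; right; rw [Sym2.eq_swap]
          · exact (hzy hadj).elim
          · exact (hB.1 hadj).elim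
        · -- a = z'
          rcases hT b (hsup b hb) with rfl | rfl | hB
          · exact (hxz' (hadj.symm)).elim
          · right; left; rfl
          · exact (hB.2.1 hadj).elim
      rintro a b (rfl | rfl | ha) (rfl | rfl | hb) hadj
      · exact (G.loopless.irrefl _ hadj).elim
      · left; rfl
      · exact main _ _ (Or.inl rfl) hb hadj
      · left; rw [Sym2.eq_swap]
      · exact (G.loopless.irrefl _ hadj).elim
      · exact main _ _ (Or.inr rfl) hb hadj
      · rw [Sym2.eq_swap]; exact main _ _ (Or.inl rfl) ha hadj.symm
      · rw [Sym2.eq_swap]; exact main _ _ (Or.inr rfl) ha hadj.symm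
      · right; right; left; exact hind a b ha hb hadj
    intro a ha b hb hadj
    rw [hmemedge]
    exact key a b ((hmemc a).mp ha) ((hmemc b).mp hb) hadj
  refine ⟨c, ⟨hcyc, hindc⟩, ?_, ?_, ?_⟩
  · rw [hmemedge]; right; right; right; rfl
  · rw [hmemedge]; left; rfl
  · rw [hmemedge]; right; left; rfl


/-- Closed neighbourhood of a set. -/
def Ncl (G : SimpleGraph V) (S : Set V) : Set V := {v | v ∈ S ∨ ∃ s ∈ S, G.Adj s v}

/-- Connected component of `c₀` inside the allowed region `T`. -/
def CompIn (G : SimpleGraph V) (T : Set V) (c₀ : V) : Set V := {w | ReachIn G T c₀ w}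

/-- Vertices outside `N[u] ∪ N[v]` all of whose neighbours lie inside it. -/
def Dset (G : SimpleGraph V) (u v : V) : Set V :=
  {q | q ∉ Ncl G {u, v} ∧ ∀ r, G.Adj q r → r ∈ Ncl G {u, v}}

/-- Lexicographic-style measure on edges. -/
noncomputable def mu (G : SimpleGraph V) [Fintype V] (u v : V) : ℕ :=
  (Ncl G {u, v} ∪ Dset G u v).ncard * (Fintype.card V + 1) + (Ncl G {u, v}).ncard

lemma mem_Ncl_pair {a b v : V} :
    v ∈ Ncl G {a, b} ↔ v = a ∨ v = b ∨ G.Adj a v ∨ G.Adj b v := by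
  simp only [Ncl, Set.mem_setOf_eq, Set.mem_insert_iff, Set.mem_singleton_iff]
  constructor
  · rintro (h | h) 
    · tauto
    · obtain ⟨s, (rfl | rfl), h2⟩ := h <;> tauto
  · rintro (rfl | rfl | h | h)
    · tauto
    · tauto
    · exact Or.inr ⟨a, by tauto⟩
    · exact Or.inr ⟨b, by tauto⟩

lemma mem_Ncl_single {a v : V} : v ∈ Ncl G {a} ↔ v = a ∨ G.Adj a v := by
  simp only [Ncl, Set.mem_setOf_eq, Set.mem_singleton_iff]
  constructor
  · rintro (h | ⟨s, rfl, h2⟩) <;> tauto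
  · rintro (rfl | h)
    · tauto
    · exact Or.inr ⟨a, rfl, h⟩

lemma Ncl_pair_comm {a b : V} : Ncl G {a, b} = Ncl G {b, a} := by
  rw [Set.pair_comm]

lemma Dset_comm {a b : V} : Dset G a b = Dset G b a := by
  unfold Dset; rw [Set.pair_comm]

lemma mu_comm [Fintype V] {a b : V} : mu G a b = mu G b a := by
  unfold mu; rw [Set.pair_comm, Dset_comm]

lemma compIn_subset {T : Set V} {c₀ : V} : CompIn G T c₀ ⊆ T := fun _ h => h.end_mem

lemma compIn_self {T : Set V} {c₀ : V} (h : c₀ ∈ T) : c₀ ∈ CompIn G T c₀ := ReachIn.refl h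

lemma compIn_step {T : Set V} {c₀ w n : V} (hw : w ∈ CompIn G T c₀)
    (hadj : G.Adj w n) (hn : n ∈ T) : n ∈ CompIn G T c₀ :=
  hw.trans (ReachIn.step hw.end_mem hn hadj)

lemma ncard_le_fintype [Fintype V] (s : Set V) : s.ncard ≤ Fintype.card V := by
  have := Set.ncard_le_ncard (Set.subset_univ s) Set.finite_univ
  rwa [Set.ncard_univ, Nat.card_eq_fintype_card] at this

/-- If a walk inside `T'` starts in a set `C` and ends outside it, there is a crossing
edge, and the crossing endpoint is reachable from the start. -/
lemma exists_exit {T' C : Set V} :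
    ∀ {a b : V} (w : G.Walk a b), (∀ v ∈ w.support, v ∈ T') → a ∈ C → b ∉ C →
      ∃ c' v', c' ∈ C ∧ v' ∉ C ∧ G.Adj c' v' ∧ v' ∈ T' ∧ ReachIn G T' a v' := by
  intro a b w
  induction w with
  | nil => intro _ ha hb; exact (hb ha).elim
  | @cons u m b hadj w' ih =>
    intro hsup ha hb
    have hmT' : m ∈ T' := hsup m (by simp [SimpleGraph.Walk.support_cons])
    have huT' : u ∈ T' := hsup u (by simp [SimpleGraph.Walk.support_cons])
    by_cases hmC : m ∈ C
    · obtain ⟨c', v', h1, h2, h3, h4, h5⟩ :=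
        ih (fun v hv => hsup v (by rw [SimpleGraph.Walk.support_cons]; exact List.mem_cons_of_mem _ hv)) hmC hb
      exact ⟨c', v', h1, h2, h3, h4, (ReachIn.step huT' hmT' hadj).trans h5⟩
    · exact ⟨u, m, ha, hmC, hadj, hmT', ReachIn.step huT' hmT' hadj⟩

/-- Arithmetic for the lexicographic measure. -/
lemma mu_lex_le [Fintype V] {a b c d : V}
    (hsub : (Ncl G {c, d} ∪ Dset G c d).ncard < (Ncl G {a, b} ∪ Dset G a b).ncard) :
    mu G c d < mu G a b := by
  unfold mu
  have h1 : (Ncl G {c, d}).ncard ≤ Fintype.card V := ncard_le_fintype _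
  set N := Fintype.card V
  nlinarith [hsub, h1]

lemma mu_lex_eq [Fintype V] {a b c d : V}
    (hsub : (Ncl G {c, d} ∪ Dset G c d).ncard ≤ (Ncl G {a, b} ∪ Dset G a b).ncard)
    (hge : mu G a b ≤ mu G c d) :
    (Ncl G {a, b}).ncard ≤ (Ncl G {c, d}).ncard := by
  unfold mu at hge
  have h1 : (Ncl G {c, d}).ncard ≤ Fintype.card V := ncard_le_fintype _
  have h2 : (Ncl G {a, b}).ncard ≤ Fintype.card V := ncard_le_fintype _
  set N := Fintype.card V
  nlinarith [hsub, h1, h2, hge]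


section SideAttach

variable [Fintype V]

/-- The core one-sided analysis: for a minimal edge `zz'` of the component `C` and an
induced `P₄` `x - z - z' - y`, either we can already connect `x` to `y` avoiding
`N[z] ∪ N[z']`, or `x` is attached to the region of `S` in `G - (N[z] ∪ N[z'])`. -/
lemma side_attach (S : Set V) (c₀ : V) {z z' : V}
    (hz : z ∈ CompIn G (Ncl G S)ᶜ c₀) (hz' : z' ∈ CompIn G (Ncl G S)ᶜ c₀)
    (hzz' : G.Adj z z')
    (hlocal : ∀ u v q : V, u ∈ CompIn G (Ncl G S)ᶜ c₀ → v ∈ CompIn G (Ncl G S)ᶜ c₀ →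
      G.Adj u v → q ∈ (Ncl G {u, v})ᶜ → CompIn G (Ncl G {u, v})ᶜ q ⊆ CompIn G (Ncl G S)ᶜ c₀ →
      ∀ a b : V, a ∈ CompIn G (Ncl G {u, v})ᶜ q → b ∈ CompIn G (Ncl G {u, v})ᶜ q →
        ¬ G.Adj a b)
    (hmin : ∀ u v : V, u ∈ CompIn G (Ncl G S)ᶜ c₀ → v ∈ CompIn G (Ncl G S)ᶜ c₀ →
      G.Adj u v → mu G z z' ≤ mu G u v)
    {x y : V} (hxz : G.Adj x z) (hz'y : G.Adj z' y) (hxnez' : x ≠ z') (hynez : y ≠ z)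
    (hxyne : x ≠ y) (hnxz' : ¬ G.Adj x z') (hnzy : ¬ G.Adj z y) (hnxy : ¬ G.Adj x y) :
    ReachIn G ({x, y} ∪ (Ncl G {z, z'})ᶜ) x y ∨
      (∃ w, G.Adj x w ∧ w ∈ (Ncl G {z, z'})ᶜ ∧ ∃ s ∈ S, ReachIn G (Ncl G {z, z'})ᶜ w s) := by
  classical
  set T : Set V := (Ncl G S)ᶜ with hT
  set C : Set V := CompIn G T c₀ with hC
  set W : Set V := Ncl G {z, z'} with hW
  set T' : Set V := Wᶜ with hT'
  have hzT : z ∈ T := hz.end_mem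
  have hz'T : z' ∈ T := hz'.end_mem
  -- membership facts for W
  have hzW : z ∈ W := mem_Ncl_pair.mpr (Or.inl rfl)
  have hz'W : z' ∈ W := mem_Ncl_pair.mpr (Or.inr (Or.inl rfl))
  have hxW : x ∈ W := mem_Ncl_pair.mpr (Or.inr (Or.inr (Or.inl hxz.symm)))
  have hyW : y ∈ W := mem_Ncl_pair.mpr (Or.inr (Or.inr (Or.inr hz'y)))
  -- Step A : S avoids W
  have hST' : ∀ s ∈ S, s ∈ T' := by
    intro s hs
    rw [hT', Set.mem_compl_iff]
    intro hsW
    rcases mem_Ncl_pair.mp hsW with rfl | rfl | h | h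
    · exact hzT (Or.inl hs)
    · exact hz'T (Or.inl hs)
    · exact hzT (Or.inr ⟨s, hs, h.symm⟩)
    · exact hz'T (Or.inr ⟨s, hs, h.symm⟩)
  -- neighbours of C-vertices outside T are adjacent to S
  have memClass : ∀ w n : V, w ∈ C → G.Adj w n → n ∉ T → ∃ s ∈ S, G.Adj s n := by
    intro w n hwC hadj hnT
    have : n ∈ Ncl G S := by simpa [hT] using hnT
    rcases this with h | h
    · have hwT : w ∈ T := hwC.end_mem
      rw [hT, Set.mem_compl_iff] at hwT
      exact absurd (Or.inr ⟨n, h, hadj.symm⟩ : w ∈ Ncl G S) hwT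
    · exact h
  -- Step C : components of G − W meeting C but escaping it reach S
  have reachS : ∀ n, n ∈ T' → n ∈ C → ¬ (CompIn G T' n ⊆ C) → ∃ s ∈ S, ReachIn G T' n s := by
    intro n hnT' hnC hnsub
    rw [Set.not_subset] at hnsub
    obtain ⟨v, hvComp, hvC⟩ := hnsub
    obtain ⟨w, hwsup⟩ := hvComp
    obtain ⟨c', v', hc'C, hv'C, hadj, hv'T', hre⟩ := exists_exit w hwsup hnC hvC
    by_cases hv'T : v' ∈ T
    · exact absurd (compIn_step hc'C hadj hv'T) hv'C
    · obtain ⟨s, hs, hsadj⟩ := memClass c' v' hc'C hadj hv'T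
      exact ⟨s, hs, hre.trans (ReachIn.step hv'T' (hST' s hs) hsadj.symm)⟩
  by_cases hxC : x ∈ C
  swap
  · -- x outside C : directly attached
    right
    by_cases hxT : x ∈ T
    · exact absurd (compIn_step hz hxz.symm hxT) hxC
    · obtain ⟨s, hs, hsadj⟩ := memClass z x hz hxz.symm hxT
      exact ⟨s, hsadj.symm, hST' s hs, s, hs, ReachIn.refl (hST' s hs)⟩
  · by_cases hatt : ∃ w, G.Adj x w ∧ w ∈ T' ∧ ∃ s ∈ S, ReachIn G T' w s
    · exact Or.inr hatt
    · -- x not attached: every neighbour outside W is a "bad" dominated vertex in C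
      have hbadall : ∀ n, G.Adj x n → n ∉ W → (n ∈ C ∧ ∀ r, G.Adj n r → r ∈ W) := by
        intro n hadj hnW
        have hnT' : n ∈ T' := hnW
        by_cases hnT : n ∈ T
        · have hnC : n ∈ C := compIn_step hxC hadj hnT
          by_cases hsub : CompIn G T' n ⊆ C
          · refine ⟨hnC, ?_⟩
            intro r hr
            by_contra hrW
            exact hlocal z z' n hz hz' hzz' hnT' hsub n r (compIn_self hnT')
              (compIn_step (compIn_self hnT') hr hrW) hr
          · obtain ⟨s, hs, hre⟩ := reachS n hnT' hnC hsub
            exact absurd ⟨n, hadj, hnT', s, hs, hre⟩ hatt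
        · obtain ⟨s, hs, hsadj⟩ := memClass x n hxC hadj hnT
          exact absurd ⟨n, hadj, hnT', s, hs,
            ReachIn.step hnT' (hST' s hs) hsadj.symm⟩ hatt
      by_cases hdead : ∀ n, G.Adj x n → n ∈ W
      · -- dead case : contradiction with lexicographic minimality
        exfalso
        have hW'sub : Ncl G {x, z} ⊆ W := by
          intro v hv
          rcases mem_Ncl_pair.mp hv with rfl | rfl | h | h
          · exact hxW
          · exact hzW
          · exact hdead v h
          · exact mem_Ncl_pair.mpr (Or.inr (Or.inr (Or.inl h)))
        have hWD'sub : Ncl G {x, z} ∪ Dset G x z ⊆ W ∪ Dset G z z' := by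
          rintro v (hv | hv)
          · exact Or.inl (hW'sub hv)
          · by_cases hvW : v ∈ W
            · exact Or.inl hvW
            · exact Or.inr ⟨hvW, fun r hr => hW'sub (hv.2 r hr)⟩
        have hmin' := hmin x z hxC hz hxz
        have hcard : (Ncl G {x, z} ∪ Dset G x z).ncard ≤ (Ncl G {z, z'} ∪ Dset G z z').ncard :=
          Set.ncard_le_ncard hWD'sub (Set.toFinite _)
        have hle : (Ncl G {z, z'}).ncard ≤ (Ncl G {x, z}).ncard := mu_lex_eq hcard hmin'
        have hEq : Ncl G {x, z} = Ncl G {z, z'} :=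
          Set.eq_of_subset_of_ncard_le hW'sub hle (Set.toFinite _)
        have : y ∈ Ncl G {x, z} := hEq ▸ hyW
        rcases mem_Ncl_pair.mp this with rfl | rfl | h | h
        · exact hxyne rfl
        · exact hynez rfl
        · exact hnxy h
        · exact hnzy h
      · push_neg at hdead
        obtain ⟨q, hxq, hqW⟩ := hdead
        obtain ⟨hqC, hqnb⟩ := hbadall q hxq hqW
        by_cases hqy : G.Adj q y
        · -- connector through the dominated vertex q
          left
          have hxT₀ : x ∈ ({x, y} ∪ T' : Set V) := Or.inl (Or.inl rfl)
          have hyT₀ : y ∈ ({x, y} ∪ T' : Set V) := Or.inl (Or.inr rfl)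
          have hqT₀ : q ∈ ({x, y} ∪ T' : Set V) := Or.inr hqW
          exact (ReachIn.step hxT₀ hqT₀ hxq).trans (ReachIn.step hqT₀ hyT₀ hqy)
        · -- strict decrease of the measure : contradiction
          exfalso
          have hqney : q ≠ y := fun h => hnxy (h ▸ hxq)
          have hqD : q ∈ Dset G z z' := ⟨hqW, hqnb⟩
          have hsub1 : Ncl G {x, q} ⊆ W ∪ Dset G z z' := by
            intro v hv
            rcases mem_Ncl_pair.mp hv with rfl | rfl | h | h
            · exact Or.inl hxW
            · exact Or.inr hqD
            · by_cases hvW : v ∈ W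
              · exact Or.inl hvW
              · exact Or.inr ⟨hvW, (hbadall v h hvW).2⟩
            · exact Or.inl (hqnb v h)
          have hsub2 : Ncl G {x, q} ∪ Dset G x q ⊆ (W ∪ Dset G z z') \ {y} := by
            rintro v (hv | hv)
            · refine ⟨hsub1 hv, ?_⟩
              intro hveq
              rw [Set.mem_singleton_iff] at hveq
              subst hveq
              rcases mem_Ncl_pair.mp hv with h | h | h | h
              · exact hxyne h.symm
              · exact hqney h.symm
              · exact hnxy h
              · exact hqy h
            · obtain ⟨hvW₁, hvnb⟩ := hv
              have hvWD : v ∈ W ∪ Dset G z z' := by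
                by_cases hvW : v ∈ W
                · exact Or.inl hvW
                · refine Or.inr ⟨hvW, ?_⟩
                  intro r hr
                  have hrW₁ : r ∈ Ncl G {x, q} := hvnb r hr
                  by_contra hrW
                  have : r ∈ W ∪ Dset G z z' := hsub1 hrW₁
                  rcases this with h | h
                  · exact hrW h
                  · exact hvW (h.2 v hr.symm)
              refine ⟨hvWD, ?_⟩
              intro hveq
              rw [Set.mem_singleton_iff] at hveq
              subst hveq
              have : z' ∈ Ncl G {x, q} := hvnb z' hz'y.symm
              rcases mem_Ncl_pair.mp this with h | h | h | h
              · exact hxnez' h.symm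
              · exact hqW (h ▸ hz'W)
              · exact hnxz' h
              · exact hqW (mem_Ncl_pair.mpr (Or.inr (Or.inr (Or.inr h.symm))))
          have hylt : (Ncl G {x, q} ∪ Dset G x q).ncard < (W ∪ Dset G z z').ncard := by
            have h1 : (Ncl G {x, q} ∪ Dset G x q).ncard ≤ ((W ∪ Dset G z z') \ {y}).ncard :=
              Set.ncard_le_ncard hsub2 (Set.toFinite _)
            have h2 : ((W ∪ Dset G z z') \ {y}).ncard < (W ∪ Dset G z z').ncard := by
              apply Set.ncard_lt_ncard _ (Set.toFinite _)
              constructor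
              · exact Set.diff_subset
              · intro hsub'
                exact absurd (hsub' (Or.inl hyW)).2 (by simp)
            omega
          exact absurd (hmin x q hxC hqC hxq) (not_le.mpr (mu_lex_le hylt))

/-- Main lemma: every component of `G - N[S]` containing an edge contains an avoidable
edge of `G`. -/
lemma avoidable_in_comp (S : Set V) (c₀ : V)
    (hSconn : ∀ s ∈ S, ∀ t ∈ S, ReachIn G S s t)
    {z z' : V} (hz : z ∈ CompIn G (Ncl G S)ᶜ c₀) (hz' : z' ∈ CompIn G (Ncl G S)ᶜ c₀)
    (hzz' : G.Adj z z') :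
    ∃ u v : V, u ∈ CompIn G (Ncl G S)ᶜ c₀ ∧ v ∈ CompIn G (Ncl G S)ᶜ c₀ ∧
      AvoidableEdge G u v := by
  classical
  suffices H : ∀ n : ℕ, ∀ S : Set V, ∀ c₀ : V,
      (∀ s ∈ S, ∀ t ∈ S, ReachIn G S s t) →
      ∀ z z' : V, z ∈ CompIn G (Ncl G S)ᶜ c₀ → z' ∈ CompIn G (Ncl G S)ᶜ c₀ → G.Adj z z' →
      (CompIn G (Ncl G S)ᶜ c₀).ncard ≤ n →
      ∃ u v : V, u ∈ CompIn G (Ncl G S)ᶜ c₀ ∧ v ∈ CompIn G (Ncl G S)ᶜ c₀ ∧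
        AvoidableEdge G u v by
    exact H (CompIn G (Ncl G S)ᶜ c₀).ncard S c₀ hSconn z z' hz hz' hzz' le_rfl
  intro n
  induction n using Nat.strong_induction_on with
  | _ n ih =>
    intro S c₀ hSconn z z' hz hz' hzz' hcard
    set T : Set V := (Ncl G S)ᶜ with hT
    set C : Set V := CompIn G T c₀ with hC
    by_cases hrec : ∃ u v q : V, u ∈ C ∧ v ∈ C ∧ G.Adj u v ∧ q ∈ (Ncl G {u, v})ᶜ ∧
        CompIn G (Ncl G {u, v})ᶜ q ⊆ C ∧
        ∃ a b : V, a ∈ CompIn G (Ncl G {u, v})ᶜ q ∧ b ∈ CompIn G (Ncl G {u, v})ᶜ q ∧ G.Adj a b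
    · obtain ⟨u, v, q, huC, hvC, huv, hqT, hsub, a, b, haQ, hbQ, hab⟩ := hrec
      have hconn' : ∀ s ∈ ({u, v} : Set V), ∀ t ∈ ({u, v} : Set V),
          ReachIn G ({u, v} : Set V) s t := by
        have humem : u ∈ ({u, v} : Set V) := Or.inl rfl
        have hvmem : v ∈ ({u, v} : Set V) := Or.inr rfl
        rintro s (rfl | rfl) t (rfl | rfl)
        · exact ReachIn.refl humem
        · exact ReachIn.step humem hvmem huv
        · exact ReachIn.step hvmem humem huv.symm
        · exact ReachIn.refl hvmem
      have hlt : (CompIn G (Ncl G {u, v})ᶜ q).ncard < C.ncard := by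
        apply Set.ncard_lt_ncard _ (Set.toFinite _)
        refine ⟨hsub, ?_⟩
        intro hsub'
        have huQ : u ∈ CompIn G (Ncl G {u, v})ᶜ q := hsub' huC
        exact huQ.end_mem (Or.inl (Or.inl rfl))
      obtain ⟨u₁, v₁, h1, h2, hav⟩ := ih (CompIn G (Ncl G {u, v})ᶜ q).ncard
        (lt_of_lt_of_le hlt hcard) {u, v} q hconn' a b haQ hbQ hab le_rfl
      exact ⟨u₁, v₁, hsub h1, hsub h2, hav⟩
    · -- locally minimal case
      have hlocal : ∀ u v q : V, u ∈ C → v ∈ C → G.Adj u v → q ∈ (Ncl G {u, v})ᶜ →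
          CompIn G (Ncl G {u, v})ᶜ q ⊆ C →
          ∀ a b : V, a ∈ CompIn G (Ncl G {u, v})ᶜ q → b ∈ CompIn G (Ncl G {u, v})ᶜ q →
            ¬ G.Adj a b := by
        intro u v q h1 h2 h3 h4 h5 a b h6 h7 h8
        exact hrec ⟨u, v, q, h1, h2, h3, h4, h5, a, b, h6, h7, h8⟩
      -- choose a mu-minimal edge of C
      set Sp : Set ℕ := {m | ∃ u v : V, u ∈ C ∧ v ∈ C ∧ G.Adj u v ∧ mu G u v = m} with hSp
      have hSpne : Sp.Nonempty := ⟨mu G z z', z, z', hz, hz', hzz', rfl⟩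
      obtain ⟨z₀, z₀', hz₀, hz₀', hadj₀, hmu₀⟩ := Nat.sInf_mem hSpne
      have hmin : ∀ u v : V, u ∈ C → v ∈ C → G.Adj u v → mu G z₀ z₀' ≤ mu G u v := by
        intro u v h1 h2 h3
        rw [hmu₀]
        exact Nat.sInf_le ⟨u, v, h1, h2, h3, rfl⟩
      refine ⟨z₀, z₀', hz₀, hz₀', hadj₀, ?_⟩
      intro x y hxu hvy hxv hyu hxy hnxv hnuy hnxy
      -- notation
      set W : Set V := Ncl G {z₀, z₀'} with hW
      set T' : Set V := Wᶜ with hT'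
      have hST' : ∀ s ∈ S, s ∈ T' := by
        intro s hs
        rw [hT', Set.mem_compl_iff]
        intro hsW
        rcases mem_Ncl_pair.mp hsW with rfl | rfl | h | h
        · exact hz₀.end_mem (Or.inl hs)
        · exact hz₀'.end_mem (Or.inl hs)
        · exact hz₀.end_mem (Or.inr ⟨s, hs, h.symm⟩)
        · exact hz₀'.end_mem (Or.inr ⟨s, hs, h.symm⟩)
      have hTsub : ∀ v ∈ ({x, y} ∪ T' : Set V), v = x ∨ v = y ∨
          (¬ G.Adj z₀ v ∧ ¬ G.Adj z₀' v ∧ v ≠ z₀ ∧ v ≠ z₀') := by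
        rintro v (hv | hv)
        · rcases hv with rfl | rfl
          · exact Or.inl rfl
          · exact Or.inr (Or.inl rfl)
        · right; right
          rw [hT', Set.mem_compl_iff, hW] at hv
          rw [mem_Ncl_pair] at hv
          push_neg at hv
          exact ⟨hv.2.2.1, hv.2.2.2, hv.1, hv.2.1⟩
      have hclose : ReachIn G ({x, y} ∪ T') x y →
          ∃ c : G.Walk z₀ z₀, IsInducedCycle G c ∧
            s(x, z₀) ∈ c.edges ∧ s(z₀, z₀') ∈ c.edges ∧ s(z₀', y) ∈ c.edges := by
        intro hr
        exact exists_closing_cycle hxu hadj₀ hvy hnxv hnuy hnxy hxv hyu hTsub hr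
      have hside1 := side_attach S c₀ hz₀ hz₀' hadj₀ hlocal hmin hxu hvy hxv hyu hxy
        hnxv hnuy hnxy
      rcases hside1 with hconn | hattx
      · exact hclose hconn
      · have hmin' : ∀ u v : V, u ∈ C → v ∈ C → G.Adj u v → mu G z₀' z₀ ≤ mu G u v := by
          intro u v h1 h2 h3
          rw [mu_comm]
          exact hmin u v h1 h2 h3
        have hside2 := side_attach S c₀ hz₀' hz₀ hadj₀.symm hlocal hmin'
          (hvy.symm) (hxu.symm) hyu hxv (Ne.symm hxy)
          (fun h => hnuy h.symm) (fun h => hnxv h.symm) (fun h => hnxy h.symm)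
        rw [Ncl_pair_comm (a := z₀') (b := z₀)] at hside2
        rcases hside2 with hconn | hatty
        · apply hclose
          have : ({y, x} : Set V) = {x, y} := Set.pair_comm y x
          rw [this] at hconn
          exact hconn.symm
        · -- both sides attached : connect through S
          obtain ⟨w₁, hxw₁, hw₁T', s₁, hs₁, hr₁⟩ := hattx
          obtain ⟨w₂, hyw₂, hw₂T', s₂, hs₂, hr₂⟩ := hatty
          apply hclose
          have hsubT₀ : T' ⊆ ({x, y} ∪ T' : Set V) := Set.subset_union_right
          have hxT₀ : x ∈ ({x, y} ∪ T' : Set V) := Or.inl (Or.inl rfl)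
          have hyT₀ : y ∈ ({x, y} ∪ T' : Set V) := Or.inl (Or.inr rfl)
          have hSsub : ∀ s ∈ S, s ∈ ({x, y} ∪ T' : Set V) := fun s hs => hsubT₀ (hST' s hs)
          refine ((ReachIn.step hxT₀ (hsubT₀ hw₁T') hxw₁).trans
            ((hr₁.mono hsubT₀).trans ?_)).trans
            (((hr₂.mono hsubT₀).symm).trans (ReachIn.step (hsubT₀ hw₂T') hyT₀ hyw₂.symm))
          have := hSconn s₁ hs₁ s₂ hs₂
          exact this.mono (fun v hv => hSsub v hv)

/-- In a graph where no edge avoids any closed vertex neighbourhood, every edge is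
(vacuously) avoidable. -/
lemma vacuous_avoidable
    (hcase : ¬ ∃ s a b : V, a ∈ (Ncl G {s})ᶜ ∧ b ∈ (Ncl G {s})ᶜ ∧ G.Adj a b)
    {u v : V} (huv : G.Adj u v) : AvoidableEdge G u v := by
  push_neg at hcase
  refine ⟨huv, ?_⟩
  intro x y hxu hvy hxv hyu hxy hnxv hnuy hnxy
  exfalso
  refine hcase y x u ?_ ?_ hxu
  · rw [Set.mem_compl_iff, mem_Ncl_single]
    push_neg
    exact ⟨hxy, fun h => hnxy h.symm⟩
  · rw [Set.mem_compl_iff, mem_Ncl_single]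
    push_neg
    exact ⟨fun h => hyu h.symm, fun h => hnuy h.symm⟩

/-- Part 1: every graph with an edge has an avoidable edge. -/
lemma part1 : (∃ u v : V, G.Adj u v) → ∃ u v : V, AvoidableEdge G u v := by
  rintro ⟨u, v, huv⟩
  by_cases hcase : ∃ s a b : V, a ∈ (Ncl G {s})ᶜ ∧ b ∈ (Ncl G {s})ᶜ ∧ G.Adj a b
  · obtain ⟨s, a, b, ha, hb, hab⟩ := hcase
    have hconn : ∀ s' ∈ ({s} : Set V), ∀ t ∈ ({s} : Set V), ReachIn G ({s} : Set V) s' t := by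
      rintro s' rfl t rfl
      exact ReachIn.refl rfl
    obtain ⟨u', v', _, _, hav⟩ := avoidable_in_comp ({s} : Set V) a hconn
      (compIn_self ha) (compIn_step (compIn_self ha) hab hb) hab
    exact ⟨u', v', hav⟩
  · exact ⟨u, v, vacuous_avoidable hcase huv⟩

/-- A stronger form of part 1 recording where the avoidable edge lives. -/
lemma part1_located {s a b : V} (ha : a ∈ (Ncl G {s})ᶜ) (hb : b ∈ (Ncl G {s})ᶜ)
    (hab : G.Adj a b) :
    ∃ u v : V, u ∈ (Ncl G {s})ᶜ ∧ v ∈ (Ncl G {s})ᶜ ∧ AvoidableEdge G u v := by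
  have hconn : ∀ s' ∈ ({s} : Set V), ∀ t ∈ ({s} : Set V), ReachIn G ({s} : Set V) s' t := by
    rintro s' rfl t rfl
    exact ReachIn.refl rfl
  obtain ⟨u', v', h1, h2, hav⟩ := avoidable_in_comp ({s} : Set V) a hconn
    (compIn_self ha) (compIn_step (compIn_self ha) hab hb) hab
  exact ⟨u', v', compIn_subset h1, compIn_subset h2, hav⟩

lemma sym2_ne_of_not_mem {a b z z' : V} (haz : a ≠ z) (haz' : a ≠ z') :
    s(a, b) ≠ s(z, z') := by
  intro h
  rw [Sym2.eq_iff] at h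
  rcases h with ⟨h1, _⟩ | ⟨h1, _⟩
  · exact haz h1
  · exact haz' h1

/-- Transfer an avoidable edge of an induced subgraph back to the ambient graph,
provided all ambient `P₄`s at this edge stay inside the subgraph. -/
lemma lift_avoidable {s : Set V} {u' v' : s}
    (hav : AvoidableEdge (G.induce s) u' v')
    (hP4 : ∀ x y : V, G.Adj x ↑u' → G.Adj ↑v' y → x ≠ ↑v' → y ≠ ↑u' → x ≠ y →
      ¬ G.Adj x ↑v' → ¬ G.Adj ↑u' y → ¬ G.Adj x y → x ∈ s ∧ y ∈ s) :
    AvoidableEdge G (↑u' : V) (↑v' : V) := by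
  classical
  obtain ⟨hadj', hmain⟩ := hav
  have hadj : G.Adj ↑u' ↑v' := by
    rwa [SimpleGraph.comap_adj] at hadj'
  refine ⟨hadj, ?_⟩
  intro x y hxu hvy hxv hyu hxy hnxv hnuy hnxy
  obtain ⟨hxs, hys⟩ := hP4 x y hxu hvy hxv hyu hxy hnxv hnuy hnxy
  set x' : s := ⟨x, hxs⟩ with hx'
  set y' : s := ⟨y, hys⟩ with hy'
  have hxu' : (G.induce s).Adj x' u' := by rwa [SimpleGraph.comap_adj]
  have hvy' : (G.induce s).Adj v' y' := by rwa [SimpleGraph.comap_adj]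
  obtain ⟨c', hind', h1, h2, h3⟩ := hmain x' y' hxu' hvy'
    (fun h => hxv (congrArg Subtype.val h)) (fun h => hyu (congrArg Subtype.val h))
    (fun h => hxy (congrArg Subtype.val h))
    (fun h => hnxv (by rwa [SimpleGraph.comap_adj] at h))
    (fun h => hnuy (by rwa [SimpleGraph.comap_adj] at h))
    (fun h => hnxy (by rwa [SimpleGraph.comap_adj] at h))
  let f : G.induce s →g G := ⟨Subtype.val, fun {a b} h => by rwa [SimpleGraph.comap_adj] at h⟩
  have hinj : Function.Injective ⇑f := Subtype.val_injective
  refine ⟨c'.map f, ⟨?_, ?_⟩, ?_, ?_, ?_⟩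
  · exact (SimpleGraph.Walk.map_isCycle_iff_of_injective hinj).mpr hind'.1
  · intro a ha b hb hab
    rw [SimpleGraph.Walk.support_map] at ha hb
    obtain ⟨a', ha', rfl⟩ := List.mem_map.mp ha
    obtain ⟨b', hb', rfl⟩ := List.mem_map.mp hb
    have : (G.induce s).Adj a' b' := by rwa [SimpleGraph.comap_adj]
    have hmem := hind'.2 a' ha' b' hb' this
    rw [SimpleGraph.Walk.edges_map]
    exact List.mem_map.mpr ⟨s(a', b'), hmem, Sym2.map_pair_eq f a' b'⟩
  · rw [SimpleGraph.Walk.edges_map]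
    exact List.mem_map.mpr ⟨s(x', u'), h1, Sym2.map_pair_eq f x' u'⟩
  · rw [SimpleGraph.Walk.edges_map]
    exact List.mem_map.mpr ⟨s(u', v'), h2, Sym2.map_pair_eq f u' v'⟩
  · rw [SimpleGraph.Walk.edges_map]
    exact List.mem_map.mpr ⟨s(v', y'), h3, Sym2.map_pair_eq f v' y'⟩

/-- Part 2: a graph with two distinct edges has two distinct avoidable edges. -/
lemma part2 {u v x y : V} (huv : G.Adj u v) (hxy : G.Adj x y) (hne : s(u, v) ≠ s(x, y)) :
    ∃ a b c d : V, s(a, b) ≠ s(c, d) ∧ AvoidableEdge G a b ∧ AvoidableEdge G c d := by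
  classical
  by_cases hcase : ∃ s a b : V, a ∈ (Ncl G {s})ᶜ ∧ b ∈ (Ncl G {s})ᶜ ∧ G.Adj a b
  swap
  · exact ⟨u, v, x, y, hne, vacuous_avoidable hcase huv, vacuous_avoidable hcase hxy⟩
  obtain ⟨s₀, a₀, b₀, ha₀, hb₀, hab₀⟩ := hcase
  obtain ⟨z, z', _, _, hav₁⟩ := part1_located ha₀ hb₀ hab₀
  have hzz' : G.Adj z z' := hav₁.1
  by_cases h1 : ∃ a b : V, a ∈ (Ncl G {z})ᶜ ∧ b ∈ (Ncl G {z})ᶜ ∧ G.Adj a b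
  · obtain ⟨a, b, ha, hb, hab⟩ := h1
    obtain ⟨u₂, v₂, hu₂, hv₂, hav₂⟩ := part1_located ha hb hab
    have hu₂z : u₂ ≠ z := by
      intro h; exact hu₂ (mem_Ncl_single.mpr (Or.inl h))
    have hu₂z' : u₂ ≠ z' := by
      intro h
      exact hu₂ (mem_Ncl_single.mpr (Or.inr (h ▸ hzz')))
    exact ⟨u₂, v₂, z, z', sym2_ne_of_not_mem hu₂z hu₂z', hav₂, hav₁⟩
  by_cases h2 : ∃ a b : V, a ∈ (Ncl G {z'})ᶜ ∧ b ∈ (Ncl G {z'})ᶜ ∧ G.Adj a b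
  · obtain ⟨a, b, ha, hb, hab⟩ := h2
    obtain ⟨u₂, v₂, hu₂, hv₂, hav₂⟩ := part1_located ha hb hab
    have hu₂z' : u₂ ≠ z' := by
      intro h; exact hu₂ (mem_Ncl_single.mpr (Or.inl h))
    have hu₂z : u₂ ≠ z := by
      intro h
      exact hu₂ (mem_Ncl_single.mpr (Or.inr (h ▸ hzz'.symm)))
    exact ⟨u₂, v₂, z, z', sym2_ne_of_not_mem hu₂z hu₂z', hav₂, hav₁⟩
  -- residual case : G − N[z] and G − N[z'] contain no edges
  push_neg at h1 h2
  have hz_res : ∀ a b : V, a ≠ z → ¬ G.Adj z a → b ≠ z → ¬ G.Adj z b → ¬ G.Adj a b := by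
    intro a b h1' h2' h3' h4'
    apply h1 a b
    · rw [Set.mem_compl_iff, mem_Ncl_single]; push_neg; exact ⟨h1', h2'⟩
    · rw [Set.mem_compl_iff, mem_Ncl_single]; push_neg; exact ⟨h3', h4'⟩
  have hz'_res : ∀ a b : V, a ≠ z' → ¬ G.Adj z' a → b ≠ z' → ¬ G.Adj z' b → ¬ G.Adj a b := by
    intro a b h1' h2' h3' h4'
    apply h2 a b
    · rw [Set.mem_compl_iff, mem_Ncl_single]; push_neg; exact ⟨h1', h2'⟩
    · rw [Set.mem_compl_iff, mem_Ncl_single]; push_neg; exact ⟨h3', h4'⟩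
  by_cases h3 : ∃ p q : V, p ≠ z ∧ p ≠ z' ∧ q ≠ z ∧ q ≠ z' ∧ G.Adj p q
  · -- there is an edge away from {z, z'} : pass to the induced subgraph
    obtain ⟨p, q, hpz, hpz', hqz, hqz', hpq⟩ := h3
    set sres : Set V := {v : V | v ≠ z ∧ v ≠ z'} with hsres
    have hedge' : ∃ a b : (sres : Set V), (G.induce sres).Adj a b :=
      ⟨⟨p, hpz, hpz'⟩, ⟨q, hqz, hqz'⟩, by rwa [SimpleGraph.comap_adj]⟩
    obtain ⟨u', v', hav'⟩ := part1 hedge'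
    have hP4 : ∀ x₃ y₃ : V, G.Adj x₃ ↑u' → G.Adj ↑v' y₃ → x₃ ≠ ↑v' → y₃ ≠ ↑u' → x₃ ≠ y₃ →
        ¬ G.Adj x₃ ↑v' → ¬ G.Adj ↑u' y₃ → ¬ G.Adj x₃ y₃ → x₃ ∈ sres ∧ y₃ ∈ sres := by
      intro x₃ y₃ hxu hvy hxv hyu hxy' hnxv hnuy hnxy
      refine ⟨⟨?_, ?_⟩, ⟨?_, ?_⟩⟩
      · intro hx3
        exact hz_res (↑v') y₃ v'.2.1 (by rw [← hx3]; exact hnxv)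
          (fun h => hxy' (by rw [hx3, h])) (by rw [← hx3]; exact hnxy) hvy
      · intro hx3
        exact hz'_res (↑v') y₃ v'.2.2 (by rw [← hx3]; exact hnxv)
          (fun h => hxy' (by rw [hx3, h])) (by rw [← hx3]; exact hnxy) hvy
      · intro hy3
        exact hz_res (↑u') x₃ u'.2.1
          (fun h => hnuy (by rw [hy3]; exact h.symm))
          (fun h => hxy' (h.trans hy3.symm))
          (fun h => hnxy (by rw [hy3]; exact h.symm)) hxu.symm
      · intro hy3
        exact hz'_res (↑u') x₃ u'.2.2
          (fun h => hnuy (by rw [hy3]; exact h.symm))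
          (fun h => hxy' (h.trans hy3.symm))
          (fun h => hnxy (by rw [hy3]; exact h.symm)) hxu.symm
    have hav₂ := lift_avoidable hav' hP4
    refine ⟨↑u', ↑v', z, z', sym2_ne_of_not_mem u'.2.1 u'.2.2, hav₂, hav₁⟩
  · -- all edges touch {z, z'}
    push_neg at h3
    -- one of the two given edges differs from zz'
    have hone : ∃ α β : V, G.Adj α β ∧ s(α, β) ≠ s(z, z') := by
      by_cases h : s(u, v) = s(z, z')
      · exact ⟨x, y, hxy, fun h' => hne (h.trans h'.symm)⟩
      · exact ⟨u, v, huv, h⟩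
    obtain ⟨α, β, hαβ, hαβne⟩ := hone
    have havα : AvoidableEdge G α β := by
      refine ⟨hαβ, ?_⟩
      intro x₃ y₃ hxu hvy hxv hyu hxy' hnxv hnuy hnxy
      exfalso
      by_cases hαz : α = z
      · refine absurd hvy (h3 β y₃ ?_ ?_ ?_ ?_)
        · exact fun h => hαβ.ne (hαz.trans h.symm)
        · exact fun h => hαβne (by rw [hαz, h])
        · exact fun h => hyu (h.trans hαz.symm)
        · exact fun h => hnuy (by rw [hαz, h]; exact hzz')
      by_cases hαz' : α = z'
      · refine absurd hvy (h3 β y₃ ?_ ?_ ?_ ?_)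
        · exact fun h => hαβne (by rw [hαz', h, Sym2.eq_swap])
        · exact fun h => hαβ.ne (hαz'.trans h.symm)
        · exact fun h => hnuy (by rw [hαz', h]; exact hzz'.symm)
        · exact fun h => hyu (h.trans hαz'.symm)
      by_cases hβz : β = z
      · refine absurd hxu (h3 x₃ α ?_ ?_ hαz hαz')
        · exact fun h => hxv (h.trans hβz.symm)
        · exact fun h => hnxv (by rw [h, hβz]; exact hzz'.symm)
      by_cases hβz' : β = z'
      · refine absurd hxu (h3 x₃ α ?_ ?_ hαz hαz')
        · exact fun h => hnxv (by rw [h, hβz']; exact hzz')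
        · exact fun h => hxv (h.trans hβz'.symm)
      · exact absurd hαβ (h3 α β hαz hαz' hβz hβz')
    exact ⟨α, β, z, z', hαβne, havα, hav₁⟩

end SideAttach

end AvoidHelp

/-- Every finite graph with at least one edge has an avoidable edge; every finite graph
with at least two edges has two distinct avoidable edges. -/
theorem stmt_17 {V : Type*} [Fintype V] (G : SimpleGraph V) :
    ((∃ u v : V, G.Adj u v) → ∃ u v : V, AvoidableEdge G u v) ∧
    ((∃ u v x y : V, G.Adj u v ∧ G.Adj x y ∧ s(u, v) ≠ s(x, y)) →
      ∃ u v x y : V, s(u, v) ≠ s(x, y) ∧ AvoidableEdge G u v ∧ AvoidableEdge G x y) := by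
  classical
  constructor
  · exact AvoidHelp.part1
  · rintro ⟨u, v, x, y, huv, hxy, hne⟩
    exact AvoidHelp.part2 huv hxy hne
end

section
/- In a vertex-transitive graph, every induced path on three vertices closes to an induced cycle. -/
open SimpleGraph

/-! ### Auxiliary development -/

section Aux

variable {V : Type*}

/-- Delete a set of vertices from a graph (make them isolated). -/
def delG (G : SimpleGraph V) (K : Set V) : SimpleGraph V where
  Adj a b := G.Adj a b ∧ a ∉ K ∧ b ∉ K
  symm := ⟨fun _ _ h => ⟨h.1.symm, h.2.2, h.2.1⟩⟩
  loopless := ⟨fun a h => G.loopless.irrefl a h.1⟩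

lemma delG_le (G : SimpleGraph V) (K : Set V) : delG G K ≤ G := fun _ _ h => h.1

lemma delG_support_not_mem {G : SimpleGraph V} {K : Set V} {a b : V}
    (p : (delG G K).Walk a b) {w : V} (hw : w ∈ p.support) : w = a ∨ w ∉ K := by
  induction p with
  | nil => rw [Walk.support_nil, List.mem_singleton] at hw; exact Or.inl hw
  | cons h q ih =>
    rw [Walk.support_cons, List.mem_cons] at hw
    rcases hw with rfl | hw
    · exact Or.inl rfl
    · rcases ih hw with rfl | h'
      · exact Or.inr h.2.2
      · exact Or.inr h'

lemma delG_reachable_not_mem {G : SimpleGraph V} {K : Set V} {a b : V}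
    (h : (delG G K).Reachable a b) (ha : a ∉ K) : b ∉ K := by
  obtain ⟨p⟩ := h
  rcases delG_support_not_mem p (Walk.end_mem_support p) with rfl | h'
  exacts [ha, h']

lemma walk_end_mem {H : SimpleGraph V} {W : Finset V}
    (hedge : ∀ a b, H.Adj a b → a ∈ W) {a b : V} (p : H.Walk a b) (ha : a ∈ W) : b ∈ W := by
  induction p with
  | nil => exact ha
  | cons h _ ih => exact ih (hedge _ _ h.symm)

lemma length_one_edge {G : SimpleGraph V} {a b : V} (w : G.Walk a b) (h : w.length = 1) :
    s(a, b) ∈ w.edges := by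
  cases w with
  | nil => simp at h
  | cons hadj w' =>
    rw [Walk.length_cons, Nat.add_eq_right] at h
    have := Walk.eq_of_length_eq_zero h
    subst this
    simp

lemma mem_dropUntil_or [DecidableEq V] {G : SimpleGraph V} {x y : V} (p : G.Walk x y) (a b : V)
    (ha : a ∈ p.support) (hb : b ∈ p.support) :
    b ∈ (p.dropUntil a ha).support ∨ a ∈ (p.dropUntil b hb).support := by
  induction p with
  | nil =>
    have ha' := Walk.mem_support_nil_iff.mp ha
    subst ha'
    left
    exact hb
  | @cons u c w hadj q ih =>
    by_cases hua : u = a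
    · subst hua
      left
      rw [Walk.dropUntil]; simp only [dif_pos rfl]
      exact hb
    · by_cases hub : u = b
      · subst hub
        right
        rw [Walk.dropUntil]; simp only [dif_pos rfl]
        exact ha
      · have ha' : a ∈ q.support := by
          rcases List.mem_cons.mp (Walk.support_cons hadj q ▸ ha) with h | h
          · exact absurd h.symm hua
          · exact h
        have hb' : b ∈ q.support := by
          rcases List.mem_cons.mp (Walk.support_cons hadj q ▸ hb) with h | h
          · exact absurd h.symm hub
          · exact h
        have e1 : (Walk.cons hadj q).dropUntil a ha = q.dropUntil a ha' := by
          rw [Walk.dropUntil]; simp [dif_neg hua]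
        have e2 : (Walk.cons hadj q).dropUntil b hb = q.dropUntil b hb' := by
          rw [Walk.dropUntil]; simp [dif_neg hub]
        rw [e1, e2]
        exact ih ha' hb'

/-- Any two connected vertices are joined by an induced (chordless) path. -/
lemma exists_chordfree_path {G : SimpleGraph V} {x y : V} (h : G.Reachable x y) :
    ∃ p : G.Walk x y, p.IsPath ∧
      ∀ a ∈ p.support, ∀ b ∈ p.support, G.Adj a b → s(a, b) ∈ p.edges := by
  classical
  obtain ⟨q₀⟩ := h
  have hex : ∃ m, ∃ q : G.Walk x y, q.length = m := ⟨q₀.length, q₀, rfl⟩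
  obtain ⟨q₁, hq₁⟩ := Nat.find_spec hex
  have hmin : ∀ q : G.Walk x y, Nat.find hex ≤ q.length :=
    fun q => Nat.find_le ⟨q, rfl⟩
  set p := q₁.bypass with hp
  have hple : p.length ≤ Nat.find hex := hq₁ ▸ q₁.length_bypass_le
  have hminp : ∀ q : G.Walk x y, p.length ≤ q.length := fun q => hple.trans (hmin q)
  refine ⟨p, q₁.bypass_isPath, ?_⟩
  have key : ∀ a b (ha : a ∈ p.support) (_ : G.Adj a b)
      (hb : b ∈ (p.dropUntil a ha).support), s(a, b) ∈ p.edges := by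
    intro a b ha hab hb
    by_contra hne
    set d := p.dropUntil a ha with hd
    have hdlen : (d.takeUntil b hb).length ≠ 0 := by
      intro h0
      exact hab.ne (Walk.eq_of_length_eq_zero h0)
    have hdlen1 : (d.takeUntil b hb).length ≠ 1 := by
      intro h1
      exact hne (Walk.edges_dropUntil_subset p ha
        (Walk.edges_takeUntil_subset d hb (length_one_edge _ h1)))
    let r : G.Walk x y := (p.takeUntil a ha).append (Walk.cons hab (d.dropUntil b hb))
    have hrlen : r.length = (p.takeUntil a ha).length + (1 + (d.dropUntil b hb).length) := by
      simp [r, Walk.length_append, Walk.length_cons]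
      omega
    have hplen : p.length = (p.takeUntil a ha).length
        + ((d.takeUntil b hb).length + (d.dropUntil b hb).length) := by
      conv_lhs => rw [← Walk.take_spec p ha]
      rw [Walk.length_append]
      congr 1
      conv_lhs => rw [show p.dropUntil a ha = d from rfl, ← Walk.take_spec d hb]
      rw [Walk.length_append]
    have := hminp r
    omega
  intro a ha b hb hab
  rcases mem_dropUntil_or p a b ha hb with h1 | h2
  · exact key a b ha hab h1
  · rw [Sym2.eq_swap]
    exact key b a hb hab.symm h2

/-- Avoidability, phrased via walks avoiding the closed neighbourhood. -/
def Avble (G : SimpleGraph V) (v : V) : Prop :=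
  ∀ x y : V, G.Adj v x → G.Adj v y → x ≠ y → ¬ G.Adj x y →
    ∃ p : G.Walk x y, ∀ z ∈ p.support, (z = v ∨ G.Adj v z) → z = x ∨ z = y

lemma Avble.avoidable {G : SimpleGraph V} {v : V} (h : Avble G v) : Avoidable G v := by
  classical
  intro x y hvx hvy hxy hnxy
  obtain ⟨p₀, hp₀⟩ := h x y hvx hvy hxy hnxy
  set K : Set V := {z | (z = v ∨ G.Adj v z) ∧ z ≠ x ∧ z ≠ y} with hK
  have hxK : x ∉ K := fun h => h.2.1 rfl
  have hyK : y ∉ K := fun h => h.2.2 rfl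
  have hsupnK : ∀ w ∈ p₀.support, w ∉ K := by
    intro w hw hwK
    rcases hp₀ w hw hwK.1 with rfl | rfl
    exacts [hwK.2.1 rfl, hwK.2.2 rfl]
  have hedge : ∀ e ∈ p₀.edges, e ∈ (delG G K).edgeSet := by
    intro e he
    induction e using Sym2.ind with
    | _ a b =>
      exact ⟨p₀.adj_of_mem_edges he,
        hsupnK a (p₀.fst_mem_support_of_mem_edges he),
        hsupnK b (p₀.snd_mem_support_of_mem_edges he)⟩
  obtain ⟨p, hpath, hchord⟩ := exists_chordfree_path ⟨p₀.transfer _ hedge⟩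
  have hpsupK : ∀ w ∈ p.support, w ∉ K := by
    intro w hw
    rcases delG_support_not_mem p hw with rfl | h'
    exacts [hxK, h']
  have hvsup : v ∉ p.support := by
    intro hv
    exact hpsupK v hv ⟨Or.inl rfl, hvx.ne, hvy.ne⟩
  have htr : ∀ e ∈ p.edges, e ∈ G.edgeSet :=
    fun e he => edgeSet_mono (delG_le G K) (p.edges_subset_edgeSet he)
  set pt : G.Walk x y := p.transfer G htr with hpt
  have hptsup : pt.support = p.support := Walk.support_transfer _ _
  have hptedges : pt.edges = p.edges := Walk.edges_transfer _ _
  have hyv : G.Adj y v := hvy.symm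
  set c : G.Walk v v := Walk.cons hvx (pt.concat hyv) with hc
  have hsupc : c.support = v :: (p.support ++ [v]) := by
    rw [hc, Walk.support_cons, Walk.support_concat, hptsup]
  have hedgec : c.edges = s(v, x) :: (p.edges ++ [s(y, v)]) := by
    rw [hc, Walk.edges_cons, Walk.edges_concat, hptedges, List.concat_eq_append]
  have hmemc : ∀ a, a ∈ c.support ↔ (a = v ∨ a ∈ p.support) := by
    intro a
    rw [hsupc]
    simp only [List.mem_cons, List.mem_append, List.mem_singleton]
    tauto
  have hvx' : s(v, x) ∉ p.edges := fun h => hvsup (p.fst_mem_support_of_mem_edges h)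
  have hyv' : s(y, v) ∉ p.edges := fun h => hvsup (p.snd_mem_support_of_mem_edges h)
  have hne2 : s(v, x) ≠ s(y, v) := by
    simp only [ne_eq, Sym2.eq_iff]
    push_neg
    refine ⟨fun h => absurd rfl (h ▸ hvy.ne), fun _ => hxy⟩
  refine ⟨c, ⟨?_, ?_⟩, ?_, ?_⟩
  · -- `c` is a cycle
    rw [Walk.isCycle_def]
    refine ⟨?_, by simp [hc], ?_⟩
    · rw [Walk.isTrail_def, hedgec, List.nodup_cons, List.mem_append, List.nodup_append]
      refine ⟨?_, hpath.isTrail.edges_nodup, List.nodup_singleton _, ?_⟩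
      · rintro (h | h)
        · exact hvx' h
        · exact hne2 (List.mem_singleton.mp h)
      · intro e he _ h' hef
        rw [List.mem_singleton] at h'
        subst h'
        exact hyv' (hef ▸ he)
    · rw [hsupc]
      simp only [List.tail_cons]
      rw [List.nodup_append]
      exact ⟨hpath.support_nodup, List.nodup_singleton _,
        fun a ha b hb => by simp only [List.mem_singleton] at hb; rintro rfl; subst hb; exact hvsup ha⟩
  · -- `c` is induced
    intro a ha b hb hab
    rcases (hmemc a).mp ha with rfl | hap
    · rcases (hmemc b).mp hb with rfl | hbp
      · exact absurd hab (G.loopless.irrefl _)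
      · have hbK := hpsupK b hbp
        have : b = x ∨ b = y := by
          by_contra hcon
          push_neg at hcon
          exact hbK ⟨Or.inr hab, hcon.1, hcon.2⟩
        rcases this with rfl | rfl
        · rw [hedgec]; exact List.mem_cons_self
        · rw [hedgec, Sym2.eq_swap]
          simp
    · rcases (hmemc b).mp hb with rfl | hbp
      · have haK := hpsupK a hap
        have : a = x ∨ a = y := by
          by_contra hcon
          push_neg at hcon
          exact haK ⟨Or.inr hab.symm, hcon.1, hcon.2⟩
        rw [hedgec, Sym2.eq_swap]
        rcases this with rfl | rfl
        · rw [Sym2.eq_swap]; exact List.mem_cons_self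
        · simp [Sym2.eq_swap]
      · have : s(a, b) ∈ p.edges :=
          hchord a hap b hbp ⟨hab, hpsupK a hap, hpsupK b hbp⟩
        rw [hedgec]
        simp only [List.mem_cons, List.mem_append]
        tauto
  · rw [hedgec, Sym2.eq_swap]
    exact List.mem_cons_self
  · rw [hedgec, show s(v,y) = s(y,v) from Sym2.eq_swap]
    simp

/-- Every finite graph with a clique `S` strictly inside its "active" vertex set `W`
has an avoidable vertex outside `S`. -/
theorem keyA :
    ∀ (n : ℕ) (H : SimpleGraph V) (W S : Finset V),
      (∀ a b : V, H.Adj a b → a ∈ W) → W.card ≤ n → S ⊆ W →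
      (∀ a ∈ S, ∀ b ∈ S, a ≠ b → H.Adj a b) → (∃ w ∈ W, w ∉ S) →
      ∃ v ∈ W, v ∉ S ∧ Avble H v := by
  intro n
  induction n with
  | zero =>
    rintro H W S _ hcard _ _ ⟨w, hw, -⟩
    rw [Nat.le_zero, Finset.card_eq_zero] at hcard
    subst hcard
    exact absurd hw (Finset.notMem_empty w)
  | succ n ih =>
    rintro H W S hedge hcard hSW hclique ⟨w₁, hw₁W, hw₁S⟩
    classical
    by_cases hA : ∃ u ∈ W, (∀ s ∈ S, s = u ∨ H.Adj u s) ∧ ∃ w₀ ∈ W, w₀ ≠ u ∧ ¬ H.Adj u w₀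
    -- ============ CASE A ============
    · obtain ⟨u, huW, huS, w₀, hw₀W, hw₀u, hw₀adj⟩ := hA
      set K : Set V := {z | z = u ∨ H.Adj u z} with hKdef
      set Hd := delG H K with hHd
      have hedgeD : ∀ a b, Hd.Adj a b → a ∈ W := fun a b h => hedge a b h.1
      have hw₀K : w₀ ∉ K := by rintro (rfl | h); exacts [hw₀u rfl, hw₀adj h]
      set CF : Finset V := W.filter (fun z => Hd.Reachable w₀ z) with hCF
      have memCF : ∀ z, z ∈ CF ↔ Hd.Reachable w₀ z := by
        intro z
        constructor
        · intro hz; exact (Finset.mem_filter.mp hz).2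
        · intro hz
          obtain ⟨p⟩ := hz
          exact Finset.mem_filter.mpr ⟨walk_end_mem hedgeD p hw₀W, ⟨p⟩⟩
      have CF_not_K : ∀ z ∈ CF, z ∉ K := fun z hz =>
        delG_reachable_not_mem ((memCF z).mp hz) hw₀K
      have huCF : u ∉ CF := fun h => CF_not_K u h (Or.inl rfl)
      set NCF : Finset V := W.filter (fun a => a ∉ CF ∧ ∃ b ∈ CF, H.Adj a b) with hNCF
      have memNCF : ∀ a, a ∈ NCF ↔ (a ∈ W ∧ a ∉ CF ∧ ∃ b ∈ CF, H.Adj a b) := by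
        intro a
        rw [hNCF, Finset.mem_filter]
      have hNCFadj : ∀ a ∈ NCF, H.Adj u a := by
        intro a ha
        obtain ⟨haW, haCF, b, hbCF, hab⟩ := (memNCF a).mp ha
        have haK : a ∈ K := by
          by_contra haK
          have : Hd.Adj b a := ⟨hab.symm, CF_not_K b hbCF, haK⟩
          exact haCF ((memCF a).mpr (((memCF b).mp hbCF).trans this.reachable))
        rcases haK with rfl | h
        · exact absurd (Or.inr hab) (CF_not_K b hbCF)
        · exact h
      have huNCF : u ∉ NCF := fun h => H.loopless.irrefl u (hNCFadj u h)
      set W' : Finset V := CF ∪ NCF with hW'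
      have hW'W : W' ⊆ W := by
        rw [hW']
        exact Finset.union_subset (Finset.filter_subset _ _) (Finset.filter_subset _ _)
      have huW' : u ∉ W' := by
        rw [hW', Finset.mem_union]
        rintro (h | h); exacts [huCF h, huNCF h]
      have hlt : W'.card < W.card :=
        Finset.card_lt_card ((Finset.ssubset_iff_of_subset hW'W).mpr ⟨u, huW, huW'⟩)
      set H' : SimpleGraph V :=
        { Adj := fun a b => a ≠ b ∧ ((H.Adj a b ∧ a ∈ W' ∧ b ∈ W') ∨ (a ∈ NCF ∧ b ∈ NCF)),
          symm := ⟨by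
            rintro a b ⟨hne, h | h⟩
            · exact ⟨hne.symm, Or.inl ⟨h.1.symm, h.2.2, h.2.1⟩⟩
            · exact ⟨hne.symm, Or.inr ⟨h.2, h.1⟩⟩⟩,
          loopless := ⟨fun a h => h.1 rfl⟩ } with hH'
      have hedge' : ∀ a b : V, H'.Adj a b → a ∈ W' := by
        rintro a b ⟨-, ⟨-, h, -⟩ | ⟨h, -⟩⟩
        · exact h
        · rw [hW', Finset.mem_union]; exact Or.inr h
      have hw₀CF : w₀ ∈ CF := (memCF w₀).mpr (Reachable.refl w₀)
      have hw₀NCF : w₀ ∉ NCF := fun h => ((memNCF w₀).mp h).2.1 hw₀CF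
      obtain ⟨z, hzW', hzNCF, hAvz⟩ :=
        ih H' W' NCF hedge' (by omega) Finset.subset_union_right
          (fun a ha b hb hne => ⟨hne, Or.inr ⟨ha, hb⟩⟩)
          ⟨w₀, Finset.mem_union_left _ hw₀CF, hw₀NCF⟩
      have hzCF : z ∈ CF := by
        rcases Finset.mem_union.mp hzW' with h | h
        · exact h
        · exact absurd h hzNCF
      have hzK : z ∉ K := CF_not_K z hzCF
      refine ⟨z, hW'W hzW', fun hzS => hzK (huS z hzS), ?_⟩
      have hNz : ∀ a, H.Adj z a → a ∈ W' ∧ H'.Adj z a := by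
        intro a hza
        have haW' : a ∈ W' := by
          by_cases haK : a ∈ K
          · rcases haK with rfl | hua
            · exact absurd (Or.inr hza.symm) hzK
            · refine Finset.mem_union_right _ ((memNCF a).mpr
                ⟨hedge a z hza.symm, fun h => CF_not_K a h (Or.inr hua), z, hzCF, hza.symm⟩)
          · have : Hd.Adj z a := ⟨hza, hzK, haK⟩
            exact Finset.mem_union_left _
              ((memCF a).mpr (((memCF z).mp hzCF).trans this.reachable))
        exact ⟨haW', ⟨hza.ne, Or.inl ⟨hza, Finset.mem_union_left _ hzCF, haW'⟩⟩⟩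
      have huNadjz : ¬ (u = z ∨ H.Adj z u) := by
        rintro (rfl | h)
        · exact hzK (Or.inl rfl)
        · exact hzK (Or.inr h.symm)
      intro x y hzx hzy hxy hnxy
      by_cases hboth : x ∈ NCF ∧ y ∈ NCF
      · have hux : H.Adj x u := (hNCFadj x hboth.1).symm
        have huy : H.Adj u y := hNCFadj y hboth.2
        refine ⟨Walk.cons hux (Walk.cons huy Walk.nil), ?_⟩
        intro w hw hcond
        simp only [Walk.support_cons, Walk.support_nil, List.mem_cons,
          List.mem_singleton, List.not_mem_nil, or_false] at hw
        rcases hw with rfl | rfl | rfl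
        · exact Or.inl rfl
        · exact absurd hcond huNadjz
        · exact Or.inr rfl
      · have hnxy' : ¬ H'.Adj x y := by
          rintro ⟨-, ⟨h, -⟩ | h⟩
          exacts [hnxy h, hboth h]
        obtain ⟨p, hp⟩ := hAvz x y (hNz x hzx).2 (hNz y hzy).2 hxy hnxy'
        have conv : ∀ {a b : V} (q : H'.Walk a b),
            ∃ r : H.Walk a b, ∀ w ∈ r.support, w ∈ q.support ∨ w = u := by
          intro a b q
          induction q with
          | nil => exact ⟨Walk.nil, by simp⟩
          | @cons a c b hadj q ihq =>
            obtain ⟨r, hr⟩ := ihq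
            rcases hadj.2 with ⟨hadj', -⟩ | ⟨ha, hc⟩
            · refine ⟨Walk.cons hadj' r, ?_⟩
              intro w hw
              rw [Walk.support_cons, List.mem_cons] at hw
              rcases hw with rfl | hw
              · exact Or.inl (Walk.start_mem_support _)
              · rcases hr w hw with h | h
                · exact Or.inl (by rw [Walk.support_cons, List.mem_cons]; exact Or.inr h)
                · exact Or.inr h
            · refine ⟨Walk.cons (hNCFadj _ ha).symm (Walk.cons (hNCFadj _ hc) r), ?_⟩
              intro w hw
              simp only [Walk.support_cons, List.mem_cons] at hw
              rcases hw with rfl | rfl | hw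
              · exact Or.inl (Walk.start_mem_support _)
              · exact Or.inr rfl
              · rcases hr w hw with h | h
                · exact Or.inl (by rw [Walk.support_cons, List.mem_cons]; exact Or.inr h)
                · exact Or.inr h
        obtain ⟨r, hr⟩ := conv p
        refine ⟨r, ?_⟩
        intro w hw hcond
        rcases hr w hw with hwp | rfl
        · rcases hcond with rfl | hadj
          · exact hp w hwp (Or.inl rfl)
          · exact hp w hwp (Or.inr (hNz w hadj).2)
        · exact absurd hcond huNadjz
    -- ============ CASE B ============
    · push_neg at hA
      rcases S.eq_empty_or_nonempty with rfl | ⟨s₀, hs₀⟩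
      · refine ⟨w₁, hw₁W, hw₁S, ?_⟩
        intro x y hx hy hxy hnxy
        exact absurd (hA x (hedge _ _ hx.symm) (by simp) y (hedge _ _ hy.symm) (Ne.symm hxy)) hnxy
      · have hdom : ∀ u ∈ S, ∀ w ∈ W, w ≠ u → H.Adj u w := by
          intro u hu w hw hne
          refine hA u (hSW hu) (fun s hs => ?_) w hw hne
          by_cases h : s = u
          · exact Or.inl h
          · exact Or.inr (hclique u hu s hs (fun h' => h h'.symm))
        set H₀ := delG H (↑S : Set V) with hH₀
        have hedge₀ : ∀ a b, H₀.Adj a b → a ∈ W \ S := fun a b h =>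
          Finset.mem_sdiff.mpr ⟨hedge a b h.1, by simpa using h.2.1⟩
        have hcard₀ : (W \ S).card ≤ n := by
          have : (W \ S).card < W.card :=
            Finset.card_lt_card ((Finset.ssubset_iff_of_subset (Finset.sdiff_subset)).mpr
              ⟨s₀, hSW hs₀, by simp [hs₀]⟩)
          omega
        obtain ⟨z, hzWS, -, hAv₀⟩ :=
          ih H₀ (W \ S) ∅ hedge₀ hcard₀ (Finset.empty_subset _) (by simp)
            ⟨w₁, Finset.mem_sdiff.mpr ⟨hw₁W, hw₁S⟩, Finset.notMem_empty _⟩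
        obtain ⟨hzW, hzS⟩ := Finset.mem_sdiff.mp hzWS
        refine ⟨z, hzW, hzS, ?_⟩
        intro x y hzx hzy hxy hnxy
        have hxS : x ∉ S := fun hxS => hnxy (hdom x hxS y (hedge _ _ hzy.symm) (Ne.symm hxy))
        have hyS : y ∉ S := fun hyS => hnxy (hdom y hyS x (hedge _ _ hzx.symm) hxy).symm
        have h₀zx : H₀.Adj z x := ⟨hzx, by simpa using hzS, by simpa using hxS⟩
        have h₀zy : H₀.Adj z y := ⟨hzy, by simpa using hzS, by simpa using hyS⟩
        obtain ⟨p, hp⟩ := hAv₀ x y h₀zx h₀zy hxy (fun h => hnxy h.1)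
        refine ⟨p.transfer H
          (fun e he => edgeSet_mono (delG_le _ _) (p.edges_subset_edgeSet he)), ?_⟩
        intro w hw hcond
        rw [Walk.support_transfer] at hw
        have hwS : w ∉ (↑S : Set V) := by
          rcases delG_support_not_mem p hw with rfl | h
          · simpa using hxS
          · exact h
        rcases hcond with rfl | hadj
        · exact hp w hw (Or.inl rfl)
        · exact hp w hw (Or.inr ⟨hadj, by simpa using hzS, hwS⟩)

lemma avble_of_iso {G : SimpleGraph V} {w v : V} (φ : G ≃g G) (hφ : φ w = v)
    (h : Avble G w) : Avble G v := by
  intro x y hvx hvy hxy hnxy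
  have key : ∀ a b : V, G.Adj (φ a) (φ b) ↔ G.Adj a b := fun a b => φ.map_adj_iff
  have hax : φ (φ.symm x) = x := φ.apply_symm_apply x
  have hay : φ (φ.symm y) = y := φ.apply_symm_apply y
  have hwx : G.Adj w (φ.symm x) := by rw [← key, hφ, hax]; exact hvx
  have hwy : G.Adj w (φ.symm y) := by rw [← key, hφ, hay]; exact hvy
  have hxy' : φ.symm x ≠ φ.symm y := fun h' => hxy (by rw [← hax, ← hay, h'])
  have hnxy' : ¬ G.Adj (φ.symm x) (φ.symm y) := fun h' =>
    hnxy (by rw [← hax, ← hay]; exact (key _ _).mpr h')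
  obtain ⟨p, hp⟩ := h _ _ hwx hwy hxy' hnxy'
  refine ⟨(p.map φ.toHom).copy hax hay, ?_⟩
  intro zz hzz hcond
  rw [Walk.support_copy, Walk.support_map] at hzz
  obtain ⟨t, ht, rfl⟩ := List.mem_map.mp hzz
  have hcond' : t = w ∨ G.Adj w t := by
    rcases hcond with h1 | h2
    · exact Or.inl (φ.injective (show φ t = φ w by rw [hφ]; exact h1))
    · exact Or.inr ((key w t).mp (show G.Adj (φ w) (φ t) by rw [hφ]; exact h2))
  rcases hp t ht hcond' with rfl | rfl
  · exact Or.inl hax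
  · exact Or.inr hay

end Aux

/-- In a finite vertex-transitive graph, every induced path on three vertices closes to
an induced cycle. -/
theorem stmt_18 {V : Type*} [Fintype V] (G : SimpleGraph V)
    (hVT : ∀ u v : V, ∃ φ : G ≃g G, φ u = v) :
    ∀ x v y : V, G.Adj v x → G.Adj v y → x ≠ y → ¬ G.Adj x y →
      ∃ c : G.Walk v v, IsInducedCycle G c ∧ s(x, v) ∈ c.edges ∧ s(v, y) ∈ c.edges := by
  intro x v y hvx hvy hxy hnxy
  classical
  obtain ⟨w, -, -, hw⟩ := keyA (Fintype.card V) G Finset.univ ∅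
    (fun a _ _ => Finset.mem_univ a) Finset.card_univ.le (Finset.empty_subset _)
    (by simp) ⟨v, Finset.mem_univ v, Finset.notMem_empty v⟩
  obtain ⟨φ, hφ⟩ := hVT w v
  exact (avble_of_iso φ hφ hw).avoidable x y hvx hvy hxy hnxy
end
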